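/- arXiv:1504.05802 — 11 statements merged into one kernel-verified Lean document; each statement's English description precedes it below -/
import Mathlib

section
/- Let p ≥ 5. For every κ ∈ ℤ_p, the series Σ_{j≥0} c_j^{(κ)} converges in K and Σ_{j≥0} c_j^{(κ)} = 0; that is, T = 1 is a root of the infinite κ-symmetric power L-function L(Sym^{∞,κ} Kl, T) = Σ_j c_j^{(κ)} T^j. -/
section Aux

variable {K : Type*} [Field K] (v : AbsoluteValue K ℝ)

variable (hna : ∀ x y : K, v (x + y) ≤ max (v x) (v y))

include hna

lemma my_nonarch_sum_le {ι : Type*} (s : Finset ι) (f : ι → K) {C : ℝ} (hC : 0 ≤ C)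
    (h : ∀ i ∈ s, v (f i) ≤ C) : v (∑ i ∈ s, f i) ≤ C := by
  classical
  induction s using Finset.cons_induction with
  | empty => simpa using hC
  | cons a s ha ih =>
    rw [Finset.sum_cons]
    exact le_trans (hna _ _)
      (max_le (h a (Finset.mem_cons_self a s))
        (ih (fun i hi => h i (Finset.mem_cons_of_mem hi))))

lemma my_nonarch_sum_lt {ι : Type*} (s : Finset ι) (f : ι → K) {C : ℝ} (hC : 0 < C)
    (h : ∀ i ∈ s, v (f i) < C) : v (∑ i ∈ s, f i) < C := by
  classical
  induction s using Finset.cons_induction with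
  | empty => simpa using hC
  | cons a s ha ih =>
    rw [Finset.sum_cons]
    exact lt_of_le_of_lt (hna _ _)
      (max_lt (h a (Finset.mem_cons_self a s))
        (ih (fun i hi => h i (Finset.mem_cons_of_mem hi))))

lemma my_v_nat_le_one : ∀ n : ℕ, v (n : K) ≤ 1 := by
  intro n
  induction n with
  | zero => simp
  | succ n ih =>
    push_cast
    exact le_trans (hna _ _) (max_le ih (by simp))

lemma my_v_int_le_one : ∀ x : ℤ, v (x : K) ≤ 1 := by
  intro x
  rcases Int.natAbs_eq x with h | h
  · rw [h, Int.cast_natCast]; exact my_v_nat_le_one v hna _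
  · rw [h, Int.cast_neg, Int.cast_natCast, v.map_neg]; exact my_v_nat_le_one v hna _

lemma my_v_sub_le (x y : K) : v (x - y) ≤ max (v x) (v y) := by
  rw [sub_eq_add_neg]
  simpa using hna x (-y)

end Aux


lemma my_legendre {p : ℕ} [Fact p.Prime] (hp5 : 5 ≤ p) (j : ℕ) :
    (Nat.factorial j).factorization p ≤ j / 4 := by
  have hp : p.Prime := Fact.out
  have h1 : (p - 1) * padicValNat p (Nat.factorial j) = j - (p.digits j).sum :=
    sub_one_mul_padicValNat_factorial j
  have h2 : (p - 1) * padicValNat p (Nat.factorial j) ≤ j := by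
    rw [h1]; exact Nat.sub_le _ _
  have h3 : padicValNat p (Nat.factorial j) ≤ j / (p - 1) := by
    rw [Nat.le_div_iff_mul_le (by omega : 0 < p - 1)]
    rw [mul_comm]; exact h2
  have h4 : j / (p - 1) ≤ j / 4 := Nat.div_le_div_left (by omega) (by omega)
  rw [Nat.factorization_def _ hp]
  omega



section Aux2

variable {K : Type*} [Field K] (v : AbsoluteValue K ℝ) {p : ℕ}

variable (hna : ∀ x y : K, v (x + y) ≤ max (v x) (v y))
variable (hp : p.Prime) (hvp : v (p : K) = ((p : ℝ))⁻¹)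


include hna hp hvp

lemma my_v_coprime_one (u : ℕ) (hu : ¬ p ∣ u) : v (u : K) = 1 := by
  have hcop : Nat.Coprime p u := (Nat.Prime.coprime_iff_not_dvd hp).mpr hu
  have hic : IsCoprime (p : ℤ) (u : ℤ) := Nat.isCoprime_iff_coprime.mpr hcop
  obtain ⟨x, y, hxy⟩ := hic
  have h1 : (1 : K) = (x : K) * (p : K) + (y : K) * (u : K) := by
    have := congrArg (fun z : ℤ => (z : K)) hxy
    push_cast at this
    simpa using this.symm
  have hup : v (u : K) ≤ 1 := my_v_nat_le_one v hna u
  have hvx : v (x : K) ≤ 1 := my_v_int_le_one v hna x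
  have hvy : v (y : K) ≤ 1 := my_v_int_le_one v hna y
  have hp1 : (1 : ℝ) < p := by exact_mod_cast hp.one_lt
  have hppos : (0 : ℝ) < p := lt_trans one_pos hp1
  by_contra hne
  have hlt : v (u : K) < 1 := lt_of_le_of_ne hup hne
  have : (1 : ℝ) ≤ max (v ((x : K) * (p : K))) (v ((y : K) * (u : K))) := by
    calc (1:ℝ) = v 1 := (v.map_one).symm
    _ = v ((x : K) * (p : K) + (y : K) * (u : K)) := by rw [← h1]
    _ ≤ _ := hna _ _
  rcases max_cases (v ((x : K) * (p : K))) (v ((y : K) * (u : K))) with ⟨heq, _⟩ | ⟨heq, _⟩ <;>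
    rw [heq] at this
  · rw [v.map_mul, hvp] at this
    have h2 : v (x : K) * (p:ℝ)⁻¹ ≤ (p:ℝ)⁻¹ :=
      mul_le_of_le_one_left (inv_nonneg.mpr hppos.le) hvx
    have h3 : (p:ℝ)⁻¹ < 1 := inv_lt_one_of_one_lt₀ hp1
    linarith
  · rw [v.map_mul] at this
    have h2 : v (y : K) * v (u : K) ≤ v (u : K) :=
      mul_le_of_le_one_left (v.nonneg _) hvy
    linarith

lemma my_v_nat_eq (n : ℕ) (hn : n ≠ 0) :
    v (n : K) = ((p : ℝ)⁻¹) ^ (n.factorization p) := by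
  set s := n.factorization p with hs
  have hdecomp : p ^ s * (n / p ^ s) = n := Nat.ordProj_mul_ordCompl_eq_self n p
  have hnd : ¬ p ∣ (n / p ^ s) := Nat.not_dvd_ordCompl hp hn
  have : ((n : K)) = ((p : K)) ^ s * ((n / p ^ s : ℕ) : K) := by
    rw [← Nat.cast_pow, ← Nat.cast_mul, hdecomp]
  rw [this, v.map_mul, map_pow, hvp, my_v_coprime_one v hna hp hvp _ hnd, mul_one]

end Aux2


section Aux4

variable {K : Type*} [Field K] (v : AbsoluteValue K ℝ) {p : ℕ}

lemma my_v_psi (hp : p.Prime) (ψ : AddChar (ZMod p) K) (z : ZMod p) : v (ψ z) = 1 := by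
  have hpow : ψ z ^ p = 1 := by
    rw [← AddChar.map_nsmul_eq_pow]
    have : (p • z : ZMod p) = 0 := by
      rw [nsmul_eq_mul]
      simp [ZMod.natCast_self]
    rw [this, AddChar.map_zero_eq_one]
  have h1 : v (ψ z) ^ p = 1 := by
    rw [← map_pow, hpow, v.map_one]
  have h0 : 0 ≤ v (ψ z) := v.nonneg _
  rcases lt_trichotomy (v (ψ z)) 1 with h | h | h
  · exfalso
    have := pow_lt_one₀ h0 h hp.ne_zero
    rw [h1] at this; exact lt_irrefl _ this
  · exact h
  · exfalso
    have := one_lt_pow₀ h hp.ne_zero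
    rw [h1] at this; exact lt_irrefl _ this

variable {E : Type*} [Field E] [Fintype E] [DecidableEq E] [Algebra (ZMod p) E]

lemma my_field_char_sum (hp : p.Prime) (ψ : AddChar (ZMod p) K)
    (hψ : ∃ z : ZMod p, ψ z ≠ 1) (s : E) (hs : s ≠ 0) :
    ∑ a : E, ψ (Algebra.trace (ZMod p) E (a * s)) = 0 := by
  haveI : Fact p.Prime := ⟨hp⟩
  obtain ⟨z₀, hz₀⟩ := hψ
  obtain ⟨y, hy⟩ := Algebra.trace_surjective (ZMod p) E z₀
  set a₀ : E := y * s⁻¹ with ha₀def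
  have ha₀ : Algebra.trace (ZMod p) E (a₀ * s) = z₀ := by
    rw [ha₀def, mul_assoc, inv_mul_cancel₀ hs, mul_one, hy]
  have key : ψ (Algebra.trace (ZMod p) E (a₀ * s)) * ∑ a : E, ψ (Algebra.trace (ZMod p) E (a * s))
      = ∑ a : E, ψ (Algebra.trace (ZMod p) E (a * s)) := by
    rw [Finset.mul_sum]
    apply Fintype.sum_equiv (Equiv.addLeft a₀)
    intro b
    rw [← AddChar.map_add_eq_mul, ← map_add]
    congr 2
    simp [add_mul, Equiv.coe_addLeft]
  rw [ha₀] at key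
  have : (ψ z₀ - 1) * ∑ a : E, ψ (Algebra.trace (ZMod p) E (a * s)) = 0 := by
    rw [sub_mul, one_mul, key, sub_self]
  rcases mul_eq_zero.mp this with h | h
  · exact absurd (sub_eq_zero.mp h) hz₀
  · exact h

lemma my_units_char_sum (hp : p.Prime) (ψ : AddChar (ZMod p) K)
    (hψ : ∃ z : ZMod p, ψ z ≠ 1) (s : E) :
    ∑ t : Eˣ, ψ (Algebra.trace (ZMod p) E ((t : E) * s))
      = (if s = 0 then ((Fintype.card E : K)) else 0) - 1 := by
  classical
  have hsplit : ∑ a : E, ψ (Algebra.trace (ZMod p) E (a * s))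
      = ψ (Algebra.trace (ZMod p) E ((0 : E) * s))
        + ∑ t : Eˣ, ψ (Algebra.trace (ZMod p) E ((t : E) * s)) := by
    rw [← Finset.add_sum_erase Finset.univ _ (Finset.mem_univ (0 : E))]
    congr 1
    rw [Finset.sum_subtype (Finset.univ.erase (0 : E))
      (fun x => by simp : ∀ x : E, x ∈ Finset.univ.erase (0 : E) ↔ x ≠ 0)
      (fun a => ψ (Algebra.trace (ZMod p) E (a * s)))]
    exact (Fintype.sum_equiv unitsEquivNeZero _ _ (fun t => by simp [unitsEquivNeZero])).symm
  have h0 : ψ (Algebra.trace (ZMod p) E ((0 : E) * s)) = 1 := by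
    rw [zero_mul, map_zero, AddChar.map_zero_eq_one]
  by_cases hs : s = 0
  · subst hs
    have hall : ∑ a : E, ψ (Algebra.trace (ZMod p) E (a * 0)) = (Fintype.card E : K) := by
      have : ∀ a : E, ψ (Algebra.trace (ZMod p) E (a * 0)) = 1 := by
        intro a; rw [mul_zero, map_zero, AddChar.map_zero_eq_one]
      rw [Finset.sum_congr rfl (fun a _ => this a)]
      simp [Finset.card_univ]
    rw [hall, h0] at hsplit
    rw [if_pos rfl]
    linear_combination -hsplit
  · have hall := my_field_char_sum hp ψ hψ s hs
    rw [hall, h0] at hsplit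
    rw [if_neg hs]
    linear_combination -hsplit

end Aux4
section Moment

variable {K : Type*} [Field K] (v : AbsoluteValue K ℝ)
variable {E : Type*} [Field E] [Fintype E] [DecidableEq E]

set_option maxHeartbeats 1000000 in
lemma my_moment (hna : ∀ x y : K, v (x + y) ≤ max (v x) (v y))
    (χ : E → K)
    (hχmul : ∀ a b : E, χ (a + b) = χ a * χ b)
    (hχv : ∀ a : E, v (χ a) = 1)
    (hχsum : ∀ s : E, ∑ t : Eˣ, χ ((t : E) * s)
      = (if s = 0 then ((Fintype.card E : K)) else 0) - 1)
    (Klf : Eˣ → K)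
    (hKlf : ∀ t : Eˣ, Klf t = ∑ x : Eˣ, χ ((x : E) + (t : E) * (x : E)⁻¹))
    (k : ℕ) (hk : 1 ≤ k) :
    ∃ N : K, v N ≤ 1 ∧
      (∑ t : Eˣ, (-(Klf t))^k) + 1 = (-1:K)^k * ((Fintype.card E : K) * N) := by
  classical
  -- helper: sums of unit-supported functions
  have hsupp : ∀ f : E → K, ∑ s : E, (if s = 0 then 0 else f s) = ∑ x : Eˣ, f (x : E) := by
    intro f
    rw [← Finset.add_sum_erase Finset.univ _ (Finset.mem_univ (0 : E)), if_pos rfl, zero_add]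
    rw [Finset.sum_subtype (Finset.univ.erase (0 : E))
      (fun x => by simp : ∀ x : E, x ∈ Finset.univ.erase (0 : E) ↔ x ≠ 0)
      (fun s => if s = 0 then 0 else f s)]
    refine (Fintype.sum_equiv unitsEquivNeZero _ _ (fun x => ?_)).symm
    simp [unitsEquivNeZero]
  set w : E → K := fun s => if s = 0 then 0 else χ s⁻¹ with hw
  have hwv : ∀ s : E, v (w s) ≤ 1 := fun s => by
    simp only [hw]
    split_ifs
    · rw [v.map_zero]; exact zero_le_one
    · exact le_of_eq (hχv _)
  have hGw : ∀ τ : E, (∑ x : Eˣ, χ ((x : E) + τ * (x : E)⁻¹))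
      = ∑ s : E, w s * χ (τ * s) := by
    intro τ
    have h1 : ∑ s : E, w s * χ (τ * s)
        = ∑ s : E, (if s = 0 then 0 else χ s⁻¹ * χ (τ * s)) :=
      Finset.sum_congr rfl (fun s _ => by
        simp only [hw]; split_ifs <;> simp)
    rw [h1, hsupp (fun s => χ s⁻¹ * χ (τ * s))]
    refine Fintype.sum_equiv (Equiv.inv Eˣ) _ _ (fun x => ?_)
    simp only [Equiv.inv_apply]
    rw [show ((x⁻¹ : Eˣ) : E) = ((x : E))⁻¹ from Units.val_inv_eq_inv_val x, inv_inv]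
    exact hχmul (x : E) (τ * ((x : E))⁻¹)
  have hsum_w : ∑ s : E, w s = -1 := by
    have h1 : ∑ s : E, w s = ∑ x : Eˣ, χ (((x : E))⁻¹) := by
      rw [show ∑ s : E, w s = ∑ s : E, (if s = 0 then 0 else χ s⁻¹) from rfl]
      exact hsupp (fun s => χ s⁻¹)
    rw [h1]
    have h2 : ∑ x : Eˣ, χ (((x : E))⁻¹) = ∑ x : Eˣ, χ ((x : E)) := by
      refine Fintype.sum_equiv (Equiv.inv Eˣ) _ _ (fun x => ?_)
      simp only [Equiv.inv_apply]
      rw [show ((x⁻¹ : Eˣ) : E) = ((x : E))⁻¹ from Units.val_inv_eq_inv_val x]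
    rw [h2]
    have h3 := hχsum 1
    simp only [mul_one] at h3
    rw [h3, if_neg (one_ne_zero)]
    ring
  -- convolution identity
  have hconv : ∀ (w₁ w₂ : E → K) (τ : E),
      (∑ s : E, w₁ s * χ (τ * s)) * (∑ s : E, w₂ s * χ (τ * s))
        = ∑ s : E, (∑ y : E, w₁ y * w₂ (s - y)) * χ (τ * s) := by
    intro w₁ w₂ τ
    rw [Finset.sum_mul_sum]
    calc ∑ y : E, ∑ z : E, (w₁ y * χ (τ * y)) * (w₂ z * χ (τ * z))
        = ∑ y : E, ∑ s : E, (w₁ y * w₂ (s - y)) * χ (τ * s) := by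
          refine Finset.sum_congr rfl fun y _ => ?_
          refine Fintype.sum_equiv (Equiv.addLeft y) _ _ (fun z => ?_)
          simp only [Equiv.coe_addLeft]
          rw [add_sub_cancel_left, mul_add, hχmul]
          ring
      _ = ∑ s : E, ∑ y : E, (w₁ y * w₂ (s - y)) * χ (τ * s) := Finset.sum_comm
      _ = ∑ s : E, (∑ y : E, w₁ y * w₂ (s - y)) * χ (τ * s) := by
          refine Finset.sum_congr rfl fun s _ => ?_
          rw [Finset.sum_mul]
  -- iterate
  have hiter : ∀ n : ℕ, 1 ≤ n → ∃ wk : E → K, (∀ s, v (wk s) ≤ 1)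
      ∧ (∑ s : E, wk s = (-1:K)^n)
      ∧ ∀ τ : E, (∑ s : E, w s * χ (τ * s))^n = ∑ s : E, wk s * χ (τ * s) := by
    intro n hn
    induction n with
    | zero => omega
    | succ m ih =>
      rcases Nat.lt_or_ge m 1 with hm | hm
      · interval_cases m
        exact ⟨w, hwv, by rw [pow_one]; exact hsum_w, fun τ => by rw [pow_one]⟩
      · obtain ⟨wn, hwnv, hwnsum, hwnpow⟩ := ih hm
        refine ⟨fun s => ∑ y : E, wn y * w (s - y), fun s => ?_, ?_, fun τ => ?_⟩
        · refine my_nonarch_sum_le v hna _ _ zero_le_one (fun y _ => ?_)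
          rw [v.map_mul]
          exact mul_le_one₀ (hwnv y) (v.nonneg _) (hwv _)
        · calc ∑ s : E, ∑ y : E, wn y * w (s - y)
              = ∑ y : E, ∑ s : E, wn y * w (s - y) := Finset.sum_comm
            _ = ∑ y : E, wn y * ∑ s : E, w (s - y) := by
                refine Finset.sum_congr rfl fun y _ => ?_
                rw [Finset.mul_sum]
            _ = ∑ y : E, wn y * (-1:K) := by
                refine Finset.sum_congr rfl fun y _ => ?_
                congr 1
                rw [← hsum_w]
                refine (Fintype.sum_equiv (Equiv.addRight y) _ _ (fun u => ?_)).symm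
                simp only [Equiv.coe_addRight]
                rw [add_sub_cancel_right]
            _ = (-1:K)^(m+1) := by
                rw [← Finset.sum_mul, hwnsum]
                ring
        · rw [pow_succ, hwnpow τ, hconv wn w τ]
  obtain ⟨wk, hwkv, hwksum, hwkpow⟩ := hiter k hk
  refine ⟨wk 0, hwkv 0, ?_⟩
  have h1 : ∑ t : Eˣ, (Klf t)^k = (Fintype.card E : K) * wk 0 - (-1:K)^k := by
    calc ∑ t : Eˣ, (Klf t)^k
        = ∑ t : Eˣ, ∑ s : E, wk s * χ ((t:E) * s) := by
          refine Finset.sum_congr rfl fun t _ => ?_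
          rw [hKlf t, hGw ((t : E)), hwkpow]
      _ = ∑ s : E, ∑ t : Eˣ, wk s * χ ((t:E) * s) := Finset.sum_comm
      _ = ∑ s : E, wk s * ((if s = 0 then ((Fintype.card E : K)) else 0) - 1) := by
          refine Finset.sum_congr rfl fun s _ => ?_
          rw [← Finset.mul_sum, hχsum s]
      _ = ∑ s : E, ((Fintype.card E : K) * (if s = 0 then wk s else 0) - wk s) := by
          refine Finset.sum_congr rfl fun s _ => ?_
          split_ifs <;> ring
      _ = (Fintype.card E : K) * wk 0 - (-1:K)^k := by
          rw [Finset.sum_sub_distrib, ← Finset.mul_sum, hwksum]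
          congr 2
          simp
  have hneg : ∑ t : Eˣ, (-(Klf t))^k = (-1:K)^k * ∑ t : Eˣ, (Klf t)^k := by
    rw [Finset.mul_sum]
    exact Finset.sum_congr rfl fun t _ => by rw [neg_pow]
  rw [hneg, h1]
  have h11 : (-1:K)^k * (-1:K)^k = 1 := by
    rw [← pow_add]; exact Even.neg_one_pow ⟨k, rfl⟩
  linear_combination -h11

end Moment
section SEst

set_option maxHeartbeats 1000000 in
lemma my_S_est {K : Type*} [Field K] (v : AbsoluteValue K ℝ)
    (hna : ∀ x y : K, v (x + y) ≤ max (v x) (v y))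
    {p a q m : ℕ} (hp : p.Prime) (hq : q = p ^ a) (ha : 1 ≤ a)
    (hvp : v (p : K) = ((p : ℝ))⁻¹)
    {E : Type*} [Field E] [Fintype E] [DecidableEq E]
    (hcardE : Fintype.card E = q ^ m) (hm : 1 ≤ m)
    (χ : E → K)
    (hχmul : ∀ x y : E, χ (x + y) = χ x * χ y)
    (hχv : ∀ x : E, v (χ x) = 1)
    (hχsum : ∀ s : E, ∑ t : Eˣ, χ ((t : E) * s)
      = (if s = 0 then ((Fintype.card E : K)) else 0) - 1)
    (Klf : Eˣ → K)
    (hKlf : ∀ t : Eˣ, Klf t = ∑ x : Eˣ, χ ((x : E) + (t : E) * (x : E)⁻¹))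
    (k : ℕ) (hk : 1 ≤ k) (Sval : K)
    (hSval : Sval = ∑ t : Eˣ, ∑ i ∈ Finset.range (k / 2 + 1),
        (-1 : K) ^ i * ((k - i).choose i : K) * (-(Klf t)) ^ (k - 2 * i) * (q : K) ^ (m * i)) :
    v (Sval + 1) ≤ ((p : ℝ)⁻¹) ^ m := by
  have hi0 : (0:ℝ) ≤ (p:ℝ)⁻¹ := by positivity
  have hp1 : (1:ℝ) ≤ (p:ℝ) := by exact_mod_cast hp.one_lt.le
  have hi1 : (p:ℝ)⁻¹ ≤ 1 := inv_le_one_of_one_le₀ hp1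
  have hvq : v ((q : ℕ) : K) = ((p:ℝ)⁻¹) ^ a := by
    rw [hq]; push_cast; rw [map_pow, hvp]
  have hqpow : ∀ e : ℕ, m ≤ e → v (((q : ℕ) : K) ^ e) ≤ ((p:ℝ)⁻¹) ^ m := by
    intro e he
    rw [map_pow, hvq, ← pow_mul]
    refine pow_le_pow_of_le_one hi0 hi1 (le_trans he ?_)
    exact Nat.le_mul_of_pos_left e (by omega)
  have hvmom_any : ∀ e : ℕ, v (∑ t : Eˣ, (-(Klf t)) ^ e) ≤ 1 := by
    intro e
    refine my_nonarch_sum_le v hna _ _ zero_le_one (fun t _ => ?_)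
    rw [map_pow, v.map_neg]
    refine pow_le_one₀ (v.nonneg _) ?_
    rw [hKlf t]
    exact my_nonarch_sum_le v hna _ _ zero_le_one (fun x _ => le_of_eq (hχv _))
  have hpull : ∀ i : ℕ,
      (∑ t : Eˣ, (-1:K)^i * ((k - i).choose i : K) * (-(Klf t))^(k - 2*i) * ((q:ℕ):K)^(m*i))
      = ((-1:K)^i * ((k - i).choose i : K)) * (∑ t : Eˣ, (-(Klf t))^(k - 2*i)) * ((q:ℕ):K)^(m*i) := by
    intro i
    rw [← Finset.sum_mul, ← Finset.mul_sum]
  rw [hSval, Finset.sum_comm]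
  rw [Finset.sum_congr rfl (fun i _ => hpull i)]
  rw [Finset.sum_range_succ']
  have hf0 : ((-1:K)^0 * ((k - 0).choose 0 : K)) * (∑ t : Eˣ, (-(Klf t))^(k - 2*0)) * ((q:ℕ):K)^(m*0)
      = ∑ t : Eˣ, (-(Klf t))^k := by
    simp
  rw [hf0, add_assoc]
  refine le_trans (hna _ _) (max_le ?_ ?_)
  · refine my_nonarch_sum_le v hna _ _ (by positivity) (fun i _ => ?_)
    have h1 : v ((-1:K)^(i+1) * (((k - (i+1)).choose (i+1) : ℕ) : K)) ≤ 1 := by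
      rw [v.map_mul, map_pow, v.map_neg, v.map_one, one_pow, one_mul]
      exact my_v_nat_le_one v hna _
    have h2 : v (∑ t : Eˣ, (-(Klf t))^(k - 2*(i+1))) ≤ 1 := hvmom_any _
    have h3 : v (((q:ℕ):K)^(m*(i+1))) ≤ ((p:ℝ)⁻¹)^m :=
      hqpow _ (Nat.le_mul_of_pos_right m (by omega))
    calc v (((-1:K)^(i+1) * ((k - (i+1)).choose (i+1) : K)) * (∑ t : Eˣ, (-(Klf t))^(k - 2*(i+1))) * ((q:ℕ):K)^(m*(i+1)))
        = v ((-1:K)^(i+1) * ((k - (i+1)).choose (i+1) : K)) * v (∑ t : Eˣ, (-(Klf t))^(k - 2*(i+1))) * v (((q:ℕ):K)^(m*(i+1))) := by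
          rw [v.map_mul, v.map_mul]
      _ ≤ 1 * 1 * ((p:ℝ)⁻¹)^m := by
          exact mul_le_mul (mul_le_mul h1 h2 (v.nonneg _) zero_le_one) h3 (v.nonneg _) (by norm_num)
      _ = ((p:ℝ)⁻¹)^m := by ring
  · obtain ⟨N, hN, hNeq⟩ := my_moment v hna χ hχmul hχv hχsum Klf hKlf k hk
    rw [hNeq, v.map_mul, v.map_mul]
    have hv1 : v ((-1:K)^k) = 1 := by rw [map_pow, v.map_neg, v.map_one, one_pow]
    rw [hv1, one_mul]
    have hcv : v ((Fintype.card E : K)) ≤ ((p:ℝ)⁻¹)^m := by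
      rw [hcardE]
      push_cast
      rw [map_pow, hvq, ← pow_mul]
      exact pow_le_pow_of_le_one hi0 hi1 (Nat.le_mul_of_pos_left m (by omega))
    calc v ((Fintype.card E : K)) * v N ≤ ((p:ℝ)⁻¹)^m * 1 :=
          mul_le_mul hcv hN (v.nonneg _) (by positivity)
      _ = ((p:ℝ)⁻¹)^m := mul_one _

end SEst
section Partial

set_option maxHeartbeats 1000000 in
lemma my_partial_bound {K : Type*} [Field K] [CharZero K] (v : AbsoluteValue K ℝ)
    (hna : ∀ x y : K, v (x + y) ≤ max (v x) (v y))
    {p : ℕ} [Fact p.Prime] (hp5 : 5 ≤ p) (hvp : v (p : K) = ((p : ℝ))⁻¹)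
    (S : ℕ → K) (c : ℕ → K) (hc0 : c 0 = 1)
    (hrec : ∀ j : ℕ, ((j : K) + 1) * c (j + 1) =
      ∑ m ∈ Finset.range (j + 1), S (m + 1) * c (j - m))
    (hW : ∀ m : ℕ, 1 ≤ m → v (S m + 1) ≤ ((p : ℝ)⁻¹) ^ m) :
    ∀ j : ℕ, v (∑ i ∈ Finset.range (j + 1), c i) ≤ ((p : ℝ)⁻¹) ^ (j / 2) := by
  have hp : p.Prime := Fact.out
  have hppos : (0:ℝ) < p := by exact_mod_cast hp.pos
  have hp1 : (1:ℝ) ≤ (p:ℝ) := by exact_mod_cast hp.one_lt.le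
  have hi0 : (0:ℝ) ≤ (p:ℝ)⁻¹ := by positivity
  have hi1 : (p:ℝ)⁻¹ ≤ 1 := inv_le_one_of_one_le₀ hp1
  set E : ℕ → K := fun j => ∑ i ∈ Finset.range (j + 1), c i with hE
  have hE0 : E 0 = c 0 := by simp [hE]
  have hEsucc : ∀ j : ℕ, E (j + 1) = E j + c (j + 1) := by
    intro j
    simp only [hE]
    rw [Finset.sum_range_succ]
  -- the recursion for partial sums
  have hErec : ∀ j : ℕ, ((j : K) + 1) * E (j + 1) =
      ∑ m ∈ Finset.range (j + 1), (S (m + 1) + 1) * E (j - m) := by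
    intro j
    induction j with
    | zero =>
      have h0 := hrec 0
      simp only [Finset.sum_range_one, Nat.sub_zero, Nat.cast_zero, zero_add, one_mul] at h0 ⊢
      rw [hEsucc 0, hE0, h0, hc0]
      ring
    | succ j IH =>
      have hIH2 : ∑ m ∈ Finset.range (j + 1), (S (m + 1) + 1) * E (j - m)
          = (∑ m ∈ Finset.range (j + 1), S (m + 1) * E (j - m))
            + ∑ m ∈ Finset.range (j + 1), E (j - m) := by
        rw [← Finset.sum_add_distrib]
        exact Finset.sum_congr rfl fun m _ => by ring
      have hIH' : ((j : K) + 1) * E (j + 1)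
          = (∑ m ∈ Finset.range (j + 1), S (m + 1) * E (j - m))
            + ∑ m ∈ Finset.range (j + 1), E (j - m) := IH.trans hIH2
      have hrecj : ((j : K) + 1 + 1) * c (j + 2) =
          ∑ m ∈ Finset.range (j + 2), S (m + 1) * c (j + 1 - m) := by
        have h := hrec (j + 1)
        push_cast at h
        exact h
      have hsplitRHS : ∑ m ∈ Finset.range (j + 2), (S (m + 1) + 1) * E (j + 1 - m)
          = (∑ m ∈ Finset.range (j + 2), S (m + 1) * E (j + 1 - m))
            + ∑ m ∈ Finset.range (j + 2), E (j + 1 - m) := by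
        rw [← Finset.sum_add_distrib]
        exact Finset.sum_congr rfl fun m _ => by ring
      have hEsum : ∑ m ∈ Finset.range (j + 2), E (j + 1 - m)
          = E (j + 1) + ∑ m ∈ Finset.range (j + 1), E (j - m) := by
        rw [Finset.sum_range_succ' (fun m => E (j + 1 - m)) (j + 1)]
        simp only [Nat.succ_sub_succ, Nat.sub_zero]
        exact add_comm _ _
      have hSE : ∑ m ∈ Finset.range (j + 2), S (m + 1) * E (j + 1 - m)
          = (∑ m ∈ Finset.range (j + 2), S (m + 1) * c (j + 1 - m))
            + ∑ m ∈ Finset.range (j + 1), S (m + 1) * E (j - m) := by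
        rw [Finset.sum_range_succ (fun m => S (m + 1) * E (j + 1 - m)) (j + 1)]
        rw [Finset.sum_range_succ (fun m => S (m + 1) * c (j + 1 - m)) (j + 1)]
        have hsub : ∀ m ∈ Finset.range (j + 1),
            S (m + 1) * E (j + 1 - m) = S (m + 1) * c (j + 1 - m) + S (m + 1) * E (j - m) := by
          intro m hm
          have hmle : m ≤ j := Nat.lt_succ_iff.mp (Finset.mem_range.mp hm)
          have h1 : j + 1 - m = (j - m) + 1 := by omega
          rw [h1, hEsucc (j - m), ← h1]
          ring
        rw [Finset.sum_congr rfl hsub, Finset.sum_add_distrib]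
        simp only [Nat.sub_self]
        rw [hE0]
        ring
      have hgoalcast : (((j + 1 : ℕ) : K) + 1) = ((j : K) + 1 + 1) := by push_cast; ring
      rw [hgoalcast, hsplitRHS, hSE, hEsum, hEsucc (j + 1)]
      linear_combination hIH' + hrecj
  -- the valuation bound by strong induction
  have hbound : ∀ j : ℕ, v (E j) ≤
      (p : ℝ) ^ ((Nat.factorial j).factorization p) * ((p : ℝ)⁻¹) ^ j := by
    intro j
    induction j using Nat.strong_induction_on with
    | _ j ih =>
      match j with
      | 0 =>
        rw [hE0, hc0, v.map_one]
        simp [Nat.factorial]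
      | (j + 1) =>
        have hsum_le : v (∑ m ∈ Finset.range (j + 1), (S (m + 1) + 1) * E (j - m))
            ≤ (p : ℝ) ^ ((Nat.factorial j).factorization p) * ((p : ℝ)⁻¹) ^ (j + 1) := by
          refine my_nonarch_sum_le v hna _ _ (by positivity) (fun m hm => ?_)
          have hmle : m ≤ j := Nat.lt_succ_iff.mp (Finset.mem_range.mp hm)
          have h1 : v (S (m + 1) + 1) ≤ ((p : ℝ)⁻¹) ^ (m + 1) := hW (m + 1) (by omega)
          have h2 : v (E (j - m)) ≤
              (p : ℝ) ^ ((Nat.factorial (j - m)).factorization p) * ((p : ℝ)⁻¹) ^ (j - m) :=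
            ih (j - m) (by omega)
          have hff : (Nat.factorial (j - m)).factorization p
              ≤ (Nat.factorial j).factorization p := by
            have hdvd : Nat.factorial (j - m) ∣ Nat.factorial j :=
              Nat.factorial_dvd_factorial (by omega)
            exact (Nat.factorization_le_iff_dvd (Nat.factorial_ne_zero _)
              (Nat.factorial_ne_zero _)).mpr hdvd p
          calc v ((S (m + 1) + 1) * E (j - m)) = v (S (m + 1) + 1) * v (E (j - m)) := v.map_mul _ _
            _ ≤ ((p : ℝ)⁻¹) ^ (m + 1) *
                ((p : ℝ) ^ ((Nat.factorial (j - m)).factorization p) * ((p : ℝ)⁻¹) ^ (j - m)) :=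
              mul_le_mul h1 h2 (v.nonneg _) (by positivity)
            _ = (p : ℝ) ^ ((Nat.factorial (j - m)).factorization p) * ((p : ℝ)⁻¹) ^ (j + 1) := by
              rw [show j + 1 = (m + 1) + (j - m) from by omega, pow_add]
              ring
            _ ≤ (p : ℝ) ^ ((Nat.factorial j).factorization p) * ((p : ℝ)⁻¹) ^ (j + 1) := by
              exact mul_le_mul_of_nonneg_right (pow_le_pow_right₀ hp1 hff) (by positivity)
        have hveq : v (((j + 1 : ℕ) : K)) * v (E (j + 1))
            = v (∑ m ∈ Finset.range (j + 1), (S (m + 1) + 1) * E (j - m)) := by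
          rw [← v.map_mul]
          congr 1
          push_cast
          exact hErec j
        have hvj : v (((j + 1 : ℕ) : K)) = ((p : ℝ)⁻¹) ^ ((j + 1).factorization p) :=
          my_v_nat_eq v hna hp hvp (j + 1) (by omega)
        have hvpos : (0:ℝ) < ((p : ℝ)⁻¹) ^ ((j + 1).factorization p) := by positivity
        rw [hvj] at hveq
        have hEval : v (E (j + 1)) =
            (p : ℝ) ^ ((j + 1).factorization p)
              * v (∑ m ∈ Finset.range (j + 1), (S (m + 1) + 1) * E (j - m)) := by
          calc v (E (j + 1))
              = ((p : ℝ) ^ ((j + 1).factorization p) * ((p : ℝ)⁻¹) ^ ((j + 1).factorization p))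
                * v (E (j + 1)) := by
                rw [← mul_pow, mul_inv_cancel₀ (ne_of_gt hppos), one_pow, one_mul]
            _ = (p : ℝ) ^ ((j + 1).factorization p)
                * (((p : ℝ)⁻¹) ^ ((j + 1).factorization p) * v (E (j + 1))) := by
                rw [mul_assoc]
            _ = _ := by rw [hveq]
        rw [hEval]
        have hfact : (Nat.factorial (j + 1)).factorization p
            = (j + 1).factorization p + (Nat.factorial j).factorization p := by
          rw [Nat.factorial_succ, Nat.factorization_mul (by omega) (Nat.factorial_ne_zero j)]
          simp
        calc (p : ℝ) ^ ((j + 1).factorization p)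
              * v (∑ m ∈ Finset.range (j + 1), (S (m + 1) + 1) * E (j - m))
            ≤ (p : ℝ) ^ ((j + 1).factorization p)
              * ((p : ℝ) ^ ((Nat.factorial j).factorization p) * ((p : ℝ)⁻¹) ^ (j + 1)) :=
            mul_le_mul_of_nonneg_left hsum_le (by positivity)
          _ = (p : ℝ) ^ ((Nat.factorial (j + 1)).factorization p) * ((p : ℝ)⁻¹) ^ (j + 1) := by
            rw [hfact, pow_add]
            ring
  -- convert to the clean form
  intro j
  have hb := hbound j
  have hf4 : (Nat.factorial j).factorization p ≤ j / 4 := my_legendre hp5 j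
  set f := (Nat.factorial j).factorization p with hf
  have hd1 : j / 4 ≤ j / 2 := Nat.div_le_div_left (by omega) (by omega)
  have hd2 : j / 2 * 2 ≤ j := Nat.div_mul_le_self j 2
  have hfj : f ≤ j := by omega
  have heq : (p : ℝ) ^ f * ((p : ℝ)⁻¹) ^ j = ((p : ℝ)⁻¹) ^ (j - f) := by
    have hne : ((p : ℝ)⁻¹) ≠ 0 := by positivity
    have h2 : (((p:ℝ))⁻¹ ^ f)⁻¹ = (p:ℝ) ^ f := by rw [inv_pow, inv_inv]
    rw [pow_sub₀ _ hne hfj, h2]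
    ring
  rw [heq] at hb
  refine le_trans hb (pow_le_pow_of_le_one hi0 hi1 ?_)
  omega

end Partial

set_option maxHeartbeats 1000000



/-- (Theorem: `T = 1` is a root.) Let `p ≥ 5` and `κ ∈ ℤ_p`. Then the
series `Σ_{j≥0} c_j^{(κ)}` converges in `K` to `0`; that is, `T = 1` is a root of the
infinite κ-symmetric power L-function `L(Sym^{∞,κ} Kl, T) = Σ_j c_j^{(κ)} T^j`.

Here `cκ j = c_j^{(κ)}` is characterized as the limit of the coefficients `c_j^{(k_n)}`
of `L(Sym^{k_n} Kl, T)` along any κ-approximating sequence `(k_n)`. -/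
theorem statement2
    (p a q : ℕ) (hp : p.Prime) (hp5 : 5 ≤ p) (ha : 1 ≤ a) (hq : q = p ^ a)
    [Fact p.Prime]
    (K : Type*) [Field K] [CharZero K]
    (v : AbsoluteValue K ℝ)
    (hv_nonarch : ∀ x y : K, v (x + y) ≤ max (v x) (v y))
    (hvp : v (p : K) = ((p : ℝ))⁻¹)
    (hcomplete : ∀ s : ℕ → K,
      (∀ ε : ℝ, 0 < ε → ∃ N : ℕ, ∀ m ≥ N, ∀ n ≥ N, v (s m - s n) < ε) →
      ∃ L : K, ∀ ε : ℝ, 0 < ε → ∃ N : ℕ, ∀ n ≥ N, v (s n - L) < ε)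
    (F : ℕ → Type*) [∀ m, Field (F m)] [∀ m, Fintype (F m)] [∀ m, DecidableEq (F m)]
    [∀ m, Algebra (ZMod p) (F m)]
    (hcard : ∀ m : ℕ, 1 ≤ m → Fintype.card (F m) = q ^ m)
    (ψ : AddChar (ZMod p) K) (hψ : ∃ z : ZMod p, ψ z ≠ 1)
    (Kl : (m : ℕ) → (F m)ˣ → K)
    (hKl : ∀ (m : ℕ) (t : (F m)ˣ), Kl m t =
      ∑ x : (F m)ˣ, ψ (Algebra.trace (ZMod p) (F m) ((x : F m) + (t : F m) * (x : F m)⁻¹)))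
    (S : ℕ → ℕ → K)
    (hS : ∀ (m k : ℕ), S m k =
      ∑ t : (F m)ˣ, ∑ i ∈ Finset.range (k / 2 + 1),
        (-1 : K) ^ i * ((k - i).choose i : K) * (-(Kl m t)) ^ (k - 2 * i) * (q : K) ^ (m * i))
    (c : ℕ → ℕ → K) (hc0 : ∀ k : ℕ, 1 ≤ k → c k 0 = 1)
    (hcrec : ∀ k : ℕ, 1 ≤ k → ∀ j : ℕ, ((j : K) + 1) * c k (j + 1) =
      ∑ m ∈ Finset.range (j + 1), S (m + 1) k * c k (j - m))
    (κ : ℤ_[p])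
    -- cκ j = c_j^{(κ)}, the limit of c_j^{(k_n)} along every κ-approximating sequence
    (cκ : ℕ → K)
    (hcκ : ∀ k : ℕ → ℕ, (∀ n, 1 ≤ k n) →
      Filter.Tendsto (fun n => (k n : ℝ)) Filter.atTop Filter.atTop →
      Filter.Tendsto (fun n => ((k n : ℤ_[p]))) Filter.atTop (nhds κ) →
      ∀ j : ℕ, ∀ ε : ℝ, 0 < ε → ∃ N : ℕ, ∀ n ≥ N, v (c (k n) j - cκ j) < ε) :
    -- the partial sums Σ_{j < M} c_j^{(κ)} converge to 0, i.e. L(Sym^{∞,κ} Kl, 1) = 0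
    ∀ ε : ℝ, 0 < ε → ∃ N : ℕ, ∀ M ≥ N, v (∑ j ∈ Finset.range M, cκ j) < ε := by
  intro ε hε
  have hp1R : (1:ℝ) < (p:ℝ) := by exact_mod_cast hp.one_lt
  have hi0 : (0:ℝ) ≤ (p:ℝ)⁻¹ := by positivity
  have hi1 : (p:ℝ)⁻¹ < 1 := inv_lt_one_of_one_lt₀ hp1R
  obtain ⟨n₀, hn₀⟩ := exists_pow_lt_of_lt_one hε hi1
  refine ⟨2 * n₀ + 1, fun M hM => ?_⟩
  have hM1 : 1 ≤ M := by omega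
  -- the approximating sequence
  set kseq : ℕ → ℕ := fun n => PadicInt.appr κ n + p ^ n with hkseq
  have hppow1 : ∀ n : ℕ, 1 ≤ p ^ n := fun n => Nat.one_le_pow n p hp.pos
  have hk1 : ∀ n, 1 ≤ kseq n := by
    intro n
    have := hppow1 n
    simp only [hkseq]
    omega
  have hk2 : Filter.Tendsto (fun n => (kseq n : ℝ)) Filter.atTop Filter.atTop := by
    apply Filter.tendsto_atTop_mono (f := fun n : ℕ => (n : ℝ)) (fun n => ?_)
      tendsto_natCast_atTop_atTop
    have h1 : n ≤ kseq n := by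
      have h2 : n < 2 ^ n := Nat.lt_two_pow_self
      have h3 : 2 ^ n ≤ p ^ n := Nat.pow_le_pow_left (by omega) n
      simp only [hkseq]
      omega
    show (n : ℝ) ≤ ((kseq n : ℕ) : ℝ)
    exact_mod_cast h1
  have hk3 : Filter.Tendsto (fun n => ((kseq n : ℤ_[p]))) Filter.atTop (nhds κ) := by
    have hb : ∀ n : ℕ, ‖(kseq n : ℤ_[p]) - κ‖ ≤ ((p:ℝ)⁻¹) ^ n := by
      intro n
      have hconv : (p:ℝ) ^ (-(n:ℤ)) = ((p:ℝ)⁻¹) ^ n := by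
        rw [zpow_neg, zpow_natCast, ← inv_pow]
      have hcast : ((kseq n : ℕ) : ℤ_[p]) = (PadicInt.appr κ n : ℤ_[p]) + (p:ℤ_[p])^n := by
        simp only [hkseq]
        push_cast
        ring
      have h3 : (kseq n : ℤ_[p]) - κ
          = ((PadicInt.appr κ n : ℤ_[p]) - κ) + (p:ℤ_[p])^n := by
        rw [hcast]; ring
      have h1 : ‖((PadicInt.appr κ n : ℤ_[p]) - κ)‖ ≤ (p:ℝ) ^ (-(n:ℤ)) := by
        rw [PadicInt.norm_le_pow_iff_mem_span_pow]
        have h := PadicInt.appr_spec n κ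
        have h' := neg_mem h
        rwa [neg_sub] at h'
      have h2 : ‖((p:ℤ_[p]))^n‖ ≤ (p:ℝ) ^ (-(n:ℤ)) := le_of_eq (PadicInt.norm_p_pow n)
      rw [h3]
      refine le_trans (PadicInt.nonarchimedean _ _) ?_
      rw [← hconv]
      exact max_le h1 h2
    have h0 : Filter.Tendsto (fun n : ℕ => ((p:ℝ)⁻¹) ^ n) Filter.atTop (nhds 0) :=
      tendsto_pow_atTop_nhds_zero_of_lt_one hi0 hi1
    rw [tendsto_iff_norm_sub_tendsto_zero]
    exact squeeze_zero (fun n => norm_nonneg _) hb h0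
  -- uniform estimate for S
  have hWk : ∀ k : ℕ, 1 ≤ k → ∀ m : ℕ, 1 ≤ m → v (S m k + 1) ≤ ((p:ℝ)⁻¹) ^ m := by
    intro k hk m hm
    refine my_S_est v hv_nonarch hp hq ha hvp (hcard m hm) hm
      (fun z => ψ (Algebra.trace (ZMod p) (F m) z))
      (fun x y => by simp only [map_add, AddChar.map_add_eq_mul])
      (fun x => my_v_psi v hp ψ _)
      (fun s => my_units_char_sum hp ψ hψ s)
      (Kl m) (hKl m) k hk (S m k) (hS m k)
  -- uniform bound for partial sums of c k
  have hpart : ∀ k : ℕ, 1 ≤ k → v (∑ j ∈ Finset.range M, c k j) ≤ ((p:ℝ)⁻¹) ^ ((M-1) / 2) := by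
    intro k hk
    have h := my_partial_bound v hv_nonarch hp5 hvp (fun m => S m k) (c k)
      (hc0 k hk) (fun j => hcrec k hk j) (fun m hm => hWk k hk m hm) (M - 1)
    rwa [show M - 1 + 1 = M from by omega] at h
  -- approximate cκ coefficientwise
  choose Nj hNj using fun j => hcκ kseq hk1 hk2 hk3 j ε hε
  set n₁ := (Finset.range M).sup Nj with hn₁
  have hclose : ∀ j ∈ Finset.range M, v (c (kseq n₁) j - cκ j) < ε := fun j hj =>
    hNj j n₁ (Finset.le_sup hj)
  have hdiff : v (∑ j ∈ Finset.range M, cκ j - ∑ j ∈ Finset.range M, c (kseq n₁) j) < ε := by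
    rw [← Finset.sum_sub_distrib]
    refine my_nonarch_sum_lt v hv_nonarch _ _ hε (fun j hj => ?_)
    rw [show cκ j - c (kseq n₁) j = -(c (kseq n₁) j - cκ j) from by ring, v.map_neg]
    exact hclose j hj
  have hmain : v (∑ j ∈ Finset.range M, c (kseq n₁) j) < ε := by
    refine lt_of_le_of_lt (hpart (kseq n₁) (hk1 n₁)) ?_
    refine lt_of_le_of_lt (pow_le_pow_of_le_one hi0 hi1.le (?_ : n₀ ≤ (M-1)/2)) hn₀
    omega
  have hsplit : ∑ j ∈ Finset.range M, cκ j
      = (∑ j ∈ Finset.range M, cκ j - ∑ j ∈ Finset.range M, c (kseq n₁) j)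
        + ∑ j ∈ Finset.range M, c (kseq n₁) j := by ring
  rw [hsplit]
  exact lt_of_le_of_lt (hv_nonarch _ _) (max_lt hdiff hmain)
end

section
/- Let p ≥ 5. Then (1 - qT) · L(Sym^{∞,0} Kl, T) = (1 - T) · L(Sym^{∞,-2} Kl, qT) as formal power series in K[[T]]; explicitly, for every j ≥ 0: c_j^{(0)} - q·c_{j-1}^{(0)} = q^j·c_j^{(-2)} - q^{j-1}·c_{j-1}^{(-2)} (with c_{-1} := 0). -/
set_option linter.unusedSectionVars false
set_option maxHeartbeats 1000000

namespace St4

open Finset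

def UU {K : Type*} [Field K] (x y : K) (k : ℕ) : K :=
  ∑ i ∈ Finset.range (k/2+1), (-1:K)^i * ((k-i).choose i : K) * x^(k-2*i) * y^i

lemma UU_def {K : Type*} [Field K] (x y : K) (k : ℕ) :
    UU x y k = ∑ i ∈ Finset.range (k/2+1), (-1:K)^i * ((k-i).choose i : K) * x^(k-2*i) * y^i :=
  rfl

variable {K : Type*} [Field K] (v : AbsoluteValue K ℝ)

lemma v_sub_le_max (hna : ∀ x y : K, v (x + y) ≤ max (v x) (v y)) (x y : K) :
    v (x - y) ≤ max (v x) (v y) := by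
  have := hna x (-y)
  simpa [sub_eq_add_neg, v.map_neg] using this

lemma v_sum_le (hna : ∀ x y : K, v (x + y) ≤ max (v x) (v y)) {ι : Type*} (s : Finset ι)
    (f : ι → K) {B : ℝ} (hB : 0 ≤ B) (h : ∀ i ∈ s, v (f i) ≤ B) :
    v (∑ i ∈ s, f i) ≤ B := by
  classical
  induction s using Finset.induction_on with
  | empty => simpa using hB
  | insert _ _ hni ih =>
    rename_i a s
    rw [Finset.sum_insert hni]
    exact le_trans (hna _ _) (max_le (h a (Finset.mem_insert_self a s))
      (ih fun i hi => h i (Finset.mem_insert_of_mem hi)))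

lemma v_nat_le_one (hna : ∀ x y : K, v (x + y) ≤ max (v x) (v y)) : ∀ n : ℕ, v (n : K) ≤ 1
  | 0 => by simp
  | n+1 => by
    push_cast
    exact le_trans (hna (n : K) 1) (max_le (v_nat_le_one hna n) (by simp))

lemma v_int_le_one (hna : ∀ x y : K, v (x + y) ≤ max (v x) (v y)) (n : ℤ) : v (n : K) ≤ 1 := by
  rcases Int.natAbs_eq n with h | h
  · rw [h, Int.cast_natCast]; exact v_nat_le_one v hna _
  · rw [h, Int.cast_neg, Int.cast_natCast, v.map_neg]; exact v_nat_le_one v hna _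

variable {p : ℕ} (hp : p.Prime)
variable (hna : ∀ x y : K, v (x + y) ≤ max (v x) (v y))
variable (hvp : v (p : K) = ((p : ℝ))⁻¹)

include hp hna hvp

/-- `v` of a natural divisible by `p^M` is at most `p⁻¹^M`. -/
lemma v_nat_upper {M N : ℕ} (h : p ^ M ∣ N) : v (N : K) ≤ ((p : ℝ)⁻¹) ^ M := by
  obtain ⟨c, rfl⟩ := h
  have : ((p ^ M * c : ℕ) : K) = (p : K) ^ M * (c : K) := by push_cast; ring
  rw [this, v.map_mul, v.map_pow, hvp]
  have h1 : v ((c : ℕ) : K) ≤ 1 := v_nat_le_one v hna c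
  have h2 : (0:ℝ) ≤ ((p:ℝ)⁻¹) ^ M := by positivity
  calc ((p:ℝ)⁻¹) ^ M * v ((c:ℕ):K) ≤ ((p:ℝ)⁻¹) ^ M * 1 := by
        exact mul_le_mul_of_nonneg_left h1 h2
    _ = ((p:ℝ)⁻¹) ^ M := by ring

/-- `v` of an integer divisible by `p^M` is at most `p⁻¹^M`. -/
lemma v_int_upper {M : ℕ} {N : ℤ} (h : (p : ℤ) ^ M ∣ N) : v ((N : ℤ) : K) ≤ ((p : ℝ)⁻¹) ^ M := by
  obtain ⟨c, rfl⟩ := h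
  have : (((p:ℤ) ^ M * c : ℤ) : K) = (p : K) ^ M * ((c : ℤ) : K) := by push_cast; ring
  rw [this, v.map_mul, v.map_pow, hvp]
  have h1 : v ((c : ℤ) : K) ≤ 1 := v_int_le_one v hna c
  have h2 : (0:ℝ) ≤ ((p:ℝ)⁻¹) ^ M := by positivity
  calc ((p:ℝ)⁻¹) ^ M * v ((c:ℤ):K) ≤ ((p:ℝ)⁻¹) ^ M * 1 := by
        exact mul_le_mul_of_nonneg_left h1 h2
    _ = ((p:ℝ)⁻¹) ^ M := by ring

/-- naturals prime to `p` have `v` equal to one. -/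
lemma v_nat_coprime {u : ℕ} (hu : ¬ p ∣ u) : v (u : K) = 1 := by
  have hp2 : 2 ≤ p := hp.two_le
  have hpR : (1:ℝ) < (p:ℝ) := by exact_mod_cast hp.one_lt
  have hpinv : (p:ℝ)⁻¹ < 1 := by
    rw [inv_lt_one_iff₀]; right; exact hpR
  have hcop : Nat.Coprime u p := ((Nat.Prime.coprime_iff_not_dvd hp).2 hu).symm
  have hic : IsCoprime (u:ℤ) (p:ℤ) := Nat.isCoprime_iff_coprime.mpr hcop
  obtain ⟨s, t, hst⟩ := hic
  have h1 : ((s:K)) * (u : K) + ((t:K)) * (p : K) = 1 := by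
    have := congrArg (fun z : ℤ => (z : K)) hst
    push_cast at this
    simpa using this
  refine le_antisymm (v_nat_le_one v hna u) ?_
  by_contra hlt
  push_neg at hlt
  have h2 : v (1:K) ≤ max (v ((s:K) * (u:K))) (v ((t:K) * (p:K))) := by
    rw [← h1]; exact hna _ _
  rw [v.map_one, v.map_mul, v.map_mul, hvp] at h2
  have hb1 : v ((s:K)) * v ((u:K)) < 1 := by
    have := v_int_le_one v hna s
    have hvu0 : 0 ≤ v ((u:K)) := v.nonneg _
    nlinarith [v.nonneg ((s:K))]
  have hb2 : v ((t:K)) * (p:ℝ)⁻¹ < 1 := by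
    have := v_int_le_one v hna t
    have : v ((t:K)) * (p:ℝ)⁻¹ ≤ 1 * (p:ℝ)⁻¹ := by
      apply mul_le_mul_of_nonneg_right (v_int_le_one v hna t) (by positivity)
    linarith
  have := max_lt hb1 hb2
  linarith [h2]

lemma v_nat_lower {N : ℕ} (hN : N ≠ 0) : ((p : ℝ)⁻¹) ^ (padicValNat p N) ≤ v (N : K) := by
  have e := Nat.ordProj_mul_ordCompl_eq_self N p
  have hu : ¬ p ∣ N / p ^ N.factorization p := Nat.not_dvd_ordCompl hp hN
  have hcast : (N : K) = (p : K) ^ (N.factorization p) * ((N / p ^ N.factorization p : ℕ) : K) := by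
    rw [← Nat.cast_pow, ← Nat.cast_mul, e]
  rw [hcast, v.map_mul, v.map_pow, hvp, v_nat_coprime v hp hna hvp hu,
    Nat.factorization_def N hp]
  simp


section part3
variable [CharZero K] [Fact p.Prime]
omit hp hna hvp

lemma pv_fact_le (hp5 : 5 ≤ p) (i : ℕ) : padicValNat p (Nat.factorial (i+1)) ≤ i := by
  have h := sub_one_mul_padicValNat_factorial (p := p) (i+1)
  have h2 : (p-1) * padicValNat p (Nat.factorial (i+1)) ≤ i+1 := by
    rw [h]; exact Nat.sub_le _ _
  have h3 : 4 * padicValNat p (Nat.factorial (i+1)) ≤ (p-1) * padicValNat p (Nat.factorial (i+1)) :=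
    Nat.mul_le_mul_right _ (by omega)
  omega

lemma desc_cast {i k : ℕ} (h : 2*i ≤ k) :
    (((k-i).descFactorial i : ℕ) : ℤ) = ∏ j ∈ Finset.range i, ((k:ℤ) - (i:ℤ) - (j:ℤ)) := by
  rw [Nat.descFactorial_eq_prod_range, Nat.cast_prod]
  apply Finset.prod_congr rfl
  intro j hj
  have hj' : j < i := Finset.mem_range.mp hj
  have h1 : j ≤ k - i := by omega
  have h2 : i ≤ k := by omega
  rw [Nat.cast_sub h1, Nat.cast_sub h2]

lemma desc_modeq {i k k' M : ℕ} (h2 : 2*i ≤ k') (hkk' : k' ≤ k)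
    (hdvd : (p:ℤ)^M ∣ (k:ℤ) - (k':ℤ)) :
    (p:ℤ)^M ∣ (((k-i).descFactorial i : ℕ) : ℤ) - (((k'-i).descFactorial i : ℕ) : ℤ) := by
  rw [desc_cast (le_trans h2 hkk'), desc_cast h2]
  have hme : (k':ℤ) ≡ (k:ℤ) [ZMOD ((p:ℤ)^M)] := Int.modEq_iff_dvd.mpr hdvd
  have hprod : ∀ n : ℕ, (∏ j ∈ Finset.range n, ((k':ℤ) - (i:ℤ) - (j:ℤ))) ≡
      (∏ j ∈ Finset.range n, ((k:ℤ) - (i:ℤ) - (j:ℤ))) [ZMOD ((p:ℤ)^M)] := by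
    intro n
    induction n with
    | zero => simp
    | succ n ih =>
      rw [Finset.prod_range_succ, Finset.prod_range_succ]
      exact ih.mul ((hme.sub_right (i:ℤ)).sub_right (n:ℤ))
  exact (hprod i).dvd

lemma I2 {i k : ℕ} (h1 : 1 ≤ i) (h2 : 2*i ≤ k) :
    Nat.factorial i * ((k-i).choose i + (k-1-i).choose (i-1)) =
      k * ((k-1-i).descFactorial (i-1)) := by
  obtain ⟨i', rfl⟩ : ∃ i', i = i' + 1 := ⟨i-1, by omega⟩
  obtain ⟨n, hn⟩ : ∃ n, k - (i'+1) = n + 1 := ⟨k - i' - 2, by omega⟩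
  have hk1 : k - 1 - (i'+1) = n := by omega
  have hsimp : (i'+1) - 1 = i' := by omega
  rw [hn, hk1, hsimp]
  have e1 : Nat.factorial (i'+1) * (n+1).choose (i'+1) = (n+1) * n.descFactorial i' := by
    rw [← Nat.succ_descFactorial_succ, Nat.descFactorial_eq_factorial_mul_choose]
  have e2 : Nat.factorial (i'+1) * n.choose i' = (i'+1) * n.descFactorial i' := by
    rw [Nat.factorial_succ, Nat.descFactorial_eq_factorial_mul_choose]; ring
  have hk : n + 1 + (i'+1) = k := by omega
  calc Nat.factorial (i'+1) * ((n+1).choose (i'+1) + n.choose i')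
      = Nat.factorial (i'+1) * (n+1).choose (i'+1) + Nat.factorial (i'+1) * n.choose i' := by ring
    _ = (n+1) * n.descFactorial i' + (i'+1) * n.descFactorial i' := by rw [e1, e2]
    _ = (n + 1 + (i'+1)) * n.descFactorial i' := by ring
    _ = k * n.descFactorial i' := by rw [hk]

include hp hna hvp

lemma v_div_fact {N : ℕ} {z : K} {B : ℝ} (hB : 0 ≤ B) (hN : N ≠ 0)
    (h : v (((N : ℕ) : K) * z) ≤ B) :
    v z ≤ (p:ℝ) ^ (padicValNat p N) * B := by
  have hfl : ((p:ℝ)⁻¹) ^ (padicValNat p N) ≤ v ((N : ℕ):K) := v_nat_lower v hp hna hvp hN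
  have hfp : (0:ℝ) < ((p:ℝ)⁻¹) ^ (padicValNat p N) := by
    have : (0:ℝ) < (p:ℝ) := by exact_mod_cast hp.pos
    positivity
  have h3 : v z * ((p:ℝ)⁻¹) ^ (padicValNat p N) ≤ B := by
    calc v z * ((p:ℝ)⁻¹) ^ (padicValNat p N) ≤ v z * v ((N:ℕ):K) :=
          mul_le_mul_of_nonneg_left hfl (v.nonneg _)
      _ = v (((N : ℕ) : K) * z) := by rw [v.map_mul]; ring
      _ ≤ B := h
  have h4 : v z ≤ B / ((p:ℝ)⁻¹) ^ (padicValNat p N) := (le_div_iff₀ hfp).mpr h3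
  calc v z ≤ B / ((p:ℝ)⁻¹) ^ (padicValNat p N) := h4
    _ = (p:ℝ) ^ (padicValNat p N) * B := by
        rw [div_eq_mul_inv, ← inv_pow, inv_inv]; ring

lemma choose_diff_v {i k k' M : ℕ} (h2 : 2*i ≤ k') (hkk' : k' ≤ k) (hdvd : p^M ∣ k - k') :
    v (((k-i).choose i : K) - ((k'-i).choose i : K)) ≤
      (p:ℝ) ^ (padicValNat p (Nat.factorial i)) * ((p:ℝ)⁻¹)^M := by
  have hdvdZ : (p:ℤ)^M ∣ (k:ℤ) - (k':ℤ) := by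
    obtain ⟨c, hc⟩ := hdvd
    refine ⟨(c:ℤ), ?_⟩
    have h' : (k:ℤ) - (k':ℤ) = ((k - k' : ℕ) : ℤ) := by
      rw [Nat.cast_sub hkk']
    rw [h', hc]; push_cast; ring
  have hD := desc_modeq (p:=p) h2 hkk' hdvdZ
  have key : ((Nat.factorial i : ℕ) : K) * (((k-i).choose i : K) - ((k'-i).choose i : K))
      = ((((((k-i).descFactorial i : ℕ) : ℤ) - ((((k'-i).descFactorial i : ℕ)) : ℤ)) : ℤ) : K) := by
    have e1 : (((k-i).descFactorial i : ℕ) : K) = ((Nat.factorial i : ℕ) : K) * ((k-i).choose i : K) := by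
      exact_mod_cast congrArg (Nat.cast (R := K)) (Nat.descFactorial_eq_factorial_mul_choose (k-i) i)
    have e2 : (((k'-i).descFactorial i : ℕ) : K) = ((Nat.factorial i : ℕ) : K) * ((k'-i).choose i : K) := by
      exact_mod_cast congrArg (Nat.cast (R := K)) (Nat.descFactorial_eq_factorial_mul_choose (k'-i) i)
    push_cast
    push_cast at e1 e2
    rw [mul_sub, ← e1, ← e2]
  have hvD : v (((Nat.factorial i : ℕ) : K) * (((k-i).choose i : K) - ((k'-i).choose i : K)))
      ≤ ((p:ℝ)⁻¹)^M := by
    rw [key]; exact v_int_upper v hp hna hvp hD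
  exact v_div_fact v hp hna hvp (by positivity) (Nat.factorial_ne_zero i) hvD

lemma dickson_v (hp5 : 5 ≤ p) {i k M : ℕ} (h2 : 2*(i+1) ≤ k) (hdvd : p^M ∣ k) :
    v ((((k-(i+1)).choose (i+1) : ℕ) : K) + (((k-1-(i+1)).choose i : ℕ) : K)) ≤
      (p:ℝ)^i * ((p:ℝ)⁻¹)^M := by
  have hI := I2 (i := i+1) (k := k) (by omega) h2
  rw [show (i+1) - 1 = i by omega] at hI
  have key : ((Nat.factorial (i+1) : ℕ) : K) *
      ((((k-(i+1)).choose (i+1) : ℕ) : K) + (((k-1-(i+1)).choose i : ℕ) : K))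
      = ((k : ℕ) : K) * (((k-1-(i+1)).descFactorial i : ℕ) : K) := by
    exact_mod_cast congrArg (Nat.cast (R := K)) hI
  have hvK : v (((Nat.factorial (i+1) : ℕ) : K) *
      ((((k-(i+1)).choose (i+1) : ℕ) : K) + (((k-1-(i+1)).choose i : ℕ) : K))) ≤ ((p:ℝ)⁻¹)^M := by
    rw [key, v.map_mul]
    have hb1 : v ((k:ℕ):K) ≤ ((p:ℝ)⁻¹)^M := v_nat_upper v hp hna hvp hdvd
    have hb2 : v ((((k-1-(i+1)).descFactorial i : ℕ)) : K) ≤ 1 := v_nat_le_one v hna _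
    calc v ((k:ℕ):K) * v ((((k-1-(i+1)).descFactorial i : ℕ)) : K) ≤ ((p:ℝ)⁻¹)^M * 1 := by
          apply mul_le_mul hb1 hb2 (v.nonneg _) (by positivity)
      _ = ((p:ℝ)⁻¹)^M := by ring
  have := v_div_fact v hp hna hvp (by positivity) (Nat.factorial_ne_zero (i+1)) hvK
  calc v ((((k-(i+1)).choose (i+1) : ℕ) : K) + (((k-1-(i+1)).choose i : ℕ) : K))
      ≤ (p:ℝ) ^ (padicValNat p (Nat.factorial (i+1))) * ((p:ℝ)⁻¹)^M := this
    _ ≤ (p:ℝ)^i * ((p:ℝ)⁻¹)^M := by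
        apply mul_le_mul_of_nonneg_right _ (by positivity)
        apply pow_le_pow_right₀ (by exact_mod_cast hp.one_lt.le) (pv_fact_le hp5 i)

lemma v_choose_succ {e M j : ℕ} (hj : j < e) (hdvd : p ^ M ∣ e) :
    v ((e.choose (j+1) : ℕ) : K) ≤ ((p:ℝ)⁻¹)^M * ((j:ℝ)+1) := by
  obtain ⟨e', rfl⟩ : ∃ e', e = e' + 1 := ⟨e-1, by omega⟩
  have hid : (e'+1) * (e'.choose j) = (e'+1).choose (j+1) * (j+1) := Nat.add_one_mul_choose_eq e' j
  have hK : (((e'+1 : ℕ)):K) * ((e'.choose j : ℕ):K) = (((e'+1).choose (j+1) : ℕ):K) * (((j+1 : ℕ)):K) := by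
    exact_mod_cast congrArg (Nat.cast (R := K)) hid
  have hv : v (((e'+1 : ℕ)):K) * v ((e'.choose j : ℕ):K)
      = v (((e'+1).choose (j+1) : ℕ):K) * v (((j+1 : ℕ)):K) := by
    rw [← v.map_mul, ← v.map_mul, hK]
  have hb1 : v (((e'+1 : ℕ)):K) ≤ ((p:ℝ)⁻¹)^M := v_nat_upper v hp hna hvp hdvd
  have hb2 : v ((e'.choose j : ℕ):K) ≤ 1 := v_nat_le_one v hna _
  have hb3 : ((j:ℝ)+1)⁻¹ ≤ v (((j+1 : ℕ)):K) := by
    have hl : ((p:ℝ)⁻¹) ^ (padicValNat p (j+1)) ≤ v (((j+1:ℕ)):K) :=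
      v_nat_lower v hp hna hvp (by omega)
    have hdl : p ^ (padicValNat p (j+1)) ≤ j+1 := Nat.le_of_dvd (by omega) pow_padicValNat_dvd
    have hdlR : (p:ℝ) ^ (padicValNat p (j+1)) ≤ (j:ℝ)+1 := by exact_mod_cast hdl
    have hpos : (0:ℝ) < (p:ℝ) ^ (padicValNat p (j+1)) := by
      have : (0:ℝ) < (p:ℝ) := by exact_mod_cast hp.pos
      positivity
    calc ((j:ℝ)+1)⁻¹ ≤ ((p:ℝ) ^ (padicValNat p (j+1)))⁻¹ := by
          apply inv_anti₀ hpos hdlR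
      _ = ((p:ℝ)⁻¹) ^ (padicValNat p (j+1)) := by rw [← inv_pow]
      _ ≤ v (((j+1:ℕ)):K) := hl
  -- combine
  have hstep : v (((e'+1).choose (j+1) : ℕ):K) * ((j:ℝ)+1)⁻¹ ≤ ((p:ℝ)⁻¹)^M := by
    calc v (((e'+1).choose (j+1) : ℕ):K) * ((j:ℝ)+1)⁻¹
        ≤ v (((e'+1).choose (j+1) : ℕ):K) * v (((j+1 : ℕ)):K) :=
          mul_le_mul_of_nonneg_left hb3 (v.nonneg _)
      _ = v (((e'+1 : ℕ)):K) * v ((e'.choose j : ℕ):K) := hv.symm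
      _ ≤ ((p:ℝ)⁻¹)^M * 1 := mul_le_mul hb1 hb2 (v.nonneg _) (by positivity)
      _ = ((p:ℝ)⁻¹)^M := by ring
  have hjpos : (0:ℝ) < ((j:ℝ)+1)⁻¹ := by positivity
  have := (le_div_iff₀ hjpos).mpr hstep
  calc v (((e'+1).choose (j+1) : ℕ):K) ≤ ((p:ℝ)⁻¹)^M / ((j:ℝ)+1)⁻¹ := this
    _ = ((p:ℝ)⁻¹)^M * ((j:ℝ)+1) := by rw [div_eq_mul_inv, inv_inv]

end part3


section part4
variable [CharZero K] [Fact p.Prime]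

omit hp hna hvp

lemma v_mul_le (a b : K) {A B : ℝ} (ha : v a ≤ A) (hb : v b ≤ B) (hA : 0 ≤ A) :
    v (a * b) ≤ A * B := by
  rw [v.map_mul]
  exact mul_le_mul ha hb (v.nonneg b) hA

lemma v_neg_one_pow (i : ℕ) : v ((-1:K)^i) = 1 := by
  rw [map_pow, v.map_neg, v.map_one, one_pow]

include hna

lemma v_x_le_one {x : K} {ρ : ℝ} (hx1 : v (x - 1) ≤ ρ) (hρ1 : ρ ≤ 1) : v x ≤ 1 := by
  have h := hna (x - 1) 1
  rw [sub_add_cancel] at h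
  exact le_trans h (max_le (le_trans hx1 hρ1) (by simp))

include hp hvp

lemma E1 {x : K} {ρ Mρ : ℝ} (hx1 : v (x - 1) ≤ ρ) (hρ0 : 0 ≤ ρ)
    (hMρ : ∀ j : ℕ, ((j:ℝ)) * ρ^j ≤ Mρ) (e M : ℕ) (hdvd : p ^ M ∣ e) :
    v (x^e - 1) ≤ ((p:ℝ)⁻¹)^M * Mρ := by
  have hM0 : 0 ≤ Mρ := by have := hMρ 1; push_cast at this; nlinarith
  have hB0 : (0:ℝ) ≤ ((p:ℝ)⁻¹)^M * Mρ := by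
    have : (0:ℝ) < (p:ℝ) := by exact_mod_cast hp.pos
    positivity
  have hxe : x^e - 1 = ∑ j ∈ Finset.range e, (x-1)^(j+1) * ((e.choose (j+1) : ℕ) : K) := by
    have hap := add_pow (x-1) 1 e
    rw [sub_add_cancel] at hap
    rw [hap, Finset.sum_range_succ']
    simp only [pow_zero, one_pow, Nat.choose_zero_right, Nat.cast_one, mul_one, one_mul]
    rw [add_sub_cancel_right]
  rw [hxe]
  apply v_sum_le v hna _ _ hB0
  intro j hj
  have hj' : j < e := Finset.mem_range.mp hj
  have hch : v ((e.choose (j+1) : ℕ) : K) ≤ ((p:ℝ)⁻¹)^M * ((j:ℝ)+1) :=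
    v_choose_succ v hp hna hvp hj' hdvd
  have hpow : v ((x-1)^(j+1)) ≤ ρ^(j+1) := by
    rw [map_pow]
    exact pow_le_pow_left₀ (v.nonneg _) hx1 _
  calc v ((x-1)^(j+1) * ((e.choose (j+1) : ℕ) : K)) ≤ ρ^(j+1) * (((p:ℝ)⁻¹)^M * ((j:ℝ)+1)) :=
        v_mul_le v _ _ hpow hch (by positivity)
    _ = ((p:ℝ)⁻¹)^M * (((j:ℝ)+1) * ρ^(j+1)) := by ring
    _ ≤ ((p:ℝ)⁻¹)^M * Mρ := by
        apply mul_le_mul_of_nonneg_left _ (by positivity)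
        have := hMρ (j+1); push_cast at this ⊢; linarith

lemma E2 {x y : K} {ρ Mρ : ℝ} (hx1 : v (x - 1) ≤ ρ) (hρ0 : 0 ≤ ρ) (hρ1 : ρ ≤ 1)
    (hy : v y ≤ (p:ℝ)⁻¹) (hMρ : ∀ j : ℕ, ((j:ℝ)) * ρ^j ≤ Mρ) (hM1 : 1 ≤ Mρ)
    (hp5 : 5 ≤ p) (k k' M : ℕ) (hkk' : k' ≤ k) (hMk : M ≤ k'/2) (hdvd : p ^ M ∣ k - k') :
    v (UU x y k - UU x y k') ≤ ((p:ℝ)⁻¹)^M * Mρ := by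
  have hppos : (0:ℝ) < (p:ℝ) := by exact_mod_cast hp.pos
  have hp1R : (1:ℝ) ≤ (p:ℝ) := by exact_mod_cast hp.one_lt.le
  have hpb0 : (0:ℝ) ≤ (p:ℝ)⁻¹ := by positivity
  have hpb1 : (p:ℝ)⁻¹ ≤ 1 := by
    rw [inv_le_one_iff₀]; right; exact hp1R
  have hM0 : 0 ≤ Mρ := le_trans zero_le_one hM1
  have hB0 : (0:ℝ) ≤ ((p:ℝ)⁻¹)^M * Mρ := by positivity
  have hx : v x ≤ 1 := v_x_le_one v hna hx1 hρ1
  have hy1 : v y ≤ 1 := le_trans hy hpb1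
  have hle : k'/2 + 1 ≤ k/2 + 1 := by
    have : k'/2 ≤ k/2 := Nat.div_le_div_right hkk'
    omega
  have hsplit := Finset.sum_range_add_sum_Ico
    (fun i => (-1:K)^i * ((k-i).choose i : K) * x^(k-2*i) * y^i) hle
  have key : UU x y k - UU x y k' =
      (∑ i ∈ Finset.range (k'/2+1),
        ((-1:K)^i * ((k-i).choose i : K) * x^(k-2*i) * y^i
          - (-1:K)^i * ((k'-i).choose i : K) * x^(k'-2*i) * y^i))
      + ∑ i ∈ Finset.Ico (k'/2+1) (k/2+1),
          (-1:K)^i * ((k-i).choose i : K) * x^(k-2*i) * y^i := by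
    rw [UU_def x y k, UU_def x y k', ← hsplit, Finset.sum_sub_distrib]
    ring
  rw [key]
  refine le_trans (hna _ _) (max_le ?_ ?_)
  · -- paired terms
    apply v_sum_le v hna _ _ hB0
    intro i hi
    have hi' : i ≤ k'/2 := by have := Finset.mem_range.mp hi; omega
    have h2i : 2*i ≤ k' := by
      have := Nat.div_mul_le_self k' 2
      omega
    have hxp : x^(k-2*i) = x^(k'-2*i) * x^(k-k') := by
      rw [← pow_add]; congr 1; omega
    have halg : (-1:K)^i * ((k-i).choose i : K) * x^(k-2*i) * y^i
          - (-1:K)^i * ((k'-i).choose i : K) * x^(k'-2*i) * y^i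
        = ((-1:K)^i * y^i) * (x^(k'-2*i) *
            (((k-i).choose i : K) * (x^(k-k') - 1)
              + (((k-i).choose i : K) - ((k'-i).choose i : K)))) := by
      rw [hxp]; ring
    rw [halg]
    have hinner : v (((k-i).choose i : K) * (x^(k-k') - 1)
        + (((k-i).choose i : K) - ((k'-i).choose i : K)))
        ≤ max (((p:ℝ)⁻¹)^M * Mρ) ((p:ℝ) ^ (padicValNat p (Nat.factorial i)) * ((p:ℝ)⁻¹)^M) := by
      refine le_trans (hna _ _) (max_le_max ?_ ?_)
      · calc v (((k-i).choose i : K) * (x^(k-k') - 1))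
            ≤ 1 * (((p:ℝ)⁻¹)^M * Mρ) := by
              apply v_mul_le v _ _ (v_nat_le_one v hna _) _ zero_le_one
              exact E1 v hp hna hvp hx1 hρ0 hMρ (k-k') M hdvd
          _ = ((p:ℝ)⁻¹)^M * Mρ := by ring
      · exact choose_diff_v v hp hna hvp h2i hkk' hdvd
    -- now multiply by the outer factors
    have houter : v (((-1:K)^i * y^i)) ≤ ((p:ℝ)⁻¹)^i := by
      calc v ((-1:K)^i * y^i) = v ((-1:K)^i) * v (y^i) := v.map_mul _ _
        _ = v (y^i) := by rw [v_neg_one_pow]; ring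
        _ ≤ ((p:ℝ)⁻¹)^i := by rw [map_pow]; exact pow_le_pow_left₀ (v.nonneg _) hy _
    have hxin : v (x^(k'-2*i)) ≤ 1 := by
      rw [map_pow]; exact pow_le_one₀ (v.nonneg _) hx
    have hmax0 : (0:ℝ) ≤ max (((p:ℝ)⁻¹)^M * Mρ) ((p:ℝ) ^ (padicValNat p (Nat.factorial i)) * ((p:ℝ)⁻¹)^M) := by
      apply le_trans hB0 (le_max_left _ _)
    have hfull : v (((-1:K)^i * y^i) * (x^(k'-2*i) * (((k-i).choose i : K) * (x^(k-k') - 1)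
        + (((k-i).choose i : K) - ((k'-i).choose i : K)))))
        ≤ ((p:ℝ)⁻¹)^i * (1 * max (((p:ℝ)⁻¹)^M * Mρ) ((p:ℝ) ^ (padicValNat p (Nat.factorial i)) * ((p:ℝ)⁻¹)^M)) := by
      apply v_mul_le v _ _ houter _ (by positivity)
      exact v_mul_le v _ _ hxin hinner zero_le_one
    refine le_trans hfull ?_
    rw [one_mul]
    -- case split on i
    rcases Nat.eq_zero_or_pos i with hi0 | hipos
    · subst hi0
      simp only [pow_zero, one_mul, Nat.factorial_zero, padicValNat.one]
      apply max_le le_rfl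
      calc ((p:ℝ)⁻¹)^M = ((p:ℝ)⁻¹)^M * 1 := by ring
        _ ≤ ((p:ℝ)⁻¹)^M * Mρ := mul_le_mul_of_nonneg_left hM1 (by positivity)
    · obtain ⟨i', rfl⟩ : ∃ i', i = i' + 1 := ⟨i-1, by omega⟩
      have hpv : padicValNat p (Nat.factorial (i'+1)) ≤ i' := pv_fact_le hp5 i'
      have hkey : ((p:ℝ)⁻¹)^(i'+1) * ((p:ℝ)^(i') * ((p:ℝ)⁻¹)^M) = (p:ℝ)⁻¹ * ((p:ℝ)⁻¹)^M := by
        have h1 : ((p:ℝ)⁻¹)^(i') * (p:ℝ)^(i') = 1 := by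
          rw [← mul_pow, inv_mul_cancel₀ hppos.ne']; simp
        calc ((p:ℝ)⁻¹)^(i'+1) * ((p:ℝ)^(i') * ((p:ℝ)⁻¹)^M)
            = (((p:ℝ)⁻¹)^(i') * (p:ℝ)^(i')) * ((p:ℝ)⁻¹ * ((p:ℝ)⁻¹)^M) := by ring
          _ = (p:ℝ)⁻¹ * ((p:ℝ)⁻¹)^M := by rw [h1]; ring
      have hib : ((p:ℝ)⁻¹)^(i'+1) ≤ 1 := pow_le_one₀ hpb0 hpb1
      apply le_trans (mul_le_mul_of_nonneg_left (max_le_max (le_refl (((p:ℝ)⁻¹)^M * Mρ))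
        (mul_le_mul_of_nonneg_right (pow_le_pow_right₀ hp1R hpv) (by positivity))) (by positivity))
      rw [mul_max_of_nonneg _ _ (by positivity : (0:ℝ) ≤ ((p:ℝ)⁻¹)^(i'+1))]
      apply max_le
      · calc ((p:ℝ)⁻¹)^(i'+1) * (((p:ℝ)⁻¹)^M * Mρ) ≤ 1 * (((p:ℝ)⁻¹)^M * Mρ) :=
            mul_le_mul_of_nonneg_right hib (by positivity)
          _ = ((p:ℝ)⁻¹)^M * Mρ := by ring
      · rw [hkey]
        calc (p:ℝ)⁻¹ * ((p:ℝ)⁻¹)^M ≤ 1 * ((p:ℝ)⁻¹)^M :=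
            mul_le_mul_of_nonneg_right hpb1 (by positivity)
          _ = ((p:ℝ)⁻¹)^M * 1 := by ring
          _ ≤ ((p:ℝ)⁻¹)^M * Mρ := mul_le_mul_of_nonneg_left hM1 (by positivity)
  · -- extra terms
    apply v_sum_le v hna _ _ hB0
    intro i hi
    have hi' : k'/2 + 1 ≤ i := (Finset.mem_Ico.mp hi).1
    have hMi : M ≤ i := by omega
    have h1 : v ((-1:K)^i * ((k-i).choose i : K) * x^(k-2*i) * y^i) ≤ ((p:ℝ)⁻¹)^i := by
      calc v ((-1:K)^i * ((k-i).choose i : K) * x^(k-2*i) * y^i)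
          ≤ (1 * 1 * 1) * ((p:ℝ)⁻¹)^i := by
            apply v_mul_le v _ _ _ _ (by norm_num)
            · apply v_mul_le v _ _ _ _ (by norm_num)
              · apply v_mul_le v _ _ (le_of_eq (v_neg_one_pow v _)) (v_nat_le_one v hna _) zero_le_one
              · rw [map_pow]; exact pow_le_one₀ (v.nonneg _) hx
            · rw [map_pow]; exact pow_le_pow_left₀ (v.nonneg _) hy _
        _ = ((p:ℝ)⁻¹)^i := by ring
    refine le_trans h1 ?_
    calc ((p:ℝ)⁻¹)^i ≤ ((p:ℝ)⁻¹)^M := pow_le_pow_of_le_one hpb0 hpb1 hMi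
      _ = ((p:ℝ)⁻¹)^M * 1 := by ring
      _ ≤ ((p:ℝ)⁻¹)^M * Mρ := mul_le_mul_of_nonneg_left hM1 (by positivity)


lemma E3 {x y : K} {ρ Mρ : ℝ} (hx1 : v (x - 1) ≤ ρ) (hρ0 : 0 ≤ ρ) (hρ1 : ρ ≤ 1)
    (hy : v y ≤ (p:ℝ)⁻¹) (hMρ : ∀ j : ℕ, ((j:ℝ)) * ρ^j ≤ Mρ) (hM1 : 1 ≤ Mρ)
    (hp5 : 5 ≤ p) (k M : ℕ) (hk : 4 ≤ k) (hdvd : p ^ M ∣ k) :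
    v (UU x y k - y * UU x y (k-2) - 1) ≤ ((p:ℝ)⁻¹)^M * Mρ := by
  have hppos : (0:ℝ) < (p:ℝ) := by exact_mod_cast hp.pos
  have hp1R : (1:ℝ) ≤ (p:ℝ) := by exact_mod_cast hp.one_lt.le
  have hpb0 : (0:ℝ) ≤ (p:ℝ)⁻¹ := by positivity
  have hpb1 : (p:ℝ)⁻¹ ≤ 1 := by
    rw [inv_le_one_iff₀]; right; exact hp1R
  have hM0 : 0 ≤ Mρ := le_trans zero_le_one hM1
  have hB0 : (0:ℝ) ≤ ((p:ℝ)⁻¹)^M * Mρ := by positivity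
  have hx : v x ≤ 1 := v_x_le_one v hna hx1 hρ1
  have hy1 : v y ≤ 1 := le_trans hy hpb1
  have hhalf : (k-2)/2 + 1 = k/2 := by omega
  have e0 : UU x y k = (∑ i ∈ Finset.range (k/2),
      (-1:K)^(i+1) * ((k-(i+1)).choose (i+1) : K) * x^(k-2*(i+1)) * y^(i+1)) + x^k := by
    rw [UU_def, Finset.sum_range_succ']
    congr 1
    simp
  have e1 : y * UU x y (k-2) = ∑ i ∈ Finset.range (k/2),
      y * ((-1:K)^i * ((k-2-i).choose i : K) * x^(k-2-2*i) * y^i) := by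
    rw [UU_def, hhalf, Finset.mul_sum]
  have key : UU x y k - y * UU x y (k-2) - 1 = (x^k - 1) +
      ∑ i ∈ Finset.range (k/2),
        ((-1:K)^(i+1) * ((k-(i+1)).choose (i+1) : K) * x^(k-2*(i+1)) * y^(i+1)
          - y * ((-1:K)^i * ((k-2-i).choose i : K) * x^(k-2-2*i) * y^i)) := by
    rw [e0, e1, Finset.sum_sub_distrib]
    ring
  rw [key]
  rw [add_comm]
  refine le_trans (hna _ _) (max_le ?_ (E1 v hp hna hvp hx1 hρ0 hMρ k M hdvd))
  apply v_sum_le v hna _ _ hB0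
  intro i hi
  have hik : i < k/2 := Finset.mem_range.mp hi
  have h2i : 2*(i+1) ≤ k := by
    have := Nat.div_mul_le_self k 2
    omega
  have hexp : k - 2 - 2*i = k - 2*(i+1) := by omega
  have hexp2 : k - 2 - i = k - 1 - (i+1) := by omega
  have halg : (-1:K)^(i+1) * ((k-(i+1)).choose (i+1) : K) * x^(k-2*(i+1)) * y^(i+1)
      - y * ((-1:K)^i * ((k-2-i).choose i : K) * x^(k-2-2*i) * y^i)
      = ((-1:K)^(i+1) * y^(i+1)) * (x^(k-2*(i+1)) *
          (((k-(i+1)).choose (i+1) : K) + ((k-1-(i+1)).choose i : K))) := by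
    rw [hexp, hexp2, pow_succ (-1:K) i, pow_succ y i]
    ring
  rw [halg]
  have hcoef : v (((k-(i+1)).choose (i+1) : K) + ((k-1-(i+1)).choose i : K))
      ≤ (p:ℝ)^i * ((p:ℝ)⁻¹)^M := dickson_v v hp hna hvp hp5 h2i hdvd
  have houter : v ((-1:K)^(i+1) * y^(i+1)) ≤ ((p:ℝ)⁻¹)^(i+1) := by
    calc v ((-1:K)^(i+1) * y^(i+1)) = v (y^(i+1)) := by rw [v.map_mul, v_neg_one_pow]; ring
      _ ≤ ((p:ℝ)⁻¹)^(i+1) := by rw [map_pow]; exact pow_le_pow_left₀ (v.nonneg _) hy _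
  have hxin : v (x^(k-2*(i+1))) ≤ 1 := by
    rw [map_pow]; exact pow_le_one₀ (v.nonneg _) hx
  have hfull : v (((-1:K)^(i+1) * y^(i+1)) * (x^(k-2*(i+1)) *
          (((k-(i+1)).choose (i+1) : K) + ((k-1-(i+1)).choose i : K))))
      ≤ ((p:ℝ)⁻¹)^(i+1) * (1 * ((p:ℝ)^i * ((p:ℝ)⁻¹)^M)) := by
    apply v_mul_le v _ _ houter _ (by positivity)
    exact v_mul_le v _ _ hxin hcoef zero_le_one
  refine le_trans hfull ?_
  have hkey : ((p:ℝ)⁻¹)^(i+1) * (1 * ((p:ℝ)^i * ((p:ℝ)⁻¹)^M)) = (p:ℝ)⁻¹ * ((p:ℝ)⁻¹)^M := by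
    have h1 : ((p:ℝ)⁻¹)^i * (p:ℝ)^i = 1 := by
      rw [← mul_pow, inv_mul_cancel₀ hppos.ne']; simp
    calc ((p:ℝ)⁻¹)^(i+1) * (1 * ((p:ℝ)^i * ((p:ℝ)⁻¹)^M))
        = (((p:ℝ)⁻¹)^i * (p:ℝ)^i) * ((p:ℝ)⁻¹ * ((p:ℝ)⁻¹)^M) := by ring
      _ = (p:ℝ)⁻¹ * ((p:ℝ)⁻¹)^M := by rw [h1]; ring
  rw [hkey]
  calc (p:ℝ)⁻¹ * ((p:ℝ)⁻¹)^M ≤ 1 * ((p:ℝ)⁻¹)^M := mul_le_mul_of_nonneg_right hpb1 (by positivity)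
    _ = ((p:ℝ)⁻¹)^M * 1 := by ring
    _ ≤ ((p:ℝ)⁻¹)^M * Mρ := mul_le_mul_of_nonneg_left hM1 (by positivity)

end part4

section part6
omit hp hna hvp

def VT (s : ℕ → K) (L : K) : Prop :=
  ∀ ε : ℝ, 0 < ε → ∃ N : ℕ, ∀ n ≥ N, v (s n - L) < ε

lemma vt_congr {s t : ℕ → K} {L : K} (h : ∀ n, s n = t n) (hs : VT v s L) : VT v t L := by
  intro ε hε
  obtain ⟨N, hN⟩ := hs ε hε
  exact ⟨N, fun n hn => by rw [← h n]; exact hN n hn⟩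

lemma vt_const (L : K) : VT v (fun _ => L) L := by
  intro ε hε
  exact ⟨0, fun n _ => by simpa using hε⟩

lemma vt_add {s t : ℕ → K} {L M : K} (hs : VT v s L) (ht : VT v t M) :
    VT v (fun n => s n + t n) (L + M) := by
  intro ε hε
  obtain ⟨N1, hN1⟩ := hs (ε/2) (by linarith)
  obtain ⟨N2, hN2⟩ := ht (ε/2) (by linarith)
  refine ⟨max N1 N2, fun n hn => ?_⟩
  have h1 := hN1 n (le_trans (le_max_left _ _) hn)
  have h2 := hN2 n (le_trans (le_max_right _ _) hn)
  have e : s n + t n - (L + M) = (s n - L) + (t n - M) := by ring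
  rw [e]
  calc v ((s n - L) + (t n - M)) ≤ v (s n - L) + v (t n - M) := v.add_le _ _
    _ < ε := by linarith

lemma vt_const_mul {s : ℕ → K} {L : K} (c : K) (hs : VT v s L) :
    VT v (fun n => c * s n) (c * L) := by
  intro ε hε
  obtain ⟨N, hN⟩ := hs (ε / (v c + 1)) (by positivity)
  refine ⟨N, fun n hn => ?_⟩
  have h1 := hN n hn
  have e : c * s n - c * L = c * (s n - L) := by ring
  rw [e, v.map_mul]
  have hc0 : 0 ≤ v c := v.nonneg c
  have hc1 : v c < v c + 1 := by linarith
  calc v c * v (s n - L) ≤ v c * (ε / (v c + 1)) :=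
        mul_le_mul_of_nonneg_left (le_of_lt h1) hc0
    _ < ε := by
        have h2 : (0:ℝ) < v c + 1 := by linarith
        rw [mul_div_assoc']
        rw [div_lt_iff₀ h2]
        nlinarith

lemma vt_mul {s t : ℕ → K} {L M : K} (hs : VT v s L) (ht : VT v t M) :
    VT v (fun n => s n * t n) (L * M) := by
  intro ε hε
  set a := v L with ha
  set b := v M with hb
  have ha0 : 0 ≤ a := v.nonneg L
  have hb0 : 0 ≤ b := v.nonneg M
  set δ := min 1 (ε / (a + b + 2)) with hδ
  have hδpos : 0 < δ := by
    apply lt_min one_pos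
    positivity
  have hδ1 : δ ≤ 1 := min_le_left _ _
  have hδ2 : δ ≤ ε / (a + b + 2) := min_le_right _ _
  obtain ⟨N1, hN1⟩ := hs δ hδpos
  obtain ⟨N2, hN2⟩ := ht δ hδpos
  refine ⟨max N1 N2, fun n hn => ?_⟩
  have h1 := hN1 n (le_trans (le_max_left _ _) hn)
  have h2 := hN2 n (le_trans (le_max_right _ _) hn)
  have e : s n * t n - L * M = s n * (t n - M) + (s n - L) * M := by ring
  have hsn : v (s n) ≤ a + 1 := by
    have e2 : s n = L + (s n - L) := by ring
    rw [e2]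
    calc v (L + (s n - L)) ≤ v L + v (s n - L) := v.add_le _ _
      _ ≤ a + 1 := by
          have := le_trans (le_of_lt h1) hδ1
          linarith
  have hstep : v (s n * t n - L * M) ≤ v (s n) * v (t n - M) + v (s n - L) * b := by
    rw [e]
    refine le_trans (v.add_le _ _) ?_
    rw [v.map_mul, v.map_mul]
  have hbound : v (s n) * v (t n - M) + v (s n - L) * b ≤ (a+1) * δ + δ * b := by
    have t1 : v (s n) * v (t n - M) ≤ (a+1) * δ :=
      mul_le_mul hsn (le_of_lt h2) (v.nonneg _) (by linarith)
    have t2 : v (s n - L) * b ≤ δ * b :=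
      mul_le_mul_of_nonneg_right (le_of_lt h1) hb0
    linarith
  have hfinal : (a+1) * δ + δ * b < ε := by
    have hd : δ * (a + b + 2) ≤ ε := by
      have hpos : (0:ℝ) < a + b + 2 := by linarith
      calc δ * (a + b + 2) ≤ (ε / (a + b + 2)) * (a + b + 2) :=
            mul_le_mul_of_nonneg_right hδ2 (by linarith)
        _ = ε := by field_simp
    nlinarith
  calc v (s n * t n - L * M) ≤ (a+1) * δ + δ * b := le_trans hstep hbound
    _ < ε := hfinal

lemma vt_neg {s : ℕ → K} {L : K} (hs : VT v s L) : VT v (fun n => - s n) (-L) := by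
  intro ε hε
  obtain ⟨N, hN⟩ := hs ε hε
  refine ⟨N, fun n hn => ?_⟩
  have e : -s n - (-L) = -(s n - L) := by ring
  rw [e, v.map_neg]
  exact hN n hn

lemma vt_sub {s t : ℕ → K} {L M : K} (hs : VT v s L) (ht : VT v t M) :
    VT v (fun n => s n - t n) (L - M) := by
  intro ε hε
  obtain ⟨N, hN⟩ := (vt_add v hs (vt_neg v ht)) ε hε
  refine ⟨N, fun n hn => ?_⟩
  have h2 := hN n hn
  simpa [sub_eq_add_neg] using h2

lemma vt_sum {ι : Type*} (u : Finset ι) (f : ι → ℕ → K) (L : ι → K)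
    (h : ∀ i ∈ u, VT v (f i) (L i)) :
    VT v (fun n => ∑ i ∈ u, f i n) (∑ i ∈ u, L i) := by
  classical
  induction u using Finset.induction_on with
  | empty => simpa using vt_const v 0
  | insert _ _ hni ih =>
    rename_i j u
    rw [Finset.sum_insert hni]
    have := vt_add v (h j (Finset.mem_insert_self j u))
      (ih fun i hi => h i (Finset.mem_insert_of_mem hi))
    apply vt_congr v (fun n => ?_) this
    rw [Finset.sum_insert hni]

lemma vt_unique {s : ℕ → K} {L L' : K} (hs : VT v s L) (hs' : VT v s L') : L = L' := by
  by_contra hne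
  have hpos : 0 < v (L - L') := by
    rw [AbsoluteValue.pos_iff]
    exact sub_ne_zero_of_ne hne
  obtain ⟨N1, hN1⟩ := hs (v (L - L') / 2) (by linarith)
  obtain ⟨N2, hN2⟩ := hs' (v (L - L') / 2) (by linarith)
  set n := max N1 N2
  have h1 := hN1 n (le_max_left _ _)
  have h2 := hN2 n (le_max_right _ _)
  have e : L - L' = -(s n - L) + (s n - L') := by ring
  have : v (L - L') ≤ v (s n - L) + v (s n - L') := by
    rw [e]
    refine le_trans (v.add_le _ _) ?_
    rw [v.map_neg]
  linarith

lemma exists_lt_geom (C r ε : ℝ) (hr0 : 0 ≤ r) (hr1 : r < 1) (hε : 0 < ε) :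
    ∃ N : ℕ, ∀ n ≥ N, C * r^n < ε := by
  have h0 : Filter.Tendsto (fun n : ℕ => C * r^n) Filter.atTop (nhds 0) := by
    simpa using (tendsto_pow_atTop_nhds_zero_of_lt_one hr0 hr1).const_mul C
  exact Filter.eventually_atTop.mp (h0.eventually_lt_const hε)

lemma vt_of_bound {s : ℕ → K} {L : K} (C r : ℝ) (hr0 : 0 ≤ r) (hr1 : r < 1)
    (h : ∀ n, v (s n - L) ≤ C * r^n) : VT v s L := by
  intro ε hε
  obtain ⟨N, hN⟩ := exists_lt_geom C r ε hr0 hr1 hε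
  exact ⟨N, fun n hn => lt_of_le_of_lt (h n) (hN n hn)⟩

lemma cauchy_of_bound {s : ℕ → K} (C r : ℝ) (hC : 0 ≤ C) (hr0 : 0 ≤ r) (hr1 : r < 1)
    (h : ∀ n' n : ℕ, n' ≤ n → v (s n - s n') ≤ C * r^n') :
    ∀ ε : ℝ, 0 < ε → ∃ N : ℕ, ∀ m ≥ N, ∀ n ≥ N, v (s m - s n) < ε := by
  intro ε hε
  obtain ⟨N, hN⟩ := exists_lt_geom C r ε hr0 hr1 hε
  refine ⟨N, fun m hm n hn => ?_⟩
  have key : ∀ m' n' : ℕ, N ≤ m' → N ≤ n' → n' ≤ m' → v (s m' - s n') < ε := by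
    intro m' n' hm' hn' hle
    calc v (s m' - s n') ≤ C * r^n' := h n' m' hle
      _ ≤ C * r^N := by
          apply mul_le_mul_of_nonneg_left _ hC
          exact pow_le_pow_of_le_one hr0 (le_of_lt hr1) hn'
      _ < ε := hN N (le_refl N)
  rcases le_total n m with hc | hc
  · exact key m n hm hn hc
  · have := key n m hn hm hc
    have e : s m - s n = -(s n - s m) := by ring
    rw [e, v.map_neg]
    exact this

end part6

section part7

def Cm1 (C : ℕ → K) : ℕ → K
  | 0 => 0
  | (j+1) => C j

omit hp hna hvp

lemma telescope (C : ℕ → K) (lam : K) (j : ℕ) :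
    ∑ m ∈ Finset.range (j+1), lam^(m+1) * (C (j-m) - lam * Cm1 C (j-m)) = lam * C j := by
  induction j with
  | zero => simp [Cm1]
  | succ j ih =>
    rw [Finset.sum_range_succ']
    have h1 : ∀ m ∈ Finset.range (j+1), lam^(m+1+1) * (C (j+1-(m+1)) - lam * Cm1 C (j+1-(m+1)))
        = lam * (lam^(m+1) * (C (j-m) - lam * Cm1 C (j-m))) := by
      intro m hm
      have he : j+1-(m+1) = j-m := by omega
      rw [he]; ring
    rw [Finset.sum_congr rfl h1, ← Finset.mul_sum, ih]
    have h2 : Cm1 C (j+1) = C j := rfl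
    simp only [Nat.sub_zero, pow_one, h2]
    ring

lemma sum_phi_Cm1 (C φ : ℕ → K)
    (H : ∀ j : ℕ, ((j:K)+1) * C (j+1) = ∑ m ∈ Finset.range (j+1), φ m * C (j-m)) (j : ℕ) :
    ∑ m ∈ Finset.range (j+1), φ m * Cm1 C (j-m) = (j:K) * C j := by
  cases j with
  | zero => simp [Cm1]
  | succ j' =>
    rw [Finset.sum_range_succ]
    have h1 : ∀ m ∈ Finset.range (j'+1), φ m * Cm1 C (j'+1-m) = φ m * C (j'-m) := by
      intro m hm
      have hm' : m ≤ j' := by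
        have := Finset.mem_range.mp hm; omega
      have he : j'+1-m = (j'-m)+1 := by omega
      rw [he]
      rfl
    rw [Finset.sum_congr rfl h1, ← H j']
    have h2 : Cm1 C (j'+1-(j'+1)) = 0 := by
      have he : j'+1-(j'+1) = 0 := by omega
      rw [he]; rfl
    rw [h2]
    push_cast
    ring

lemma rec_transform (C φ : ℕ → K) (lam : K)
    (H : ∀ j : ℕ, ((j:K)+1) * C (j+1) = ∑ m ∈ Finset.range (j+1), φ m * C (j-m)) (j : ℕ) :
    ((j:K)+1) * (C (j+1) - lam * Cm1 C (j+1)) =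
      ∑ m ∈ Finset.range (j+1), (φ m - lam^(m+1)) * (C (j-m) - lam * Cm1 C (j-m)) := by
  have hT := telescope C lam j
  have hP : ∑ m ∈ Finset.range (j+1), φ m * (C (j-m) - lam * Cm1 C (j-m))
      = ((j:K)+1) * C (j+1) - lam * ((j:K) * C j) := by
    have h1 : ∀ m ∈ Finset.range (j+1), φ m * (C (j-m) - lam * Cm1 C (j-m))
        = φ m * C (j-m) - lam * (φ m * Cm1 C (j-m)) := by
      intro m hm; ring
    rw [Finset.sum_congr rfl h1, Finset.sum_sub_distrib, ← Finset.mul_sum, ← H j,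
      sum_phi_Cm1 C φ H j]
  have hsplit : ∑ m ∈ Finset.range (j+1), (φ m - lam^(m+1)) * (C (j-m) - lam * Cm1 C (j-m))
      = (∑ m ∈ Finset.range (j+1), φ m * (C (j-m) - lam * Cm1 C (j-m)))
        - (∑ m ∈ Finset.range (j+1), lam^(m+1) * (C (j-m) - lam * Cm1 C (j-m))) := by
    rw [← Finset.sum_sub_distrib]
    apply Finset.sum_congr rfl
    intro m hm; ring
  rw [hsplit, hP, hT]
  have h2 : Cm1 C (j+1) = C j := rfl
  rw [h2]
  ring

variable [CharZero K]

lemma rec_unique (D E τ : ℕ → K) (h0 : D 0 = E 0)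
    (hD : ∀ j : ℕ, ((j:K)+1) * D (j+1) = ∑ m ∈ Finset.range (j+1), τ m * D (j-m))
    (hE : ∀ j : ℕ, ((j:K)+1) * E (j+1) = ∑ m ∈ Finset.range (j+1), τ m * E (j-m)) :
    ∀ j, D j = E j := by
  intro j
  induction j using Nat.strong_induction_on with
  | _ j ih =>
    match j with
    | 0 => exact h0
    | (j+1) =>
      have hne : ((j:K)+1) ≠ 0 := Nat.cast_add_one_ne_zero j
      apply mul_left_cancel₀ hne
      rw [hD j, hE j]
      apply Finset.sum_congr rfl
      intro m hm
      rw [ih (j-m) (by omega)]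

end part7

section part8
variable [CharZero K] [Fact p.Prime]
omit hp hna hvp

lemma Mrho_exists {ρ : ℝ} (h0 : 0 ≤ ρ) (hlt : ρ < 1) :
    ∃ Mρ : ℝ, 1 ≤ Mρ ∧ ∀ j : ℕ, (j:ℝ) * ρ^j ≤ Mρ := by
  have hsum : Summable (fun j : ℕ => (j:ℝ)^(1:ℕ) * ρ^j) := by
    apply summable_pow_mul_geometric_of_norm_lt_one
    rw [Real.norm_eq_abs, abs_of_nonneg h0]
    exact hlt
  have htend : Filter.Tendsto (fun j : ℕ => (j:ℝ) * ρ^j) Filter.atTop (nhds 0) := by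
    simpa [pow_one] using hsum.tendsto_atTop_zero
  have hbdd := htend.bddAbove_range
  obtain ⟨M0, hM0⟩ := hbdd
  refine ⟨max 1 M0, le_max_left _ _, fun j => ?_⟩
  exact le_trans (hM0 ⟨j, rfl⟩) (le_max_right _ _)

include hp hna hvp

lemma psi_bound (ψ : AddChar (ZMod p) K) (z : ZMod p) : v (ψ z - 1) < 1 := by
  have hppos : (0:ℝ) < (p:ℝ) := by exact_mod_cast hp.pos
  have hp1R : (1:ℝ) < (p:ℝ) := by exact_mod_cast hp.one_lt
  have hpb1 : (p:ℝ)⁻¹ < 1 := by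
    rw [inv_lt_one_iff₀]; right; exact hp1R
  have h1 : ψ z ^ p = 1 := by
    rw [← AddChar.map_nsmul_eq_pow]
    have h0 : (p • z : ZMod p) = 0 := by
      rw [nsmul_eq_mul, ZMod.natCast_self, zero_mul]
    rw [h0, AddChar.map_zero_eq_one]
  have hvψ : v (ψ z) = 1 := by
    have h2 : v (ψ z) ^ p = 1 := by rw [← map_pow, h1, v.map_one]
    rcases lt_trichotomy (v (ψ z)) 1 with hlt | heq | hgt
    · exfalso
      have := pow_lt_one₀ (v.nonneg _) hlt hp.ne_zero
      rw [h2] at this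
      exact lt_irrefl 1 this
    · exact heq
    · exfalso
      have := one_lt_pow₀ hgt hp.ne_zero
      rw [h2] at this
      exact lt_irrefl 1 this
  have hu1 : v (ψ z - 1) ≤ 1 := by
    have h3 := v_sub_le_max v hna (ψ z) 1
    rw [hvψ, v.map_one] at h3
    simpa using h3
  by_cases hu0 : ψ z - 1 = 0
  · rw [hu0]; simpa using zero_lt_one
  · set u := ψ z - 1 with hu
    have hexp : (u + 1)^p = 1 := by rw [hu, sub_add_cancel]; exact h1
    have hsum0 : ∑ j ∈ Finset.range p, u^(j+1) * ((p.choose (j+1) : ℕ) : K) = 0 := by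
      have hap := add_pow u 1 p
      rw [hexp] at hap
      rw [Finset.sum_range_succ'] at hap
      simp only [one_pow, mul_one, pow_zero, Nat.choose_zero_right, Nat.cast_one] at hap
      linear_combination -hap
    obtain ⟨p', hp'⟩ : ∃ p', p = p' + 1 := ⟨p-1, by have := hp.two_le; omega⟩
    have hsum1 : u^p = - ∑ j ∈ Finset.range p', u^(j+1) * ((p.choose (j+1) : ℕ) : K) := by
      rw [hp'] at hsum0 ⊢
      rw [Finset.sum_range_succ, Nat.choose_self] at hsum0
      simp only [Nat.cast_one, mul_one] at hsum0
      linear_combination hsum0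
    have hvb : v u ^ p ≤ v u * (p:ℝ)⁻¹ := by
      have hmul : (0:ℝ) ≤ v u * (p:ℝ)⁻¹ := by
        have := v.nonneg u; positivity
      rw [← map_pow, hsum1, v.map_neg]
      apply v_sum_le v hna _ _ hmul
      intro j hj
      have hj' : j < p' := Finset.mem_range.mp hj
      have hdvd : p ∣ p.choose (j+1) := hp.dvd_choose_self (by omega) (by omega)
      have hC : v ((p.choose (j+1) : ℕ):K) ≤ (p:ℝ)⁻¹ := by
        have h4 := v_nat_upper v hp hna hvp (M := 1) (N := p.choose (j+1)) (by simpa using hdvd)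
        simpa using h4
      have hupow : v (u^(j+1)) ≤ v u := by
        rw [map_pow]
        calc v u ^ (j+1) ≤ v u ^ 1 := pow_le_pow_of_le_one (v.nonneg _) hu1 (by omega)
          _ = v u := pow_one _
      exact v_mul_le v _ _ hupow hC (v.nonneg _)
    by_contra hge
    push_neg at hge
    have hup : v u ≤ v u ^ p := by
      calc v u = v u ^ 1 := (pow_one _).symm
        _ ≤ v u ^ p := pow_le_pow_right₀ hge (by have := hp.two_le; omega)
    have hvpos : (0:ℝ) < v u := by linarith
    nlinarith

lemma rho_exists (ψ : AddChar (ZMod p) K) :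
    ∃ ρ : ℝ, (0 ≤ ρ ∧ (p:ℝ)⁻¹ ≤ ρ ∧ ρ < 1) ∧ ∀ z : ZMod p, v (ψ z - 1) ≤ ρ := by
  have hppos : (0:ℝ) < (p:ℝ) := by exact_mod_cast hp.pos
  have hp1R : (1:ℝ) < (p:ℝ) := by exact_mod_cast hp.one_lt
  have hpb1 : (p:ℝ)⁻¹ < 1 := by
    rw [inv_lt_one_iff₀]; right; exact hp1R
  haveI : NeZero p := ⟨hp.pos.ne'⟩
  have hne : (Finset.univ : Finset (ZMod p)).Nonempty := Finset.univ_nonempty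
  set ρ0 := Finset.univ.sup' hne (fun z : ZMod p => v (ψ z - 1)) with hρ0
  have hρ0lt : ρ0 < 1 := by
    rw [hρ0, Finset.sup'_lt_iff]
    intro z _
    exact psi_bound v hp hna hvp ψ z
  refine ⟨max ρ0 ((p:ℝ)⁻¹), ⟨?_, le_max_right _ _, max_lt hρ0lt hpb1⟩, fun z => ?_⟩
  · exact le_trans (by positivity) (le_max_right _ _)
  · exact le_trans (Finset.le_sup' (fun z : ZMod p => v (ψ z - 1)) (Finset.mem_univ z)) (le_max_left _ _)

end part8
end St4

open St4 in
/-- Let `p ≥ 5`. Then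
`(1 - qT) · L(Sym^{∞,0} Kl, T) = (1 - T) · L(Sym^{∞,-2} Kl, qT)` in `K[[T]]`;
explicitly, for every `j ≥ 0`:
`c_j^{(0)} - q c_{j-1}^{(0)} = q^j c_j^{(-2)} - q^{j-1} c_{j-1}^{(-2)}` (with `c_{-1} := 0`). -/
theorem statement4
    (p a q : ℕ) (hp : p.Prime) (hp5 : 5 ≤ p) (ha : 1 ≤ a) (hq : q = p ^ a)
    [Fact p.Prime]
    (K : Type*) [Field K] [CharZero K]
    (v : AbsoluteValue K ℝ)
    (hv_nonarch : ∀ x y : K, v (x + y) ≤ max (v x) (v y))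
    (hvp : v (p : K) = ((p : ℝ))⁻¹)
    (hcomplete : ∀ s : ℕ → K,
      (∀ ε : ℝ, 0 < ε → ∃ N : ℕ, ∀ m ≥ N, ∀ n ≥ N, v (s m - s n) < ε) →
      ∃ L : K, ∀ ε : ℝ, 0 < ε → ∃ N : ℕ, ∀ n ≥ N, v (s n - L) < ε)
    (F : ℕ → Type*) [∀ m, Field (F m)] [∀ m, Fintype (F m)] [∀ m, DecidableEq (F m)]
    [∀ m, Algebra (ZMod p) (F m)]
    (hcard : ∀ m : ℕ, 1 ≤ m → Fintype.card (F m) = q ^ m)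
    (ψ : AddChar (ZMod p) K) (hψ : ∃ z : ZMod p, ψ z ≠ 1)
    (Kl : (m : ℕ) → (F m)ˣ → K)
    (hKl : ∀ (m : ℕ) (t : (F m)ˣ), Kl m t =
      ∑ x : (F m)ˣ, ψ (Algebra.trace (ZMod p) (F m) ((x : F m) + (t : F m) * (x : F m)⁻¹)))
    (S : ℕ → ℕ → K)
    (hS : ∀ (m k : ℕ), S m k =
      ∑ t : (F m)ˣ, ∑ i ∈ Finset.range (k / 2 + 1),
        (-1 : K) ^ i * ((k - i).choose i : K) * (-(Kl m t)) ^ (k - 2 * i) * (q : K) ^ (m * i))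
    (c : ℕ → ℕ → K) (hc0 : ∀ k : ℕ, 1 ≤ k → c k 0 = 1)
    (hcrec : ∀ k : ℕ, 1 ≤ k → ∀ j : ℕ, ((j : K) + 1) * c k (j + 1) =
      ∑ m ∈ Finset.range (j + 1), S (m + 1) k * c k (j - m))
    -- c0 j = c_j^{(0)}: the limit coefficients for κ = 0 ∈ ℤ_p
    (c0 : ℕ → K)
    (hc0κ : ∀ kn : ℕ → ℕ, (∀ n, 1 ≤ kn n) →
      Filter.Tendsto (fun n => (kn n : ℝ)) Filter.atTop Filter.atTop →
      Filter.Tendsto (fun n => ((kn n : ℤ_[p]))) Filter.atTop (nhds (0 : ℤ_[p])) →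
      ∀ j : ℕ, ∀ ε : ℝ, 0 < ε → ∃ N : ℕ, ∀ n ≥ N, v (c (kn n) j - c0 j) < ε)
    -- cm2 j = c_j^{(-2)}: the limit coefficients for κ = -2 ∈ ℤ_p
    (cm2 : ℕ → K)
    (hcm2 : ∀ kn : ℕ → ℕ, (∀ n, 1 ≤ kn n) →
      Filter.Tendsto (fun n => (kn n : ℝ)) Filter.atTop Filter.atTop →
      Filter.Tendsto (fun n => ((kn n : ℤ_[p]))) Filter.atTop (nhds (-2 : ℤ_[p])) →
      ∀ j : ℕ, ∀ ε : ℝ, 0 < ε → ∃ N : ℕ, ∀ n ≥ N, v (c (kn n) j - cm2 j) < ε) :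
    c0 0 = cm2 0 ∧
    ∀ j : ℕ, c0 (j + 1) - (q : K) * c0 j =
      (q : K) ^ (j + 1) * cm2 (j + 1) - (q : K) ^ j * cm2 j := by
  classical
  have hppos : (0:ℝ) < (p:ℝ) := by exact_mod_cast hp.pos
  have hp1R : (1:ℝ) < (p:ℝ) := by exact_mod_cast hp.one_lt
  have hpb0 : (0:ℝ) ≤ (p:ℝ)⁻¹ := by positivity
  have hpb1 : (p:ℝ)⁻¹ < 1 := by rw [inv_lt_one_iff₀]; right; exact hp1R
  obtain ⟨ρ, ⟨hρ0, hρp, hρ1⟩, hρψ⟩ := St4.rho_exists v hp hv_nonarch hvp ψ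
  obtain ⟨Mρ, hM1, hMρ⟩ := St4.Mrho_exists hρ0 hρ1
  -- the approximating sequence
  set kn : ℕ → ℕ := fun n => 2 * p^(n+1) with hkndef
  have hkneq : ∀ n, kn n = 2 * p^(n+1) := fun n => rfl
  have hpn : ∀ n : ℕ, n < p ^ n := fun n => Nat.lt_pow_self (n := n) hp.one_lt
  have hp5n : ∀ n : ℕ, 5 ≤ p^(n+1) := by
    intro n
    calc 5 ≤ p := hp5
      _ = p^1 := (pow_one p).symm
      _ ≤ p^(n+1) := Nat.pow_le_pow_right (by omega) (by omega)
  have hkn1 : ∀ n, 1 ≤ kn n := by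
    intro n; rw [hkneq]; have := hp5n n; omega
  have hkn4 : ∀ n, 4 ≤ kn n := by
    intro n; rw [hkneq]; have := hp5n n; omega
  have hkn2_1 : ∀ n, 1 ≤ kn n - 2 := by
    intro n; have := hkn4 n; omega
  have hmono : ∀ n' n : ℕ, n' ≤ n → kn n' ≤ kn n := by
    intro n' n h; rw [hkneq, hkneq]
    have : p^(n'+1) ≤ p^(n+1) := Nat.pow_le_pow_right hp.pos (by omega)
    omega
  -- real divergence
  have hknR : Filter.Tendsto (fun n => ((kn n : ℕ) : ℝ)) Filter.atTop Filter.atTop := by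
    apply Filter.tendsto_atTop_mono _ tendsto_natCast_atTop_atTop
    intro n
    have h1 : n ≤ kn n := by
      have := hpn (n+1); rw [hkneq]; omega
    exact_mod_cast Nat.cast_le.mpr h1
  have hkn2R : Filter.Tendsto (fun n => ((kn n - 2 : ℕ) : ℝ)) Filter.atTop Filter.atTop := by
    apply Filter.tendsto_atTop_mono _ tendsto_natCast_atTop_atTop
    intro n
    have h1 : n ≤ kn n - 2 := by
      have := hpn (n+1); have := hp5n n; rw [hkneq]; omega
    exact_mod_cast Nat.cast_le.mpr h1
  -- p-adic convergence
  have hknZ : Filter.Tendsto (fun n => ((kn n : ℕ) : ℤ_[p])) Filter.atTop (nhds 0) := by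
    rw [tendsto_zero_iff_norm_tendsto_zero]
    have hgeom : Filter.Tendsto (fun n : ℕ => ((p:ℝ)⁻¹)^(n+1)) Filter.atTop (nhds 0) := by
      have h0 := (tendsto_pow_atTop_nhds_zero_of_lt_one hpb0 hpb1).comp
        (Filter.tendsto_add_atTop_nat 1)
      exact h0
    apply squeeze_zero (fun n => norm_nonneg _) _ hgeom
    intro n
    have hc : ((kn n : ℕ) : ℤ_[p]) = 2 * ((p:ℕ) : ℤ_[p])^(n+1) := by
      rw [hkneq]; push_cast; ring
    rw [hc]
    calc ‖(2 : ℤ_[p]) * ((p:ℕ) : ℤ_[p])^(n+1)‖ = ‖(2 : ℤ_[p])‖ * ‖((p:ℕ) : ℤ_[p])^(n+1)‖ :=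
          norm_mul _ _
      _ ≤ 1 * ‖((p:ℕ) : ℤ_[p])^(n+1)‖ := by
          apply mul_le_mul_of_nonneg_right (PadicInt.norm_le_one _) (norm_nonneg _)
      _ = ‖((p:ℕ) : ℤ_[p])‖^(n+1) := by rw [one_mul, norm_pow]
      _ = ((p:ℝ)⁻¹)^(n+1) := by rw [PadicInt.norm_p]
  have hkn2Z : Filter.Tendsto (fun n => ((kn n - 2 : ℕ) : ℤ_[p])) Filter.atTop
      (nhds (-2 : ℤ_[p])) := by
    have hc : ∀ n, ((kn n - 2 : ℕ) : ℤ_[p]) = ((kn n : ℕ) : ℤ_[p]) - 2 := by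
      intro n
      have h2 : 2 ≤ kn n := by have := hkn4 n; omega
      push_cast [Nat.cast_sub h2]
      ring
    have h0 := hknZ.sub_const (2 : ℤ_[p])
    rw [zero_sub] at h0
    apply Filter.Tendsto.congr (fun n => (hc n).symm) h0
  -- VT for coefficients
  have hc0VT : ∀ j, VT v (fun n => c (kn n) j) (c0 j) := fun j => hc0κ kn hkn1 hknR hknZ j
  have hcm2VT : ∀ j, VT v (fun n => c (kn n - 2) j) (cm2 j) :=
    fun j => hcm2 (fun n => kn n - 2) hkn2_1 hkn2R hkn2Z j
  -- the y-variable bound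
  have hyv : ∀ m : ℕ, v ((q:K)^(m+1)) ≤ (p:ℝ)⁻¹ := by
    intro m
    have hqK : ((q:ℕ):K) = ((p:ℕ):K)^a := by rw [hq]; push_cast; ring
    calc v ((q:K)^(m+1)) = ((p:ℝ)⁻¹) ^ (a*(m+1)) := by
          rw [map_pow, hqK, map_pow, hvp, ← pow_mul]
      _ ≤ ((p:ℝ)⁻¹) ^ 1 := by
          apply pow_le_pow_of_le_one hpb0 (le_of_lt hpb1)
          have : 1 * 1 ≤ a * (m+1) := Nat.mul_le_mul ha (by omega)
          omega
      _ = (p:ℝ)⁻¹ := pow_one _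
  -- the x-variable bound
  have hxv : ∀ (m : ℕ) (t : (F (m+1))ˣ), v (-(Kl (m+1) t) - 1) ≤ ρ := by
    intro m t
    have hm1 : 1 ≤ m+1 := by omega
    have hq0 : 0 < q := by rw [hq]; exact Nat.pow_pos hp.pos
    have hqm1 : 1 ≤ q^(m+1) := Nat.one_le_pow _ _ hq0
    have hcardU : Fintype.card (F (m+1))ˣ = q^(m+1) - 1 := by
      rw [Fintype.card_units, hcard (m+1) hm1]
    have hA : (∑ x : (F (m+1))ˣ,
        (ψ (Algebra.trace (ZMod p) (F (m+1)) ((x : F (m+1)) + (t : F (m+1)) * (x : F (m+1))⁻¹)) - 1))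
        = (∑ x : (F (m+1))ˣ,
        ψ (Algebra.trace (ZMod p) (F (m+1)) ((x : F (m+1)) + (t : F (m+1)) * (x : F (m+1))⁻¹)))
          - ((q:K)^(m+1) - 1) := by
      rw [Finset.sum_sub_distrib, Finset.sum_const, Finset.card_univ, hcardU,
        nsmul_eq_mul, mul_one]
      congr 1
      rw [Nat.cast_sub hqm1]
      push_cast
      ring
    have hKlid : -(Kl (m+1) t) - 1 = -((∑ x : (F (m+1))ˣ,
        (ψ (Algebra.trace (ZMod p) (F (m+1)) ((x : F (m+1)) + (t : F (m+1)) * (x : F (m+1))⁻¹)) - 1))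
          + (q:K)^(m+1)) := by
      rw [hKl (m+1) t, hA]
      ring
    rw [hKlid, v.map_neg]
    refine le_trans (hv_nonarch _ _) (max_le ?_ ?_)
    · exact St4.v_sum_le v hv_nonarch _ _ hρ0 (fun x _ => hρψ _)
    · exact le_trans (hyv m) hρp
  -- S as sums of UU
  have hSU : ∀ (m k : ℕ), S (m+1) k = ∑ t : (F (m+1))ˣ, UU (-(Kl (m+1) t)) ((q:K)^(m+1)) k := by
    intro m k
    rw [hS (m+1) k]
    apply Finset.sum_congr rfl
    intro t _
    rw [UU_def]
    apply Finset.sum_congr rfl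
    intro i _
    rw [pow_mul]
  -- the cardinality identity
  have hcardu : ∀ m : ℕ, ((Fintype.card (F (m+1))ˣ : ℕ) : K) = (q:K)^(m+1) - 1 := by
    intro m
    have hq0 : 0 < q := by rw [hq]; exact Nat.pow_pos hp.pos
    have hqm1 : 1 ≤ q^(m+1) := Nat.one_le_pow _ _ hq0
    rw [Fintype.card_units, hcard (m+1) (by omega), Nat.cast_sub hqm1]
    push_cast
    ring
  -- existence of limits of S along the two sequences
  have hbound1 : ∀ (m n' n : ℕ), n' ≤ n →
      v (S (m+1) (kn n) - S (m+1) (kn n')) ≤ ((p:ℝ)⁻¹ * Mρ) * ((p:ℝ)⁻¹)^n' := by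
    intro m n' n hle
    have hdvd : p^(n'+1) ∣ kn n - kn n' := by
      apply Nat.dvd_sub
      · rw [hkneq]; exact Dvd.dvd.mul_left (pow_dvd_pow p (by omega)) 2
      · rw [hkneq]; exact Dvd.dvd.mul_left (pow_dvd_pow p (by omega)) 2
    have hMk : n'+1 ≤ kn n' / 2 := by
      rw [hkneq, Nat.mul_div_cancel_left _ (by norm_num : 0 < 2)]
      exact (hpn (n'+1)).le
    have hbd : ∀ t : (F (m+1))ˣ,
        v (UU (-(Kl (m+1) t)) ((q:K)^(m+1)) (kn n) - UU (-(Kl (m+1) t)) ((q:K)^(m+1)) (kn n'))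
          ≤ ((p:ℝ)⁻¹)^(n'+1) * Mρ := by
      intro t
      exact St4.E2 v hp hv_nonarch hvp (hxv m t) hρ0 (le_of_lt hρ1) (hyv m) hMρ hM1 hp5
        (kn n) (kn n') (n'+1) (hmono n' n hle) hMk hdvd
    have heq : S (m+1) (kn n) - S (m+1) (kn n') = ∑ t : (F (m+1))ˣ,
        (UU (-(Kl (m+1) t)) ((q:K)^(m+1)) (kn n) - UU (-(Kl (m+1) t)) ((q:K)^(m+1)) (kn n')) := by
      rw [hSU, hSU, Finset.sum_sub_distrib]
    rw [heq]
    have h2 : ((p:ℝ)⁻¹ * Mρ) * ((p:ℝ)⁻¹)^n' = ((p:ℝ)⁻¹)^(n'+1) * Mρ := by ring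
    rw [h2]
    apply St4.v_sum_le v hv_nonarch _ _ (by positivity) (fun t _ => hbd t)
  have hbound2 : ∀ (m n' n : ℕ), n' ≤ n →
      v (S (m+1) (kn n - 2) - S (m+1) (kn n' - 2)) ≤ ((p:ℝ)⁻¹ * Mρ) * ((p:ℝ)⁻¹)^n' := by
    intro m n' n hle
    have h4 := hkn4 n; have h4' := hkn4 n'
    have hdvd0 : p^(n'+1) ∣ kn n - kn n' := by
      apply Nat.dvd_sub
      · rw [hkneq]; exact Dvd.dvd.mul_left (pow_dvd_pow p (by omega)) 2
      · rw [hkneq]; exact Dvd.dvd.mul_left (pow_dvd_pow p (by omega)) 2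
    have hdvd : p^(n'+1) ∣ (kn n - 2) - (kn n' - 2) := by
      have hmn := hmono n' n hle
      have : (kn n - 2) - (kn n' - 2) = kn n - kn n' := by omega
      rw [this]; exact hdvd0
    have hMk : n'+1 ≤ (kn n' - 2) / 2 := by
      have he : kn n' - 2 = 2 * (p^(n'+1) - 1) := by rw [hkneq]; omega
      rw [he, Nat.mul_div_cancel_left _ (by norm_num : 0 < 2)]
      have := hpn (n'+1); omega
    have hbd : ∀ t : (F (m+1))ˣ,
        v (UU (-(Kl (m+1) t)) ((q:K)^(m+1)) (kn n - 2) - UU (-(Kl (m+1) t)) ((q:K)^(m+1)) (kn n' - 2))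
          ≤ ((p:ℝ)⁻¹)^(n'+1) * Mρ := by
      intro t
      apply St4.E2 v hp hv_nonarch hvp (hxv m t) hρ0 (le_of_lt hρ1) (hyv m) hMρ hM1 hp5
        (kn n - 2) (kn n' - 2) (n'+1) ?_ hMk hdvd
      have := hmono n' n hle; omega
    have heq : S (m+1) (kn n - 2) - S (m+1) (kn n' - 2) = ∑ t : (F (m+1))ˣ,
        (UU (-(Kl (m+1) t)) ((q:K)^(m+1)) (kn n - 2)
          - UU (-(Kl (m+1) t)) ((q:K)^(m+1)) (kn n' - 2)) := by
      rw [hSU, hSU, Finset.sum_sub_distrib]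
    rw [heq]
    have h2 : ((p:ℝ)⁻¹ * Mρ) * ((p:ℝ)⁻¹)^n' = ((p:ℝ)⁻¹)^(n'+1) * Mρ := by ring
    rw [h2]
    apply St4.v_sum_le v hv_nonarch _ _ (by positivity) (fun t _ => hbd t)
  have hS1ex : ∀ m : ℕ, ∃ L, VT v (fun n => S (m+1) (kn n)) L := by
    intro m
    have hC0 : (0:ℝ) ≤ (p:ℝ)⁻¹ * Mρ := by positivity
    exact hcomplete _ (St4.cauchy_of_bound v _ _ hC0 hpb0 hpb1 (fun n' n h => hbound1 m n' n h))
  have hS2ex : ∀ m : ℕ, ∃ L, VT v (fun n => S (m+1) (kn n - 2)) L := by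
    intro m
    have hC0 : (0:ℝ) ≤ (p:ℝ)⁻¹ * Mρ := by positivity
    exact hcomplete _ (St4.cauchy_of_bound v _ _ hC0 hpb0 hpb1 (fun n' n h => hbound2 m n' n h))
  choose S1 hS1 using hS1ex
  choose S2 hS2 using hS2ex
  -- the key relation between the limits
  have hrel : ∀ m : ℕ, S1 m - (q:K)^(m+1) * S2 m = (q:K)^(m+1) - 1 := by
    intro m
    have hVT1 : VT v (fun n => S (m+1) (kn n) - (q:K)^(m+1) * S (m+1) (kn n - 2))
        (S1 m - (q:K)^(m+1) * S2 m) :=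
      St4.vt_sub v (hS1 m) (St4.vt_const_mul v _ (hS2 m))
    have hVT2 : VT v (fun n => S (m+1) (kn n) - (q:K)^(m+1) * S (m+1) (kn n - 2))
        ((q:K)^(m+1) - 1) := by
      apply St4.vt_of_bound v ((p:ℝ)⁻¹ * Mρ) ((p:ℝ)⁻¹) hpb0 hpb1
      intro n
      have hid : S (m+1) (kn n) - (q:K)^(m+1) * S (m+1) (kn n - 2) - ((q:K)^(m+1) - 1)
          = ∑ t : (F (m+1))ˣ, (UU (-(Kl (m+1) t)) ((q:K)^(m+1)) (kn n)
              - (q:K)^(m+1) * UU (-(Kl (m+1) t)) ((q:K)^(m+1)) (kn n - 2) - 1) := by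
        rw [hSU, hSU, Finset.mul_sum]
        rw [Finset.sum_sub_distrib, Finset.sum_sub_distrib, Finset.sum_const, Finset.card_univ,
          nsmul_eq_mul, mul_one, hcardu m]
      rw [hid]
      have h2 : ((p:ℝ)⁻¹ * Mρ) * ((p:ℝ)⁻¹)^n = ((p:ℝ)⁻¹)^(n+1) * Mρ := by ring
      rw [h2]
      apply St4.v_sum_le v hv_nonarch _ _ (by positivity)
      intro t _
      apply St4.E3 v hp hv_nonarch hvp (hxv m t) hρ0 (le_of_lt hρ1) (hyv m) hMρ hM1 hp5
        (kn n) (n+1) (hkn4 n) ?_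
      rw [hkneq]
      exact Dvd.dvd.mul_left dvd_rfl 2
    exact St4.vt_unique v hVT1 hVT2
  -- base values
  have hc00 : c0 0 = 1 := by
    apply St4.vt_unique v (hc0VT 0)
    exact St4.vt_congr v (fun n => (hc0 (kn n) (hkn1 n)).symm) (St4.vt_const v 1)
  have hcm20 : cm2 0 = 1 := by
    apply St4.vt_unique v (hcm2VT 0)
    exact St4.vt_congr v (fun n => (hc0 (kn n - 2) (hkn2_1 n)).symm) (St4.vt_const v 1)
  -- limit recursions
  have hA : ∀ j : ℕ, ((j:K)+1) * c0 (j+1) = ∑ m ∈ Finset.range (j+1), S1 m * c0 (j-m) := by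
    intro j
    apply St4.vt_unique v (St4.vt_const_mul v ((j:K)+1) (hc0VT (j+1)))
    apply St4.vt_congr v (fun n => (hcrec (kn n) (hkn1 n) j).symm)
    apply St4.vt_sum v
    intro m _
    exact St4.vt_mul v (hS1 m) (hc0VT (j-m))
  have hBc : ∀ j : ℕ, ((j:K)+1) * cm2 (j+1) = ∑ m ∈ Finset.range (j+1), S2 m * cm2 (j-m) := by
    intro j
    apply St4.vt_unique v (St4.vt_const_mul v ((j:K)+1) (hcm2VT (j+1)))
    apply St4.vt_congr v (fun n => (hcrec (kn n - 2) (hkn2_1 n) j).symm)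
    apply St4.vt_sum v
    intro m _
    exact St4.vt_mul v (hS2 m) (hcm2VT (j-m))
  -- the auxiliary sequence B
  have hrecB : ∀ j : ℕ, ((j:K)+1) * ((q:K)^(j+1) * cm2 (j+1)) =
      ∑ m ∈ Finset.range (j+1), ((q:K)^(m+1) * S2 m) * ((q:K)^(j-m) * cm2 (j-m)) := by
    intro j
    have h1 : ((j:K)+1) * ((q:K)^(j+1) * cm2 (j+1)) = (q:K)^(j+1) * (((j:K)+1) * cm2 (j+1)) := by
      ring
    rw [h1, hBc j, Finset.mul_sum]
    apply Finset.sum_congr rfl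
    intro m hm
    have hm' : m ≤ j := by have := Finset.mem_range.mp hm; omega
    have hqe : (q:K)^(j+1) = (q:K)^(m+1) * (q:K)^(j-m) := by
      rw [← pow_add]; congr 1; omega
    rw [hqe]; ring
  have hDrec := St4.rec_transform c0 S1 (q:K) hA
  have hErec := St4.rec_transform (fun j => (q:K)^j * cm2 j) (fun m => (q:K)^(m+1) * S2 m) 1
    (by intro j; simpa using hrecB j)
  have hErec' : ∀ j : ℕ, ((j:K)+1) * ((fun j => (q:K)^j * cm2 j - 1 * Cm1 (fun j => (q:K)^j * cm2 j) j) (j+1)) =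
      ∑ m ∈ Finset.range (j+1), (S1 m - (q:K)^(m+1)) *
        ((fun j => (q:K)^j * cm2 j - 1 * Cm1 (fun j => (q:K)^j * cm2 j) j) (j-m)) := by
    intro j
    have h0 := hErec j
    simp only at h0 ⊢
    rw [h0]
    apply Finset.sum_congr rfl
    intro m _
    have hcoef : (q:K)^(m+1) * S2 m - 1^(m+1) = S1 m - (q:K)^(m+1) := by
      rw [one_pow]
      linear_combination - hrel m
    rw [hcoef]
  have hDrec' : ∀ j : ℕ, ((j:K)+1) * ((fun j => c0 j - (q:K) * Cm1 c0 j) (j+1)) =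
      ∑ m ∈ Finset.range (j+1), (S1 m - (q:K)^(m+1)) *
        ((fun j => c0 j - (q:K) * Cm1 c0 j) (j-m)) := by
    intro j
    simpa using hDrec j
  have h00 : (fun j => c0 j - (q:K) * Cm1 c0 j) 0
      = (fun j => (q:K)^j * cm2 j - 1 * Cm1 (fun j => (q:K)^j * cm2 j) j) 0 := by
    simp [St4.Cm1, hc00, hcm20]
  have hfinal := St4.rec_unique (fun j => c0 j - (q:K) * Cm1 c0 j)
    (fun j => (q:K)^j * cm2 j - 1 * Cm1 (fun j => (q:K)^j * cm2 j) j)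
    (fun m => S1 m - (q:K)^(m+1)) h00 hDrec' hErec'
  constructor
  · rw [hc00, hcm20]
  · intro j
    have h := hfinal (j+1)
    simp only [St4.Cm1, one_mul] at h
    exact h
end

section
/- (Vanishing of H^0_κ for κ not a nonnegative integer.) Assume κ ≠ n·1_K for every nonnegative integer n. If a family (A_j)_{j≥0} of formal power series in K[[t]] satisfies the homogeneous system t·A_0' + κπ²t·A_1 = 0 and t·A_j' + A_{j-1} + (j+1)(κ-j)π²t·A_{j+1} = 0 for all j ≥ 1 (i.e. ∂_κ(A) = 0), then A_j = 0 for all j ≥ 0. -/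
/-- (Vanishing of `H⁰_κ` for `κ` not a nonnegative integer;
Theorem 3.1 of the paper, first case.) Assume `κ ≠ n·1_K` for every `n ∈ ℕ`. If a family
`(A_j)` of formal power series satisfies the homogeneous system `∂_κ(A) = 0`, i.e.
`t A₀' + κ π² t A₁ = 0` and `t A_j' + A_{j-1} + (j+1)(κ-j) π² t A_{j+1} = 0` for `j ≥ 1`,
then `A_j = 0` for all `j`. -/
theorem statement5
    (K : Type*) [Field K] [CharZero K] (π κ : K)
    (hκ : ∀ n : ℕ, κ ≠ (n : K))
    (A : ℕ → PowerSeries K)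
    (h0 : PowerSeries.X * PowerSeries.derivative K (A 0)
        + PowerSeries.C (κ * π ^ 2) * (PowerSeries.X * A 1) = 0)
    (hj : ∀ j : ℕ, 1 ≤ j →
      PowerSeries.X * PowerSeries.derivative K (A j) + A (j - 1)
        + PowerSeries.C (((j : K) + 1) * (κ - (j : K)) * π ^ 2)
            * (PowerSeries.X * A (j + 1)) = 0) :
    ∀ j : ℕ, A j = 0 := by
  have key : ∀ n j : ℕ, PowerSeries.coeff n (A j) = 0 := by
    intro n
    induction n using Nat.strong_induction_on with
    | _ n ih =>
      match n with
      | 0 =>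
        intro j
        have h := hj (j + 1) (by omega)
        have := congrArg (PowerSeries.coeff 0) h
        simpa [PowerSeries.coeff_zero_X_mul] using this
      | m + 1 =>
        intro j
        induction j with
        | zero =>
          have h := congrArg (PowerSeries.coeff (m + 1)) h0
          rw [map_add, PowerSeries.coeff_succ_X_mul, PowerSeries.coeff_derivative,
            PowerSeries.coeff_C_mul, PowerSeries.coeff_succ_X_mul, ih m (by omega) 1,
            map_zero, mul_zero, add_zero] at h
          have hm : ((m : K) + 1) ≠ 0 := Nat.cast_add_one_ne_zero m
          exact (mul_eq_zero.mp h).resolve_right hm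
        | succ k ihk =>
          have h := hj (k + 1) (by omega)
          have h := congrArg (PowerSeries.coeff (m + 1)) h
          rw [map_add, map_add, PowerSeries.coeff_succ_X_mul, PowerSeries.coeff_derivative,
            PowerSeries.coeff_C_mul, PowerSeries.coeff_succ_X_mul, ih m (by omega) (k + 1 + 1),
            mul_zero, add_zero] at h
          simp only [Nat.add_sub_cancel, ihk, add_zero, map_zero, mul_zero, add_zero] at h
          have hm : ((m : K) + 1) ≠ 0 := Nat.cast_add_one_ne_zero m
          exact (mul_eq_zero.mp h).resolve_right hm
  intro j
  ext n
  simp [key n j]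
end

section
/- (Computation of H^0_0.) If a family (A_j)_{j≥0} of formal power series in K[[t]] satisfies the system for ∂_0: t·A_0' + π²t·A_1 = 0, t·A_1' + 2·(-1)·π²t·A_2 = 0, and t·A_j' + A_{j-1} + (j+1)(0-j)·π²t·A_{j+1} = 0 for all j ≥ 2, then A_j = 0 for all j ≥ 1 and A_0 is a constant. Conversely every constant A_0 (with A_j = 0 for j ≥ 1) is a solution, so the kernel of ∂_0 is exactly the one-dimensional space of constants. -/
open PowerSeries

/-- (Computation of `H⁰_0`; Theorem 3.1 of the paper, case `κ = 0`.)
A family `(A_j)` of formal power series satisfies the kernel system of `∂_0`, namely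
`t A₀' + π² t A₁ = 0`, `t A₁' + 2·(-1)·π² t A₂ = 0`, and
`t A_j' + A_{j-1} + (j+1)(0-j) π² t A_{j+1} = 0` for `j ≥ 2`,
if and only if `A_j = 0` for all `j ≥ 1` and `A₀` is a constant. -/
theorem statement6
    (K : Type*) [Field K] [CharZero K] (π : K)
    (A : ℕ → PowerSeries K) :
    (PowerSeries.X * PowerSeries.derivative K (A 0)
        + PowerSeries.C (R := K) (π ^ 2) * (PowerSeries.X * A 1) = 0 ∧
      PowerSeries.X * PowerSeries.derivative K (A 1)
        + PowerSeries.C (R := K) (2 * (-1 : K) * π ^ 2) * (PowerSeries.X * A 2) = 0 ∧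
      ∀ j : ℕ, 2 ≤ j →
        PowerSeries.X * PowerSeries.derivative K (A j) + A (j - 1)
          + PowerSeries.C (R := K) (((j : K) + 1) * ((0 : K) - (j : K)) * π ^ 2)
              * (PowerSeries.X * A (j + 1)) = 0)
    ↔ ((∀ j : ℕ, 1 ≤ j → A j = 0) ∧ ∃ cst : K, A 0 = PowerSeries.C (R := K) cst) := by
  constructor
  · rintro ⟨h0, h1, hj⟩
    -- coefficient equations
    have e0 : ∀ n : ℕ, coeff (R := K) (n + 1) (A 0) * (n + 1) + π ^ 2 * coeff (R := K) n (A 1) = 0 := by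
      intro n
      have := congrArg (coeff (R := K) (n + 1)) h0
      simp only [map_add, coeff_succ_X_mul, coeff_derivative, coeff_C_mul, map_zero] at this
      exact this
    have e1 : ∀ n : ℕ, coeff (R := K) (n + 1) (A 1) * (n + 1)
        + 2 * (-1 : K) * π ^ 2 * coeff (R := K) n (A 2) = 0 := by
      intro n
      have := congrArg (coeff (R := K) (n + 1)) h1
      simp only [map_add, coeff_succ_X_mul, coeff_derivative, coeff_C_mul, map_zero] at this
      exact this
    have ej : ∀ j : ℕ, 2 ≤ j → ∀ n : ℕ,
        coeff (R := K) (n + 1) (A j) * (n + 1) + coeff (R := K) (n + 1) (A (j - 1))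
          + ((j : K) + 1) * ((0 : K) - (j : K)) * π ^ 2 * coeff (R := K) n (A (j + 1)) = 0 := by
      intro j hjge n
      have := congrArg (coeff (R := K) (n + 1)) (hj j hjge)
      simp only [map_add, coeff_succ_X_mul, coeff_derivative, coeff_C_mul, map_zero] at this
      exact this
    have ej0 : ∀ j : ℕ, 2 ≤ j → coeff (R := K) 0 (A (j - 1)) = 0 := by
      intro j hjge
      have := congrArg (coeff (R := K) 0) (hj j hjge)
      simpa [coeff_zero_X_mul, coeff_C_mul] using this
    -- main claim: for all n, coeff n (A (j+1)) = 0
    have main : ∀ n : ℕ, ∀ j : ℕ, coeff (R := K) n (A (j + 1)) = 0 := by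
      intro n
      induction n with
      | zero =>
        intro j
        have := ej0 (j + 2) (by omega)
        simpa using this
      | succ n ih =>
        have hne : ((n : K) + 1) ≠ 0 := Nat.cast_add_one_ne_zero n
        have h1' : coeff (R := K) (n + 1) (A 1) = 0 := by
          have h := e1 n
          have hm : coeff (R := K) n (A 2) = 0 := ih 1
          rw [hm, mul_zero, add_zero] at h
          exact (mul_eq_zero.mp h).resolve_right hne
        intro j
        induction j with
        | zero => exact h1'
        | succ j ihj =>
          have h := ej (j + 2) (by omega) n
          have hsub : j + 2 - 1 = j + 1 := rfl
          have hm : coeff (R := K) n (A (j + 2 + 1)) = 0 := ih (j + 2)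
          rw [hsub, ihj, hm, mul_zero, add_zero, add_zero] at h
          exact (mul_eq_zero.mp h).resolve_right hne
    have hA0 : ∀ n : ℕ, coeff (R := K) (n + 1) (A 0) = 0 := by
      intro n
      have h := e0 n
      have hm : coeff (R := K) n (A 1) = 0 := main n 0
      rw [hm, mul_zero, add_zero] at h
      have hne : ((n : K) + 1) ≠ 0 := Nat.cast_add_one_ne_zero n
      exact (mul_eq_zero.mp h).resolve_right hne
    constructor
    · intro j hjge
      obtain ⟨k, rfl⟩ : ∃ k, j = k + 1 := ⟨j - 1, by omega⟩
      ext n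
      simp [main n k]
    · refine ⟨coeff (R := K) 0 (A 0), ?_⟩
      ext n
      cases n with
      | zero => simp
      | succ n => simp [hA0 n, coeff_C]
  · rintro ⟨hz, cst, hc⟩
    have h1 : A 1 = 0 := hz 1 le_rfl
    have h2 : A 2 = 0 := hz 2 (by omega)
    refine ⟨?_, ?_, ?_⟩
    · simp [hc, h1]
    · simp [h1, h2]
    · intro j hjge
      have hj0 : A j = 0 := hz j (by omega)
      have hj1 : A (j - 1) = 0 := hz (j - 1) (by omega)
      have hj2 : A (j + 1) = 0 := hz (j + 1) (by omega)
      simp [hj0, hj1, hj2]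
end

section
/- (Tail vanishing in the kernel computation for a nonnegative integer κ = k.) Let k be a nonnegative integer. If a family (A_j)_{j≥k+2} of formal power series in K[[t]] satisfies t·A_{k+2}' + (k+2)·(-1)·π²t·A_{k+3} = 0 and t·A_j' + A_{j-1} + (j+1)(k-j)·π²t·A_{j+1} = 0 for all j ≥ k+3, then A_j = 0 for all j ≥ k+2. (This is the reduction of the kernel of ∂_k to the finite k-th symmetric power differential system.) -/
/-- (Tail vanishing in the kernel computation for `κ = k ∈ ℤ_{≥0}`;
system (3.3) in the proof of Theorem 3.1 of the paper.) Let `k ≥ 0`. If a family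
`(A_j)_{j ≥ k+2}` of formal power series satisfies
`t A_{k+2}' + (k+2)·(-1)·π² t A_{k+3} = 0` and
`t A_j' + A_{j-1} + (j+1)(k-j) π² t A_{j+1} = 0` for all `j ≥ k+3`,
then `A_j = 0` for all `j ≥ k+2`. -/
theorem statement7
    (K : Type*) [Field K] [CharZero K] (π : K) (k : ℕ)
    (A : ℕ → PowerSeries K)
    (h0 : PowerSeries.X * PowerSeries.derivative K (A (k + 2))
        + PowerSeries.C (((k : K) + 2) * (-1 : K) * π ^ 2)
            * (PowerSeries.X * A (k + 3)) = 0)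
    (hj : ∀ j : ℕ, k + 3 ≤ j →
      PowerSeries.X * PowerSeries.derivative K (A j) + A (j - 1)
        + PowerSeries.C (((j : K) + 1) * ((k : K) - (j : K)) * π ^ 2)
            * (PowerSeries.X * A (j + 1)) = 0) :
    ∀ j : ℕ, k + 2 ≤ j → A j = 0 := by
  -- strong induction on coefficient index
  have key : ∀ n : ℕ, ∀ j : ℕ, k + 2 ≤ j → PowerSeries.coeff n (A j) = 0 := by
    intro n
    induction n using Nat.strong_induction_on with
    | _ n ih =>
      match n with
      | 0 =>
        intro j hjk
        have h := hj (j + 1) (by omega)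
        have := congrArg (PowerSeries.coeff 0) h
        simp only [map_add, PowerSeries.coeff_C_mul, PowerSeries.coeff_zero_X_mul,
          mul_zero, zero_add, add_zero, Nat.add_sub_cancel] at this
        exact this
      | m + 1 =>
        -- first the base j = k+2
        have base : PowerSeries.coeff (m + 1) (A (k + 2)) = 0 := by
          have := congrArg (PowerSeries.coeff (m + 1)) h0
          simp only [map_add, PowerSeries.coeff_C_mul, PowerSeries.coeff_succ_X_mul,
            PowerSeries.coeff_derivative, map_zero] at this
          rw [ih m (by omega) (k + 3) (by omega)] at this
          simp only [mul_zero, add_zero] at this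
          have hm1 : ((m : K) + 1) ≠ 0 := Nat.cast_add_one_ne_zero m
          exact (mul_eq_zero.mp this).resolve_right hm1
        -- then induct upward in j
        have step : ∀ d : ℕ, PowerSeries.coeff (m + 1) (A (k + 2 + d)) = 0 := by
          intro d
          induction d with
          | zero => exact base
          | succ d ihd =>
            have h := hj (k + 3 + d) (by omega)
            have hc := congrArg (PowerSeries.coeff (m + 1)) h
            simp only [map_add, PowerSeries.coeff_C_mul, PowerSeries.coeff_succ_X_mul,
              PowerSeries.coeff_derivative, map_zero] at hc
            have e1 : k + 3 + d - 1 = k + 2 + d := by omega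
            rw [e1, ihd, ih m (by omega) (k + 3 + d + 1) (by omega)] at hc
            simp only [mul_zero, add_zero] at hc
            have hm1 : ((m : K) + 1) ≠ 0 := Nat.cast_add_one_ne_zero m
            have e2 : k + 2 + (d + 1) = k + 3 + d := by omega
            rw [e2]
            exact (mul_eq_zero.mp hc).resolve_right hm1
        intro j hjk
        have : j = k + 2 + (j - (k + 2)) := by omega
        rw [this]; exact step _
  intro j hjk
  ext n
  rw [key n j hjk, map_zero]
end

section
/- (R(b') ∩ ∂_κ S(b', ε) = {0}.) Let π, κ ∈ K, let b' ∈ ℝ, ε > 0, ρ ∈ ℝ, and let (A_j)_{j≥0} be a family of formal power series in K[[t]] with ‖A_j[n]‖ ≤ p^{-(2b'n + εj + ρ)} for all j, n ≥ 0. Suppose that ∂_κ(A) is concentrated in its 0-th component, i.e. t·A_j' + A_{j-1} + (j+1)(κ-j)π²t·A_{j+1} = 0 for all j ≥ 1. Then the 0-th component also vanishes: t·A_0' + κπ²t·A_1 = 0. (Equivalently: if an element of S(b',ε) is mapped by ∂_κ into the subspace R(b') of series involving only t, then its image is 0.) -/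
/-- (`R(b') ∩ ∂_κ S(b',ε) = {0}`; Lemma 3.2 of the paper.) Let
`π, κ ∈ K`, `b' ∈ ℝ`, `ε > 0`, `ρ ∈ ℝ`, and let `(A_j)` be a family of formal power
series with `‖A_j[n]‖ ≤ p^{-(2b'n + εj + ρ)}`. If `∂_κ(A)` is concentrated in its 0-th
component, i.e. `t A_j' + A_{j-1} + (j+1)(κ-j) π² t A_{j+1} = 0` for all `j ≥ 1`, then
the 0-th component also vanishes: `t A₀' + κ π² t A₁ = 0`. -/
theorem statement8
    (p : ℕ) (hp : p.Prime)
    (K : Type*) [Field K] [CharZero K]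
    (v : AbsoluteValue K ℝ)
    (hv_nonarch : ∀ x y : K, v (x + y) ≤ max (v x) (v y))
    (π κ : K) (b' ε ρ : ℝ) (hε : 0 < ε)
    (A : ℕ → PowerSeries K)
    (hA : ∀ j n : ℕ, v (PowerSeries.coeff n (A j)) ≤
      (p : ℝ) ^ (-(2 * b' * (n : ℝ) + ε * (j : ℝ) + ρ)))
    (hsys : ∀ j : ℕ, 1 ≤ j →
      PowerSeries.X * PowerSeries.derivative K (A j) + A (j - 1)
        + PowerSeries.C (((j : K) + 1) * (κ - (j : K)) * π ^ 2)
            * (PowerSeries.X * A (j + 1)) = 0) :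
    PowerSeries.X * PowerSeries.derivative K (A 0)
      + PowerSeries.C (κ * π ^ 2) * (PowerSeries.X * A 1) = 0 := by
  have hp1 : (1 : ℝ) < (p : ℝ) := by exact_mod_cast hp.one_lt
  have hp0 : (0 : ℝ) < (p : ℝ) := lt_trans one_pos hp1
  set r : ℝ := (p : ℝ) with hr
  -- norms of natural numbers are at most 1
  have vnat : ∀ n : ℕ, v ((n : K)) ≤ 1 := by
    intro n
    induction n with
    | zero => simp
    | succ k ih =>
      push_cast
      calc v ((k : K) + 1) ≤ max (v (k : K)) (v 1) := hv_nonarch _ _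
        _ ≤ 1 := by rw [v.map_one]; exact max_le ih le_rfl
  -- constants
  set Q : ℝ := max (v κ) 1 * v π ^ 2 with hQ
  have hQ0 : 0 ≤ Q := mul_nonneg (le_trans zero_le_one (le_max_right _ _)) (pow_nonneg (v.nonneg _) 2)
  set C : ℝ := max 1 (Q * r ^ (2 * b')) with hC
  have hC1 : (1 : ℝ) ≤ C := le_max_left _ _
  have hC0 : (0 : ℝ) < C := lt_of_lt_of_le one_pos hC1
  have hCQ : Q * r ^ (2 * b') ≤ C := le_max_right _ _
  -- the coefficient recursion coming from hsys at j+1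
  have hrec : ∀ j m : ℕ, (PowerSeries.coeff (m + 1) (A j)) =
      -(PowerSeries.coeff (m + 1) (A (j + 1)) * ((m : K) + 1)
        + (((j : K) + 1) + 1) * (κ - ((j : K) + 1)) * π ^ 2
            * PowerSeries.coeff m (A (j + 2))) := by
    intro j m
    have h := hsys (j + 1) (Nat.le_add_left 1 j)
    have h2 := congrArg (PowerSeries.coeff (m + 1)) h
    simp only [Nat.add_sub_cancel, map_add, PowerSeries.coeff_succ_X_mul,
      PowerSeries.coeff_derivative, PowerSeries.coeff_C_mul, map_zero, Nat.cast_add,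
      Nat.cast_one] at h2
    linear_combination h2
  -- the constant coefficients vanish
  have hzero0 : ∀ j : ℕ, PowerSeries.coeff 0 (A j) = 0 := by
    intro j
    have h := hsys (j + 1) (Nat.le_add_left 1 j)
    have h2 := congrArg (PowerSeries.coeff 0) h
    simpa [PowerSeries.coeff_zero_eq_constantCoeff, Nat.add_sub_cancel] using h2
  -- main improving estimate
  have main : ∀ J j m : ℕ, v (PowerSeries.coeff m (A j)) ≤
      C ^ m * r ^ (-(2 * b' * (m : ℝ) + ε * ((j : ℝ) + (J : ℝ)) + ρ)) := by
    intro J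
    induction J with
    | zero =>
      intro j m
      calc v (PowerSeries.coeff m (A j)) ≤ r ^ (-(2 * b' * (m : ℝ) + ε * (j : ℝ) + ρ)) :=
            hA j m
        _ = 1 * r ^ (-(2 * b' * (m : ℝ) + ε * (j : ℝ) + ρ)) := (one_mul _).symm
        _ ≤ C ^ m * r ^ (-(2 * b' * (m : ℝ) + ε * ((j : ℝ) + (0 : ℕ)) + ρ)) := by
            push_cast
            rw [add_zero]
            exact mul_le_mul_of_nonneg_right (one_le_pow₀ hC1)
              (Real.rpow_nonneg hp0.le _)
    | succ J ih =>
      intro j m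
      match m with
      | 0 =>
        rw [hzero0 j, v.map_zero]
        positivity
      | Nat.succ m =>
        rw [hrec j m, v.map_neg]
        have hb := hv_nonarch (PowerSeries.coeff (m + 1) (A (j + 1)) * ((m : K) + 1))
          ((((j : K) + 1) + 1) * (κ - ((j : K) + 1)) * π ^ 2 * PowerSeries.coeff m (A (j + 2)))
        refine le_trans hb (max_le ?_ ?_)
        · -- first branch: index (j+1, m+1)
          have h1 : v (((m : K) + 1)) ≤ 1 := by
            have := vnat (m + 1); push_cast at this; exact this
          calc v (PowerSeries.coeff (m + 1) (A (j + 1)) * ((m : K) + 1))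
              = v (PowerSeries.coeff (m + 1) (A (j + 1))) * v (((m : K) + 1)) := v.map_mul _ _
            _ ≤ (C ^ (m + 1) * r ^ (-(2 * b' * ((m + 1 : ℕ) : ℝ)
                  + ε * (((j + 1 : ℕ) : ℝ) + (J : ℝ)) + ρ))) * 1 := by
                apply mul_le_mul (ih (j + 1) (m + 1)) h1 (v.nonneg _)
                positivity
            _ = C ^ (m + 1) * r ^ (-(2 * b' * (((m : ℕ) : ℝ) + 1)
                  + ε * ((j : ℝ) + ((J : ℝ) + 1)) + ρ)) := by
                rw [mul_one]; push_cast; ring_nf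
            _ = C ^ (m + 1) * r ^ (-(2 * b' * (((m + 1 : ℕ) : ℝ))
                  + ε * ((j : ℝ) + ((J + 1 : ℕ) : ℝ)) + ρ)) := by push_cast; ring_nf
        · -- second branch: index (j+2, m)
          have hκ : v (κ - ((j : K) + 1)) ≤ max (v κ) 1 := by
            have : κ - ((j : K) + 1) = κ + (-(((j + 1 : ℕ) : K))) := by push_cast; ring
            rw [this]
            refine le_trans (hv_nonarch _ _) (max_le (le_max_left _ _) ?_)
            rw [v.map_neg]
            exact le_trans (vnat (j + 1)) (le_max_right _ _)
          have hj2 : v ((((j : K) + 1) + 1)) ≤ 1 := by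
            have := vnat (j + 2); push_cast at this
            convert this using 2; ring
          have hy := ih (j + 2) m
          -- the product of the scalar factors is at most Q
          have hsc : v ((((j : K) + 1) + 1) * (κ - ((j : K) + 1)) * π ^ 2) ≤ Q := by
            rw [v.map_mul, v.map_mul, v.map_pow]
            calc v (((j : K) + 1) + 1) * v (κ - ((j : K) + 1)) * v π ^ 2
                ≤ 1 * max (v κ) 1 * v π ^ 2 := by
                  apply mul_le_mul_of_nonneg_right _ (pow_nonneg (v.nonneg _) 2)
                  exact mul_le_mul hj2 hκ (v.nonneg _) zero_le_one
              _ = Q := by rw [one_mul]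
          calc v ((((j : K) + 1) + 1) * (κ - ((j : K) + 1)) * π ^ 2
                  * PowerSeries.coeff m (A (j + 2)))
              = v ((((j : K) + 1) + 1) * (κ - ((j : K) + 1)) * π ^ 2)
                  * v (PowerSeries.coeff m (A (j + 2))) := v.map_mul _ _
            _ ≤ Q * (C ^ m * r ^ (-(2 * b' * ((m : ℕ) : ℝ)
                  + ε * (((j + 2 : ℕ) : ℝ) + (J : ℝ)) + ρ))) := by
                apply mul_le_mul hsc hy (v.nonneg _) hQ0
            _ ≤ Q * (C ^ m * r ^ (-(2 * b' * ((m : ℝ) + 1) + ε * ((j : ℝ) + ((J : ℝ) + 1)) + ρ)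
                  + 2 * b')) := by
                apply mul_le_mul_of_nonneg_left _ hQ0
                apply mul_le_mul_of_nonneg_left _ (pow_nonneg hC0.le m)
                apply Real.rpow_le_rpow_of_exponent_le hp1.le
                push_cast
                nlinarith [hε]
            _ = (Q * r ^ (2 * b')) * (C ^ m
                  * r ^ (-(2 * b' * ((m : ℝ) + 1) + ε * ((j : ℝ) + ((J : ℝ) + 1)) + ρ))) := by
                rw [Real.rpow_add hp0]; ring
            _ ≤ C * (C ^ m
                  * r ^ (-(2 * b' * ((m : ℝ) + 1) + ε * ((j : ℝ) + ((J : ℝ) + 1)) + ρ))) := by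
                apply mul_le_mul_of_nonneg_right hCQ
                positivity
            _ = C ^ (m + 1) * r ^ (-(2 * b' * (((m + 1 : ℕ) : ℝ))
                  + ε * ((j : ℝ) + ((J + 1 : ℕ) : ℝ)) + ρ)) := by
                push_cast; ring_nf
  -- conclude every coefficient vanishes
  have hvanish : ∀ j m : ℕ, PowerSeries.coeff m (A j) = 0 := by
    intro j m
    by_contra hx
    have hvx : 0 < v (PowerSeries.coeff m (A j)) := v.pos hx
    set K0 : ℝ := C ^ m * r ^ (-(2 * b' * (m : ℝ) + ε * (j : ℝ) + ρ)) with hK0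
    have hK0pos : 0 < K0 := by positivity
    have hrlt : r ^ (-ε) < 1 := Real.rpow_lt_one_of_one_lt_of_neg hp1 (neg_neg_iff_pos.mpr hε)
    obtain ⟨N, hN⟩ := exists_pow_lt_of_lt_one
      (div_pos hvx hK0pos) hrlt
    have hb := main N j m
    have heq : C ^ m * r ^ (-(2 * b' * (m : ℝ) + ε * ((j : ℝ) + (N : ℝ)) + ρ))
        = K0 * (r ^ (-ε)) ^ N := by
      rw [hK0]
      have : (-(2 * b' * (m : ℝ) + ε * ((j : ℝ) + (N : ℝ)) + ρ))
          = (-(2 * b' * (m : ℝ) + ε * (j : ℝ) + ρ)) + (-ε) * (N : ℝ) := by ring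
      rw [this, Real.rpow_add hp0, Real.rpow_mul hp0.le, Real.rpow_natCast]
      ring
    rw [heq] at hb
    have : K0 * (r ^ (-ε)) ^ N < v (PowerSeries.coeff m (A j)) := by
      rw [mul_comm]
      exact (lt_div_iff₀ hK0pos).mp hN
    linarith
  have hA0 : A 0 = 0 := PowerSeries.ext fun n => by rw [hvanish 0 n, map_zero]
  have hA1 : A 1 = 0 := PowerSeries.ext fun n => by rw [hvanish 1 n, map_zero]
  rw [hA0, hA1]
  simp
end

section
/- (R ∩ L_{κ,H}-image = {0}, with trivial kernel.) Assume π ≠ 0 and κ ≠ n·1_K for every nonnegative integer n. If a family (A_j)_{j≥0} of formal power series in K[[t]] satisfies A_{j-1} + (j+1)(κ-j)π²t·A_{j+1} = 0 for all j ≥ 1 (i.e. L_{κ,H}(A) is concentrated in its 0-th component κπ²t·A_1), then A_j = 0 for all j ≥ 0; in particular L_{κ,H}(A) = 0. -/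
/-- (`R ∩ L_{κ,H}`-image `= {0}` with trivial kernel; Lemma 4.7 of the
paper, stated algebraically.) Assume `π ≠ 0` and `κ ≠ n·1_K` for every `n ∈ ℕ`. If a
family `(A_j)` of formal power series satisfies
`A_{j-1} + (j+1)(κ-j) π² t A_{j+1} = 0` for all `j ≥ 1` (i.e. `L_{κ,H}(A)` is
concentrated in its 0-th component `κ π² t A₁`), then `A_j = 0` for all `j`;
in particular `L_{κ,H}(A) = 0`. -/
theorem statement9
    (K : Type*) [Field K] [CharZero K] (π κ : K)
    (hπ : π ≠ 0) (hκ : ∀ n : ℕ, κ ≠ (n : K))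
    (A : ℕ → PowerSeries K)
    (hsys : ∀ j : ℕ, 1 ≤ j →
      A (j - 1) + PowerSeries.C (((j : K) + 1) * (κ - (j : K)) * π ^ 2)
          * (PowerSeries.X * A (j + 1)) = 0) :
    (∀ j : ℕ, A j = 0) ∧
      PowerSeries.C (κ * π ^ 2) * (PowerSeries.X * A 1) = 0 := by
  have key : ∀ k : ℕ, ∀ j : ℕ, (PowerSeries.coeff k) (A j) = 0 := by
    intro k
    induction k with
    | zero =>
      intro j
      have h := hsys (j + 1) (by omega)
      have h0 := congrArg (PowerSeries.coeff 0) h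
      simpa only [map_add, PowerSeries.coeff_C_mul, PowerSeries.coeff_zero_X_mul,
        mul_zero, add_zero, map_zero, Nat.add_sub_cancel] using h0
    | succ n ih =>
      intro j
      have h := hsys (j + 1) (by omega)
      have h0 := congrArg (PowerSeries.coeff (n + 1)) h
      simpa only [map_add, PowerSeries.coeff_C_mul, PowerSeries.coeff_succ_X_mul, ih,
        mul_zero, add_zero, PowerSeries.coeff_zero_eq_constantCoeff, map_zero, Nat.add_sub_cancel] using h0
  have hA : ∀ j : ℕ, A j = 0 := fun j => PowerSeries.ext fun k => by simp [key k j]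
  exact ⟨hA, by simp [hA 1]⟩
end

section
/- (Decomposition S(b',ε;0) = R(b';0) + L_{κ,H} S(b',ε;ε).) Given any family (A_j)_{j≥0} of formal power series in K[[t]] with ‖A_j[n]‖ ≤ p^{-(2b'n + εj)} for all j, n ≥ 0, there exist η ∈ K[[t]] with ‖η[n]‖ ≤ p^{-2b'n} for all n, and a family (B_j)_{j≥0} in K[[t]] with ‖B_j[n]‖ ≤ p^{-(2b'n + εj + ε)} for all j, n, such that A_0 = η + κπ²t·B_1 and A_j = B_{j-1} + (j+1)(κ-j)π²t·B_{j+1} for all j ≥ 1. -/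
open PowerSeries Finset

private noncomputable def cAux {K : Type*} [Field K] (κ : K) : ℕ → ℕ → K
  | _, 0 => 1
  | j, (i+1) => ((j : K) + 2) * (κ - ((j : K) + 1)) * cAux κ (j + 2) i

private lemma nonarch_sum {K : Type*} [Field K] (v : AbsoluteValue K ℝ)
    (hv : ∀ x y : K, v (x + y) ≤ max (v x) (v y))
    {α : Type*} (s : Finset α) (f : α → K) (C : ℝ) (hC : 0 ≤ C)
    (hf : ∀ i ∈ s, v (f i) ≤ C) : v (∑ i ∈ s, f i) ≤ C := by
  induction s using Finset.cons_induction with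
  | empty => simpa using hC
  | cons a s ha ih =>
    rw [Finset.sum_cons]
    refine (hv _ _).trans (max_le (hf a (Finset.mem_cons_self a s)) ?_)
    exact ih fun i hi => hf i (Finset.mem_cons_of_mem hi)


/-- (Decomposition `S(b',ε;0) = R(b';0) + L_{κ,H} S(b',ε;ε)`; Lemma 3.3
of the paper.) With `p ≥ 5` prime, `κ = ι(κ₀)` for `κ₀ ∈ ℤ_p` not a nonnegative integer,
`‖π‖ = p^{-1/(p-1)}`, `(p-1)/p ≥ b > 1/(p-1)`, `b ≥ b'`, `ε = b - 1/(p-1)`: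
given any family `(A_j)` with `‖A_j[n]‖ ≤ p^{-(2b'n + εj)}`, there exist `η ∈ K[[t]]`
with `‖η[n]‖ ≤ p^{-2b'n}` and a family `(B_j)` with `‖B_j[n]‖ ≤ p^{-(2b'n + εj + ε)}`
such that `A₀ = η + κ π² t B₁` and `A_j = B_{j-1} + (j+1)(κ-j) π² t B_{j+1}` for `j ≥ 1`. -/
theorem statement10
    (p : ℕ) (hp : p.Prime) (hp5 : 5 ≤ p) [Fact p.Prime]
    (K : Type*) [Field K] [CharZero K]
    (v : AbsoluteValue K ℝ)
    (hv_nonarch : ∀ x y : K, v (x + y) ≤ max (v x) (v y))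
    (ι : ℤ_[p] →+* K) (hι : ∀ x : ℤ_[p], v (ι x) = ‖x‖)
    (κ₀ : ℤ_[p]) (hκ₀ : ∀ n : ℕ, κ₀ ≠ (n : ℤ_[p]))
    (κ : K) (hκ : κ = ι κ₀)
    (π : K) (hπ : v π = (p : ℝ) ^ (-(1 / ((p : ℝ) - 1))))
    (b b' ε : ℝ)
    (hb_u : b ≤ ((p : ℝ) - 1) / (p : ℝ)) (hb_l : 1 / ((p : ℝ) - 1) < b) (hb' : b' ≤ b)
    (hε : ε = b - 1 / ((p : ℝ) - 1))
    (A : ℕ → PowerSeries K)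
    (hA : ∀ j n : ℕ, v (PowerSeries.coeff (R := K) n (A j)) ≤
      (p : ℝ) ^ (-(2 * b' * (n : ℝ) + ε * (j : ℝ)))) :
    ∃ (η : PowerSeries K) (B : ℕ → PowerSeries K),
      (∀ n : ℕ, v (PowerSeries.coeff (R := K) n η) ≤ (p : ℝ) ^ (-(2 * b' * (n : ℝ)))) ∧
      (∀ j n : ℕ, v (PowerSeries.coeff (R := K) n (B j)) ≤
        (p : ℝ) ^ (-(2 * b' * (n : ℝ) + ε * (j : ℝ) + ε))) ∧
      A 0 = η + PowerSeries.C (R := K) (κ * π ^ 2) * (PowerSeries.X * B 1) ∧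
      ∀ j : ℕ, 1 ≤ j →
        A j = B (j - 1) + PowerSeries.C (R := K) (((j : K) + 1) * (κ - (j : K)) * π ^ 2)
            * (PowerSeries.X * B (j + 1)) := by
  have hp1 : (1 : ℝ) < (p : ℝ) := by exact_mod_cast hp.one_lt
  have hp0 : (0 : ℝ) < (p : ℝ) := by linarith
  -- basic absolute value facts
  have hvnat : ∀ x : ℤ_[p], v (ι x) ≤ 1 := fun x => by rw [hι]; exact x.norm_le_one
  have hc1 : ∀ j i : ℕ, v (cAux κ j i) ≤ 1 := by
    intro j i
    induction i generalizing j with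
    | zero => simp [cAux]
    | succ i ih =>
      have h1 : ((j : K) + 2) * (κ - ((j : K) + 1)) = ι (((j : ℤ_[p]) + 2) * (κ₀ - ((j : ℤ_[p]) + 1))) := by
        rw [hκ]; push_cast [map_mul, map_add, map_sub, map_natCast, map_ofNat, map_one]; ring
      rw [cAux, map_mul]
      calc v (((j:K)+2) * (κ - ((j:K)+1))) * v (cAux κ (j+2) i)
          ≤ 1 * 1 := by
            apply mul_le_mul _ (ih _) (v.nonneg _) zero_le_one
            rw [h1]; exact hvnat _
        _ = 1 := by ring
  -- definition of B
  set B : ℕ → PowerSeries K := fun j => PowerSeries.mk (fun n =>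
    ∑ i ∈ Finset.range (n+1),
      (-1 : K)^i * cAux κ j i * π^(2*i) * PowerSeries.coeff (R := K) (n-i) (A (j+1+2*i))) with hB
  -- key recursion
  have key : ∀ j : ℕ, B j = A (j+1) -
      PowerSeries.C (R := K) (((j : K) + 2) * (κ - ((j : K) + 1)) * π^2) * (PowerSeries.X * B (j+2)) := by
    intro j
    ext n
    cases n with
    | zero =>
      simp [hB, cAux, PowerSeries.coeff_zero_X_mul]
    | succ n =>
      rw [hB]
      simp only [PowerSeries.coeff_mk, map_sub, PowerSeries.coeff_C_mul,
        PowerSeries.coeff_succ_X_mul]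
      rw [Finset.sum_range_succ']
      have : ∀ i ∈ Finset.range (n+1),
          (-1:K)^(i+1) * cAux κ j (i+1) * π^(2*(i+1)) *
            PowerSeries.coeff (R := K) (n+1-(i+1)) (A (j+1+2*(i+1)))
          = -(((j:K)+2) * (κ - ((j:K)+1)) * π^2 *
              ((-1:K)^i * cAux κ (j+2) i * π^(2*i) * PowerSeries.coeff (R := K) (n-i) (A (j+2+1+2*i)))) := by
        intro i hi
        have h2 : n+1-(i+1) = n-i := by omega
        have h3 : j+1+2*(i+1) = j+2+1+2*i := by omega
        rw [h2, h3]
        simp only [cAux]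
        ring
      have h0 : (-1:K)^0 * cAux κ j 0 * π^(2*0) * PowerSeries.coeff (R := K) (n+1-0) (A (j+1+2*0))
          = PowerSeries.coeff (R := K) (n+1) (A (j+1)) := by simp [cAux]
      rw [Finset.sum_congr rfl this, Finset.sum_neg_distrib, h0, Finset.mul_sum]
      ring
  -- absolute value of powers of π
  have hπ2 : ∀ i : ℕ, v (π ^ i) = (p:ℝ) ^ (-(1/((p:ℝ)-1)) * (i:ℝ)) := by
    intro i
    rw [map_pow, hπ, ← Real.rpow_natCast ((p:ℝ) ^ (-(1/((p:ℝ)-1)))) i,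
      ← Real.rpow_mul (le_of_lt hp0)]
  have hvκ : v κ ≤ 1 := by rw [hκ]; exact hvnat κ₀
  -- bound on B coefficients
  have hBb : ∀ j n : ℕ, v (PowerSeries.coeff (R := K) n (B j)) ≤
      (p:ℝ) ^ (-(2*b'*(n:ℝ) + ε*(j:ℝ) + ε)) := by
    intro j n
    rw [hB]
    simp only [PowerSeries.coeff_mk]
    apply nonarch_sum v hv_nonarch _ _ _ (le_of_lt (Real.rpow_pos_of_pos hp0 _))
    intro i hi
    rw [Finset.mem_range] at hi
    have hin : i ≤ n := by omega
    have e1 : v ((-1:K)^i * cAux κ j i * π^(2*i) * PowerSeries.coeff (R := K) (n-i) (A (j+1+2*i)))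
        = (v (-1:K))^i * v (cAux κ j i) * v (π^(2*i)) *
          v (PowerSeries.coeff (R := K) (n-i) (A (j+1+2*i))) := by
      rw [map_mul, map_mul, map_mul, map_pow]
    have e2 : v (-1:K) = 1 := by
      have := v.map_neg (1:K)
      rw [map_one] at this; exact this
    rw [e1, e2, one_pow, one_mul, hπ2]
    calc v (cAux κ j i) * (p:ℝ) ^ (-(1/((p:ℝ)-1)) * ((2*i:ℕ):ℝ)) *
          v (PowerSeries.coeff (R := K) (n-i) (A (j+1+2*i)))
        ≤ 1 * (p:ℝ) ^ (-(1/((p:ℝ)-1)) * ((2*i:ℕ):ℝ)) *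
          ((p:ℝ) ^ (-(2*b'*((n-i:ℕ):ℝ) + ε*((j+1+2*i:ℕ):ℝ)))) := by
          apply mul_le_mul
          · exact mul_le_mul_of_nonneg_right (hc1 j i)
              (le_of_lt (Real.rpow_pos_of_pos hp0 _))
          · exact hA _ _
          · exact v.nonneg _
          · positivity
      _ = (p:ℝ) ^ (-(1/((p:ℝ)-1)) * ((2*i:ℕ):ℝ) +
            (-(2*b'*((n-i:ℕ):ℝ) + ε*((j+1+2*i:ℕ):ℝ)))) := by
          rw [one_mul, ← Real.rpow_add hp0]
      _ ≤ (p:ℝ) ^ (-(2*b'*(n:ℝ) + ε*(j:ℝ) + ε)) := by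
          apply (Real.rpow_le_rpow_left_iff hp1).mpr
          have hni : ((n-i:ℕ):ℝ) = (n:ℝ) - (i:ℝ) := Nat.cast_sub hin
          rw [hni]
          push_cast
          have hprod : (0:ℝ) ≤ (i:ℝ) * (b - b') :=
            mul_nonneg (by positivity) (sub_nonneg.mpr hb')
          have hεv : ε = b - 1/((p:ℝ)-1) := hε
          nlinarith [hprod]
  -- the decomposition
  refine ⟨A 0 - PowerSeries.C (R := K) (κ * π ^ 2) * (PowerSeries.X * B 1), B, ?_, hBb, by ring, ?_⟩
  · intro n
    rw [map_sub, PowerSeries.coeff_C_mul, sub_eq_add_neg]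
    refine (hv_nonarch _ _).trans (max_le ?_ ?_)
    · have := hA 0 n
      simpa using this
    · rw [v.map_neg]
      cases n with
      | zero =>
        rw [PowerSeries.coeff_zero_X_mul, mul_zero, map_zero]
        positivity
      | succ m =>
        rw [PowerSeries.coeff_succ_X_mul, map_mul, map_mul]
        calc v κ * v (π^2) * v (PowerSeries.coeff (R := K) m (B 1))
            ≤ 1 * (p:ℝ) ^ (-(1/((p:ℝ)-1)) * ((2:ℕ):ℝ)) *
              ((p:ℝ) ^ (-(2*b'*(m:ℝ) + ε*((1:ℕ):ℝ) + ε))) := by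
              apply mul_le_mul
              · exact mul_le_mul hvκ (le_of_eq (hπ2 2)) (v.nonneg _) zero_le_one
              · exact hBb 1 m
              · exact v.nonneg _
              · positivity
          _ = (p:ℝ) ^ (-(1/((p:ℝ)-1)) * ((2:ℕ):ℝ) +
                (-(2*b'*(m:ℝ) + ε*((1:ℕ):ℝ) + ε))) := by
              rw [one_mul, ← Real.rpow_add hp0]
          _ ≤ (p:ℝ) ^ (-(2*b'*((m+1:ℕ):ℝ))) := by
              apply (Real.rpow_le_rpow_left_iff hp1).mpr
              push_cast
              nlinarith [hε, hb']
  · intro j hj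
    obtain ⟨m, rfl⟩ := Nat.exists_eq_add_of_le hj
    rw [show 1 + m - 1 = m from by omega, show 1 + m = m + 1 from by omega, key m,
      show ((↑(m+1):K)+1)*(κ-(↑(m+1):K))*π^2 = ((m:K)+2)*(κ-((m:K)+1))*π^2 from by
        push_cast; ring]
    ring
end

section
/- (Decomposition S(b',ε;0) = R(b';0) + ∂_κ S(b',ε;ε).) Assume in addition that K is complete with respect to ‖·‖. Given any family (A_j)_{j≥0} of formal power series in K[[t]] with ‖A_j[n]‖ ≤ p^{-(2b'n + εj)} for all j, n ≥ 0, there exist η ∈ K[[t]] with ‖η[n]‖ ≤ p^{-2b'n} for all n, and a family (B_j)_{j≥0} in K[[t]] with ‖B_j[n]‖ ≤ p^{-(2b'n + εj + ε)} for all j, n, such that A_0 = η + t·B_0' + κπ²t·B_1 and A_j = t·B_j' + B_{j-1} + (j+1)(κ-j)π²t·B_{j+1} for all j ≥ 1. (Hence the first symmetric-power cohomology H^1_κ(S(b',ε)) is isomorphic to R(b').) -/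
/-- Successive approximations used in the proof of `statement11`. -/
def statement11Approx {K : Type*} [Field K] (κ π : K) (a : ℕ → ℕ → K) :
    ℕ → ℕ → ℕ → K
  | 0, _, _ => 0
  | s+1, j, n => a (j+1) n - (n : K) * statement11Approx κ π a s (j+1) n
      - (if n = 0 then 0 else ((j : K)+2) * (κ - ((j : K)+1)) * π^2 *
          statement11Approx κ π a s (j+2) (n-1))

set_option maxHeartbeats 1000000 in
/-- (Decomposition `S(b',ε;0) = R(b';0) + ∂_κ S(b',ε;ε)`; Theorem 3.4
of the paper; hence `H¹_κ(S(b',ε)) ≅ R(b')`.) Same setting as Statement 10, with `K`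
moreover complete: given any family `(A_j)` with `‖A_j[n]‖ ≤ p^{-(2b'n + εj)}`, there
exist `η ∈ K[[t]]` with `‖η[n]‖ ≤ p^{-2b'n}` and a family `(B_j)` with
`‖B_j[n]‖ ≤ p^{-(2b'n + εj + ε)}` such that `A₀ = η + t B₀' + κ π² t B₁` and
`A_j = t B_j' + B_{j-1} + (j+1)(κ-j) π² t B_{j+1}` for all `j ≥ 1`. -/
theorem statement11
    (p : ℕ) (hp : p.Prime) (hp5 : 5 ≤ p) [Fact p.Prime]
    (K : Type*) [Field K] [CharZero K]
    (v : AbsoluteValue K ℝ)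
    (hv_nonarch : ∀ x y : K, v (x + y) ≤ max (v x) (v y))
    -- K is complete with respect to v
    (hcomplete : ∀ s : ℕ → K,
      (∀ ε : ℝ, 0 < ε → ∃ N : ℕ, ∀ m ≥ N, ∀ n ≥ N, v (s m - s n) < ε) →
      ∃ L : K, ∀ ε : ℝ, 0 < ε → ∃ N : ℕ, ∀ n ≥ N, v (s n - L) < ε)
    (ι : ℤ_[p] →+* K) (hι : ∀ x : ℤ_[p], v (ι x) = ‖x‖)
    (κ₀ : ℤ_[p]) (hκ₀ : ∀ n : ℕ, κ₀ ≠ (n : ℤ_[p]))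
    (κ : K) (hκ : κ = ι κ₀)
    (π : K) (hπ : v π = (p : ℝ) ^ (-(1 / ((p : ℝ) - 1))))
    (b b' ε : ℝ)
    (hb_u : b ≤ ((p : ℝ) - 1) / (p : ℝ)) (hb_l : 1 / ((p : ℝ) - 1) < b) (hb' : b' ≤ b)
    (hε : ε = b - 1 / ((p : ℝ) - 1))
    (A : ℕ → PowerSeries K)
    (hA : ∀ j n : ℕ, v (PowerSeries.coeff n (A j)) ≤
      (p : ℝ) ^ (-(2 * b' * (n : ℝ) + ε * (j : ℝ)))) :
    ∃ (η : PowerSeries K) (B : ℕ → PowerSeries K),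
      (∀ n : ℕ, v (PowerSeries.coeff n η) ≤ (p : ℝ) ^ (-(2 * b' * (n : ℝ)))) ∧
      (∀ j n : ℕ, v (PowerSeries.coeff n (B j)) ≤
        (p : ℝ) ^ (-(2 * b' * (n : ℝ) + ε * (j : ℝ) + ε))) ∧
      A 0 = η + PowerSeries.X * PowerSeries.derivative K (B 0)
          + PowerSeries.C (κ * π ^ 2) * (PowerSeries.X * B 1) ∧
      ∀ j : ℕ, 1 ≤ j →
        A j = PowerSeries.X * PowerSeries.derivative K (B j) + B (j - 1)
          + PowerSeries.C (((j : K) + 1) * (κ - (j : K)) * π ^ 2)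
              * (PowerSeries.X * B (j + 1)) := by
  classical
  have hPpos : (0:ℝ) < (p:ℝ) := by exact_mod_cast hp.pos
  have hP1 : (1:ℝ) < (p:ℝ) := by exact_mod_cast hp.one_lt
  have hεpos : 0 < ε := by rw [hε]; linarith
  have hεb : ε + 1 / ((p:ℝ) - 1) = b := by rw [hε]; ring
  have hmono : ∀ x y : ℝ, x ≤ y → (p:ℝ) ^ x ≤ (p:ℝ) ^ y := fun x y h =>
    (Real.rpow_le_rpow_left_iff hP1).mpr h
  have hrpos : ∀ x : ℝ, 0 < (p:ℝ) ^ x := fun x => Real.rpow_pos_of_pos hPpos x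
  have hadd : ∀ x y : ℝ, (p:ℝ) ^ x * (p:ℝ) ^ y = (p:ℝ) ^ (x + y) := fun x y =>
    (Real.rpow_add hPpos x y).symm
  -- nonarchimedean helpers
  have nsub : ∀ x y : K, v (x - y) ≤ max (v x) (v y) := by
    intro x y
    have h := hv_nonarch x (-y)
    rw [v.map_neg] at h
    simpa [sub_eq_add_neg] using h
  have nsub3 : ∀ x y z : K, v (x - y - z) ≤ max (v x) (max (v y) (v z)) := by
    intro x y z
    calc v (x - y - z) ≤ max (v (x - y)) (v z) := nsub _ _
      _ ≤ max (max (v x) (v y)) (v z) := max_le_max (nsub x y) le_rfl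
      _ = max (v x) (max (v y) (v z)) := max_assoc _ _ _
  -- norms of integer-like elements
  have hvnat : ∀ n : ℕ, v ((n : K)) ≤ 1 := by
    intro n
    rw [show ((n : ℕ) : K) = ι ((n : ℤ_[p])) from (map_natCast ι n).symm, hι]
    exact PadicInt.norm_le_one _
  have hvκn : ∀ n : ℕ, v (κ - (n : K)) ≤ 1 := by
    intro n
    rw [hκ, show ((n : ℕ) : K) = ι ((n : ℤ_[p])) from (map_natCast ι n).symm,
      ← map_sub, hι]
    exact PadicInt.norm_le_one _
  have hvπ2 : v (π ^ 2) = (p:ℝ) ^ (-(2 * (1 / ((p:ℝ) - 1)))) := by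
    rw [map_pow, hπ, ← Real.rpow_natCast ((p:ℝ) ^ (-(1 / ((p:ℝ) - 1)))) 2,
      ← Real.rpow_mul hPpos.le]
    norm_num
    ring_nf
  have hvc : ∀ j : ℕ, v (((j : K)+2) * (κ - ((j : K)+1)) * π^2) ≤
      (p:ℝ) ^ (-(2 * (1 / ((p:ℝ) - 1)))) := by
    intro j
    have h1 : v ((j : K)+2) ≤ 1 := by
      have := hvnat (j+2); push_cast at this; exact this
    have h2 : v (κ - ((j : K)+1)) ≤ 1 := by
      have := hvκn (j+1); push_cast at this; exact this
    rw [map_mul, map_mul, hvπ2]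
    calc v ((j : K)+2) * v (κ - ((j : K)+1)) * (p:ℝ) ^ (-(2 * (1 / ((p:ℝ) - 1))))
        ≤ 1 * 1 * (p:ℝ) ^ (-(2 * (1 / ((p:ℝ) - 1)))) := by
          gcongr <;> first | exact v.nonneg _ | exact (hrpos _).le
      _ = (p:ℝ) ^ (-(2 * (1 / ((p:ℝ) - 1)))) := by ring
  set a : ℕ → ℕ → K := fun j n => PowerSeries.coeff n (A j) with ha
  set T : ℕ → ℕ → ℝ := fun j n => (p:ℝ) ^ (-(2*b'*(n:ℝ) + ε*(j:ℝ) + ε)) with hT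
  have hTpos : ∀ j n, 0 < T j n := fun j n => hrpos _
  have hTA : ∀ j n, v (a (j+1) n) ≤ T j n := by
    intro j n
    calc v (a (j+1) n) ≤ (p:ℝ) ^ (-(2 * b' * (n:ℝ) + ε * ((j+1 : ℕ) : ℝ))) := hA _ n
      _ = T j n := by simp only [hT]; congr 1; push_cast; ring
  have hTd : ∀ j n, T (j+1) n ≤ T j n := by
    intro j n
    simp only [hT]
    apply hmono; push_cast; nlinarith [hεpos]
  have hTc : ∀ j n : ℕ, (p:ℝ) ^ (-(2 * (1 / ((p:ℝ) - 1)))) * T (j+2) n ≤ T j (n+1) := by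
    intro j n
    simp only [hT, hadd]
    apply hmono; push_cast; nlinarith [hεpos]
  -- uniform bound on the approximations
  have hBnd : ∀ s j n, v (statement11Approx κ π a s j n) ≤ T j n := by
    intro s
    induction s with
    | zero => intro j n; simp only [statement11Approx, map_zero]; exact (hTpos j n).le
    | succ s ih =>
      intro j n
      refine le_trans (nsub3 _ _ _) (max_le (hTA j n) (max_le ?_ ?_))
      · calc v ((n : K) * statement11Approx κ π a s (j+1) n)
            = v ((n : K)) * v (statement11Approx κ π a s (j+1) n) := map_mul v _ _
          _ ≤ 1 * T (j+1) n := mul_le_mul (hvnat n) (ih (j+1) n) (v.nonneg _) zero_le_one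
          _ = T (j+1) n := one_mul _
          _ ≤ T j n := hTd j n
      · cases n with
        | zero => simp only [if_pos rfl, map_zero, if_true]; exact (hTpos j 0).le
        | succ m =>
          rw [if_neg (Nat.succ_ne_zero m)]
          have : (m + 1 - 1 : ℕ) = m := rfl
          rw [this, map_mul]
          calc v (((j : K)+2) * (κ - ((j : K)+1)) * π^2) *
                v (statement11Approx κ π a s (j+2) m)
              ≤ (p:ℝ) ^ (-(2 * (1 / ((p:ℝ) - 1)))) * T (j+2) m :=
                mul_le_mul (hvc j) (ih (j+2) m) (v.nonneg _) (hrpos _).le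
            _ ≤ T j (m+1) := hTc j m
  -- difference bound
  have hDiff : ∀ s j n, v (statement11Approx κ π a (s+1) j n -
      statement11Approx κ π a s j n) ≤
      (p:ℝ) ^ (-(2*b'*(n:ℝ) + ε*(j:ℝ) + ε) - ε * max ((s:ℝ) - (n:ℝ)) 0) := by
    intro s
    induction s with
    | zero =>
      intro j n
      have h0 : max ((0:ℝ) - (n:ℝ)) 0 = 0 := by
        apply max_eq_right; simp
      have e1 : statement11Approx κ π a 1 j n - statement11Approx κ π a 0 j n
          = a (j+1) n := by
        simp [statement11Approx]
      rw [e1]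
      push_cast
      rw [h0]
      calc v (a (j+1) n) ≤ T j n := hTA j n
        _ = (p:ℝ) ^ (-(2*b'*(n:ℝ) + ε*(j:ℝ) + ε) - ε * 0) := by
            simp only [hT]; ring_nf
    | succ s ih =>
      intro j n
      have key : statement11Approx κ π a (s+2) j n - statement11Approx κ π a (s+1) j n
          = (0:K) - (n : K) * (statement11Approx κ π a (s+1) (j+1) n -
              statement11Approx κ π a s (j+1) n)
            - (if n = 0 then 0 else ((j : K)+2) * (κ - ((j : K)+1)) * π^2 *
              (statement11Approx κ π a (s+1) (j+2) (n-1) -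
                statement11Approx κ π a s (j+2) (n-1))) := by
        show statement11Approx κ π a (s+1+1) j n - statement11Approx κ π a (s+1) j n = _
        simp only [statement11Approx]
        split_ifs with h <;> ring
      rw [key]
      have hmax1 : max ((s:ℝ) + 1 - (n:ℝ)) 0 ≤ max ((s:ℝ) - (n:ℝ)) 0 + 1 := by
        apply max_le
        · linarith [le_max_left ((s:ℝ) - (n:ℝ)) 0]
        · linarith [le_max_right ((s:ℝ) - (n:ℝ)) 0]
      refine le_trans (nsub3 _ _ _) (max_le ?_ (max_le ?_ ?_))
      · rw [map_zero]; push_cast; exact (hrpos _).le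
      · calc v ((n : K) * _) = v ((n:K)) * v _ := map_mul v _ _
          _ ≤ 1 * ((p:ℝ) ^ (-(2*b'*(n:ℝ) + ε*((j+1:ℕ):ℝ) + ε) - ε * max ((s:ℝ) - (n:ℝ)) 0)) :=
              mul_le_mul (hvnat n) (ih (j+1) n) (v.nonneg _) zero_le_one
          _ = (p:ℝ) ^ (-(2*b'*(n:ℝ) + ε*((j+1:ℕ):ℝ) + ε) - ε * max ((s:ℝ) - (n:ℝ)) 0) :=
              one_mul _
          _ ≤ (p:ℝ) ^ (-(2*b'*(n:ℝ) + ε*(j:ℝ) + ε) - ε * max (((s+1:ℕ):ℝ) - (n:ℝ)) 0) := by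
              apply hmono; push_cast
              nlinarith [hmax1, hεpos.le]
      · cases n with
        | zero => rw [if_pos rfl, map_zero]; exact (hrpos _).le
        | succ m =>
          rw [if_neg (Nat.succ_ne_zero m)]
          have hm1 : (m + 1 - 1 : ℕ) = m := rfl
          rw [hm1, map_mul]
          have hmaxeq : max ((s:ℝ) - (m:ℝ)) 0 = max (((s:ℝ)+1) - ((m:ℝ)+1)) 0 := by
            congr 1; ring
          calc v (((j : K)+2) * (κ - ((j : K)+1)) * π^2) * v _
              ≤ (p:ℝ) ^ (-(2 * (1 / ((p:ℝ) - 1)))) *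
                ((p:ℝ) ^ (-(2*b'*(m:ℝ) + ε*((j+2:ℕ):ℝ) + ε) - ε * max ((s:ℝ) - (m:ℝ)) 0)) :=
                mul_le_mul (hvc j) (ih (j+2) m) (v.nonneg _) (hrpos _).le
            _ = (p:ℝ) ^ ((-(2 * (1 / ((p:ℝ) - 1)))) +
                (-(2*b'*(m:ℝ) + ε*((j+2:ℕ):ℝ) + ε) - ε * max ((s:ℝ) - (m:ℝ)) 0)) := hadd _ _
            _ ≤ (p:ℝ) ^ (-(2*b'*((m+1:ℕ):ℝ) + ε*(j:ℝ) + ε) -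
                ε * max (((s+1:ℕ):ℝ) - ((m+1:ℕ):ℝ)) 0) := by
                apply hmono
                push_cast
                rw [← hmaxeq]
                nlinarith [hεpos, hb', hεb]
  -- gap bound
  have hGap : ∀ j n s m : ℕ, s ≤ m → v (statement11Approx κ π a m j n -
      statement11Approx κ π a s j n) ≤
      (p:ℝ) ^ (-(2*b'*(n:ℝ) + ε*(j:ℝ) + ε) - ε * max ((s:ℝ) - (n:ℝ)) 0) := by
    intro j n s m hm
    induction m, hm using Nat.le_induction with
    | base => simp only [sub_self, map_zero]; exact (hrpos _).le
    | succ m hm ih =>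
      have e : statement11Approx κ π a (m+1) j n - statement11Approx κ π a s j n
          = (statement11Approx κ π a (m+1) j n - statement11Approx κ π a m j n)
            + (statement11Approx κ π a m j n - statement11Approx κ π a s j n) := by ring
      rw [e]
      refine le_trans (hv_nonarch _ _) (max_le ?_ ih)
      refine le_trans (hDiff m j n) (hmono _ _ ?_)
      have : max ((s:ℝ) - (n:ℝ)) 0 ≤ max ((m:ℝ) - (n:ℝ)) 0 := by
        apply max_le_max _ le_rfl
        have : (s:ℝ) ≤ (m:ℝ) := by exact_mod_cast hm
        linarith
      nlinarith [hεpos.le]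
  -- Cauchy property
  have hCauchy : ∀ j n : ℕ, ∀ δ : ℝ, 0 < δ → ∃ N : ℕ, ∀ m ≥ N, ∀ s ≥ N,
      v (statement11Approx κ π a m j n - statement11Approx κ π a s j n) < δ := by
    intro j n δ hδ
    set r : ℝ := (p:ℝ) ^ (-ε) with hr
    have hr0 : 0 < r := hrpos _
    have hr1 : r < 1 := Real.rpow_lt_one_of_one_lt_of_neg hP1 (by linarith)
    set C : ℝ := (p:ℝ) ^ (-(2*b'*(n:ℝ) + ε*(j:ℝ) + ε) + ε*(n:ℝ)) with hC
    have hC0 : 0 < C := hrpos _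
    obtain ⟨N, hN⟩ := exists_pow_lt_of_lt_one (div_pos hδ hC0) hr1
    refine ⟨N, ?_⟩
    have hbd : ∀ s : ℕ, N ≤ s → ∀ m : ℕ, s ≤ m →
        v (statement11Approx κ π a m j n - statement11Approx κ π a s j n) < δ := by
      intro s hs m hm
      have e2 : C * r ^ s = (p:ℝ) ^ (-(2*b'*(n:ℝ) + ε*(j:ℝ) + ε) + ε*(n:ℝ) + (-ε) * (s:ℝ)) := by
        rw [hC, hr, ← Real.rpow_natCast ((p:ℝ) ^ (-ε)) s, ← Real.rpow_mul hPpos.le, hadd]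
      calc v (statement11Approx κ π a m j n - statement11Approx κ π a s j n)
          ≤ (p:ℝ) ^ (-(2*b'*(n:ℝ) + ε*(j:ℝ) + ε) - ε * max ((s:ℝ) - (n:ℝ)) 0) :=
            hGap j n s m hm
        _ ≤ C * r ^ s := by
            rw [e2]
            apply hmono
            have : (s:ℝ) - (n:ℝ) ≤ max ((s:ℝ) - (n:ℝ)) 0 := le_max_left _ _
            nlinarith [hεpos.le]
        _ ≤ C * r ^ N := by
            apply mul_le_mul_of_nonneg_left _ hC0.le
            exact pow_le_pow_of_le_one hr0.le hr1.le hs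
        _ < C * (δ / C) := by exact mul_lt_mul_of_pos_left hN hC0
        _ = δ := by field_simp
    intro m hm s hs
    rcases le_total s m with h | h
    · exact hbd s hs m h
    · rw [v.map_sub]; exact hbd m hm s h
  choose L hL using fun j n => hcomplete (fun s => statement11Approx κ π a s j n) (hCauchy j n)
  -- bound on the limit
  have hLb : ∀ j n, v (L j n) ≤ T j n := by
    intro j n
    by_contra hlt
    push_neg at hlt
    obtain ⟨N, hN⟩ := hL j n (v (L j n) - T j n) (by linarith)
    have h1 := hN N le_rfl
    have h2 := hBnd N j n
    have h3 : v (L j n) ≤ max (v (statement11Approx κ π a N j n))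
        (v (statement11Approx κ π a N j n - L j n)) := by
      have := nsub (statement11Approx κ π a N j n) (statement11Approx κ π a N j n - L j n)
      simpa using this
    have : v (L j n) < v (L j n) := lt_of_le_of_lt h3 (max_lt (by linarith) (by linarith [hTpos j n]))
    exact absurd this (lt_irrefl _)
  -- fixed point equation
  have hfix : ∀ j n : ℕ, L j n = a (j+1) n - (n : K) * L (j+1) n -
      (if n = 0 then 0 else ((j : K)+2) * (κ - ((j : K)+1)) * π^2 * L (j+2) (n-1)) := by
    intro j n
    set R : K := a (j+1) n - (n : K) * L (j+1) n -
      (if n = 0 then 0 else ((j : K)+2) * (κ - ((j : K)+1)) * π^2 * L (j+2) (n-1)) with hR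
    have hz : ∀ δ : ℝ, 0 < δ → v (L j n - R) < δ := by
      intro δ hδ
      obtain ⟨N₁, h1⟩ := hL j n δ hδ
      obtain ⟨N₂, h2⟩ := hL (j+1) n δ hδ
      obtain ⟨N₃, h3⟩ := hL (j+2) (n-1) δ hδ
      set s : ℕ := max N₁ (max N₂ N₃) with hs
      have hs1 : N₁ ≤ s + 1 := le_trans (le_max_left _ _) (Nat.le_succ _)
      have hs2 : N₂ ≤ s := le_trans (le_max_left _ _) (le_max_right _ _)
      have hs3 : N₃ ≤ s := le_trans (le_max_right _ _) (le_max_right _ _)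
      have e : L j n - R = (L j n - statement11Approx κ π a (s+1) j n)
          + ((n : K) * (L (j+1) n - statement11Approx κ π a s (j+1) n)
            + (if n = 0 then (0:K) else ((j : K)+2) * (κ - ((j : K)+1)) * π^2 *
                (L (j+2) (n-1) - statement11Approx κ π a s (j+2) (n-1)))) := by
        rw [hR]
        simp only [statement11Approx]
        split_ifs with h <;> ring
      rw [e]
      refine lt_of_le_of_lt (le_trans (hv_nonarch _ _)
        (max_le_max le_rfl (hv_nonarch _ _))) ?_
      have b1 : v (L j n - statement11Approx κ π a (s+1) j n) < δ := by
        rw [v.map_sub]; exact h1 (s+1) hs1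
      have b2 : v ((n : K) * (L (j+1) n - statement11Approx κ π a s (j+1) n)) < δ := by
        rw [map_mul]
        calc v ((n:K)) * v (L (j+1) n - statement11Approx κ π a s (j+1) n)
            ≤ 1 * v (L (j+1) n - statement11Approx κ π a s (j+1) n) :=
              mul_le_mul_of_nonneg_right (hvnat n) (v.nonneg _)
          _ = v (L (j+1) n - statement11Approx κ π a s (j+1) n) := one_mul _
          _ < δ := by rw [v.map_sub]; exact h2 s hs2
      have b3 : v (if n = 0 then (0:K) else ((j : K)+2) * (κ - ((j : K)+1)) * π^2 *
          (L (j+2) (n-1) - statement11Approx κ π a s (j+2) (n-1))) < δ := by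
        split_ifs with h
        · rw [map_zero]; exact hδ
        · rw [map_mul]
          have hc1 : v (((j : K)+2) * (κ - ((j : K)+1)) * π^2) ≤ 1 := by
            refine le_trans (hvc j) (Real.rpow_le_one_of_one_le_of_nonpos hP1.le ?_)
            have : 0 < (p:ℝ) - 1 := by linarith
            have : 0 ≤ 1 / ((p:ℝ) - 1) := by positivity
            linarith
          calc v (((j : K)+2) * (κ - ((j : K)+1)) * π^2) *
                v (L (j+2) (n-1) - statement11Approx κ π a s (j+2) (n-1))
              ≤ 1 * v (L (j+2) (n-1) - statement11Approx κ π a s (j+2) (n-1)) :=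
                mul_le_mul_of_nonneg_right hc1 (v.nonneg _)
            _ = v (L (j+2) (n-1) - statement11Approx κ π a s (j+2) (n-1)) := one_mul _
            _ < δ := by rw [v.map_sub]; exact h3 s hs3
      exact max_lt b1 (max_lt b2 b3)
    have h0 : v (L j n - R) = 0 := by
      refine le_antisymm ?_ (v.nonneg _)
      by_contra h
      push_neg at h
      exact absurd (hz _ h) (lt_irrefl _)
    exact sub_eq_zero.mp (v.eq_zero.mp h0)
  -- coefficient computations for power series operations
  have hXd : ∀ (f : PowerSeries K) (n : ℕ),
      PowerSeries.coeff n (PowerSeries.X * PowerSeries.derivative K f)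
        = (n : K) * PowerSeries.coeff n f := by
    intro f n
    cases n with
    | zero => simp
    | succ m =>
      rw [PowerSeries.coeff_succ_X_mul, PowerSeries.coeff_derivative]
      push_cast; ring
  have hCX : ∀ (c : K) (f : PowerSeries K) (n : ℕ),
      PowerSeries.coeff n (PowerSeries.C c * (PowerSeries.X * f))
        = if n = 0 then 0 else c * PowerSeries.coeff (n-1) f := by
    intro c f n
    rw [PowerSeries.coeff_C_mul]
    cases n with
    | zero => simp
    | succ m => rw [PowerSeries.coeff_succ_X_mul, if_neg (Nat.succ_ne_zero m)]; rfl
  refine ⟨PowerSeries.mk (fun n => a 0 n - (n : K) * L 0 n -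
      (if n = 0 then 0 else κ * π^2 * L 1 (n-1))),
    fun j => PowerSeries.mk (fun n => L j n), ?_, ?_, ?_, ?_⟩
  · -- bound on η
    intro n
    rw [PowerSeries.coeff_mk]
    refine le_trans (nsub3 _ _ _) (max_le ?_ (max_le ?_ ?_))
    · calc v (a 0 n) ≤ (p:ℝ) ^ (-(2 * b' * (n:ℝ) + ε * ((0:ℕ):ℝ))) := hA 0 n
        _ = (p:ℝ) ^ (-(2 * b' * (n:ℝ))) := by norm_num
    · calc v ((n : K) * L 0 n) = v ((n:K)) * v (L 0 n) := map_mul v _ _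
        _ ≤ 1 * T 0 n := mul_le_mul (hvnat n) (hLb 0 n) (v.nonneg _) zero_le_one
        _ = T 0 n := one_mul _
        _ ≤ (p:ℝ) ^ (-(2 * b' * (n:ℝ))) := by
            simp only [hT]; apply hmono; push_cast; nlinarith [hεpos]
    · cases n with
      | zero => rw [if_pos rfl, map_zero]; exact (hrpos _).le
      | succ m =>
        rw [if_neg (Nat.succ_ne_zero m)]
        have hm1 : (m + 1 - 1 : ℕ) = m := rfl
        rw [hm1, map_mul, map_mul, hvπ2]
        have hκ1 : v κ ≤ 1 := by simpa using hvκn 0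
        calc v κ * (p:ℝ) ^ (-(2 * (1 / ((p:ℝ) - 1)))) * v (L 1 m)
            ≤ 1 * (p:ℝ) ^ (-(2 * (1 / ((p:ℝ) - 1)))) * T 1 m :=
              mul_le_mul (mul_le_mul_of_nonneg_right hκ1 (hrpos _).le) (hLb 1 m)
                (v.nonneg _) (by positivity)
          _ = (p:ℝ) ^ (-(2 * (1 / ((p:ℝ) - 1)))) * T 1 m := by rw [one_mul]
          _ ≤ (p:ℝ) ^ (-(2 * b' * ((m+1:ℕ):ℝ))) := by
              simp only [hT, hadd]; apply hmono; push_cast; nlinarith [hεpos, hb', hεb]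
  · -- bound on B j
    intro j n
    rw [PowerSeries.coeff_mk]
    exact le_trans (hLb j n) (le_of_eq (by simp only [hT]))
  · -- equation for A 0
    apply PowerSeries.ext
    intro n
    rw [map_add, map_add, hXd, hCX, PowerSeries.coeff_mk, PowerSeries.coeff_mk,
      PowerSeries.coeff_mk]
    show a 0 n = _
    cases n with
    | zero => simp
    | succ m =>
      rw [if_neg (Nat.succ_ne_zero m)]
      ring
  · -- equations for A j, j ≥ 1
    intro j hj
    obtain ⟨k, rfl⟩ : ∃ k, j = k + 1 := ⟨j - 1, by omega⟩
    apply PowerSeries.ext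
    intro n
    rw [map_add, map_add, hXd, hCX, PowerSeries.coeff_mk, PowerSeries.coeff_mk,
      PowerSeries.coeff_mk]
    show a (k+1) n = _
    have hfk := hfix k n
    have hcast : ((k+1 : ℕ) : K) = (k : K) + 1 := by push_cast; ring
    have hsub : (k + 1 - 1 : ℕ) = k := rfl
    rw [hsub, hfk, hcast]
    split_ifs with h
    · ring
    · ring
end

section
/- (Integral recursions expressing the basis vectors w^{(j)} through L_{κ,H}.) Let ι : ℤ_p → K be a ring homomorphism, κ₀ ∈ ℤ_p not a nonnegative integer, κ = ι(κ₀), and π ∈ K. (i) For every m ≥ 0 there exist c_0, …, c_m ∈ ℤ_p with c_0 = 1 such that, setting B_{2(m-l)} := ι(c_l)·π^{2l}·t^l for 0 ≤ l ≤ m and B_j := 0 for all other j, the family L_{κ,H}(B) equals the basis family δ_{j,2m+1} (its j-th entry is 1 if j = 2m+1 and 0 otherwise). (ii) For every m ≥ 1 there exist d, c_0,…,c_{m-1} ∈ ℤ_p with c_0 = 1 such that, setting B_{2(m-l)-1} := ι(c_l)·π^{2l}·t^l for 0 ≤ l ≤ m-1 and B_j := 0 for all other j, the family whose 0-th entry is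 ι(d)·π^{2m}·t^m + κπ²t·B_1 and whose j-th entry for j ≥ 1 is B_{j-1} + (j+1)(κ-j)π²t·B_{j+1} equals the basis family δ_{j,2m}. -/
private lemma aux12 {K : Type*} [CommRing K] (A a π : K) (n : ℕ) :
    PowerSeries.C (-(A * a) * π ^ (2 * (n + 1))) * PowerSeries.X ^ (n + 1)
      + PowerSeries.C (A * π ^ 2)
        * (PowerSeries.X * (PowerSeries.C (a * π ^ (2 * n)) * PowerSeries.X ^ n)) = 0 := by
  simp only [map_mul, map_neg, map_pow]
  ring

/-- (Integral recursions expressing the normalized basis vectors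
`w^{(j)}` through `L_{κ,H}`; proof of Lemma 3.3 of the paper.) Let `ι : ℤ_p → K` be a
ring homomorphism, `κ₀ ∈ ℤ_p` not a nonnegative integer, `κ = ι(κ₀)`, `π ∈ K`.

(i) For every `m ≥ 0` there exist `c_0, …, c_m ∈ ℤ_p` with `c_0 = 1` such that, setting
`B_{2(m-l)} = ι(c_l) π^{2l} t^l` for `0 ≤ l ≤ m` and `B_j = 0` otherwise, the family
`L_{κ,H}(B)` equals the basis family `δ_{j,2m+1}`.

(ii) For every `m ≥ 1` there exist `d, c_0, …, c_{m-1} ∈ ℤ_p` with `c_0 = 1` such that,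
setting `B_{2(m-l)-1} = ι(c_l) π^{2l} t^l` for `0 ≤ l ≤ m-1` and `B_j = 0` otherwise,
the family with 0-th entry `ι(d) π^{2m} t^m + κ π² t B₁` and `j`-th entry
`B_{j-1} + (j+1)(κ-j) π² t B_{j+1}` for `j ≥ 1` equals the basis family `δ_{j,2m}`. -/
theorem statement12
    (p : ℕ) (hp : p.Prime) [Fact p.Prime]
    (K : Type*) [Field K] [CharZero K]
    (ι : ℤ_[p] →+* K)
    (κ₀ : ℤ_[p]) (hκ₀ : ∀ n : ℕ, κ₀ ≠ (n : ℤ_[p]))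
    (κ : K) (hκ : κ = ι κ₀) (π : K) :
    (∀ m : ℕ, ∃ c : ℕ → ℤ_[p], c 0 = 1 ∧
      ∀ B : ℕ → PowerSeries K,
        (∀ l : ℕ, l ≤ m →
          B (2 * (m - l)) = PowerSeries.C (ι (c l) * π ^ (2 * l)) * PowerSeries.X ^ l) →
        (∀ j : ℕ, (∀ l : ℕ, l ≤ m → j ≠ 2 * (m - l)) → B j = 0) →
        (PowerSeries.C (κ * π ^ 2) * (PowerSeries.X * B 1) = 0 ∧
          ∀ j : ℕ, 1 ≤ j →
            B (j - 1) + PowerSeries.C (((j : K) + 1) * (κ - (j : K)) * π ^ 2)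
                * (PowerSeries.X * B (j + 1)) =
              if j = 2 * m + 1 then 1 else 0)) ∧
    (∀ m : ℕ, 1 ≤ m → ∃ (d : ℤ_[p]) (c : ℕ → ℤ_[p]), c 0 = 1 ∧
      ∀ B : ℕ → PowerSeries K,
        (∀ l : ℕ, l ≤ m - 1 →
          B (2 * (m - l) - 1) = PowerSeries.C (ι (c l) * π ^ (2 * l)) * PowerSeries.X ^ l) →
        (∀ j : ℕ, (∀ l : ℕ, l ≤ m - 1 → j ≠ 2 * (m - l) - 1) → B j = 0) →
        (PowerSeries.C (ι d * π ^ (2 * m)) * PowerSeries.X ^ m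
            + PowerSeries.C (κ * π ^ 2) * (PowerSeries.X * B 1) = 0 ∧
          ∀ j : ℕ, 1 ≤ j →
            B (j - 1) + PowerSeries.C (((j : K) + 1) * (κ - (j : K)) * π ^ 2)
                * (PowerSeries.X * B (j + 1)) =
              if j = 2 * m then 1 else 0)) := by

  subst hκ
  constructor
  · -- part (i)
    intro m
    obtain ⟨c, hc0, hcrec⟩ : ∃ c : ℕ → ℤ_[p], c 0 = 1 ∧ ∀ n : ℕ,
        c (n + 1) = -(((2 * (m - n) : ℕ) : ℤ_[p]) *
          (κ₀ - ((2 * (m - 1 - n) + 1 : ℕ) : ℤ_[p]))) * c n :=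
      ⟨fun l => Nat.rec 1 (fun l cl => -(((2 * (m - l) : ℕ) : ℤ_[p]) *
        (κ₀ - ((2 * (m - 1 - l) + 1 : ℕ) : ℤ_[p]))) * cl) l, rfl, fun n => rfl⟩
    refine ⟨c, hc0, ?_⟩
    intro B hB hB0
    have hodd : ∀ j : ℕ, Odd j → B j = 0 := by
      intro j hj
      obtain ⟨t, ht⟩ := hj
      exact hB0 j (fun l hl h => by omega)
    constructor
    · rw [hodd 1 odd_one]
      simp
    · intro j hj
      rcases Nat.even_or_odd j with he | ho
      · obtain ⟨k, hk⟩ := he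
        rw [hodd (j - 1) ⟨k - 1, by omega⟩, hodd (j + 1) ⟨k, by omega⟩, if_neg (by omega)]
        simp
      · obtain ⟨k, hk⟩ := ho
        subst hk
        rcases lt_trichotomy k m with hkm | hkm | hkm
        · -- k < m
          have e1 : 2 * k + 1 - 1 = 2 * (m - (m - k)) := by omega
          have e2 : 2 * k + 1 + 1 = 2 * (m - (m - k - 1)) := by omega
          rw [e1, e2, hB (m - k) (by omega), hB (m - k - 1) (by omega), if_neg (by omega)]
          obtain ⟨n, hn⟩ : ∃ n, m - k = n + 1 := ⟨m - k - 1, by omega⟩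
          have hn' : m - k - 1 = n := by omega
          have hrec := hcrec n
          have e4 : 2 * (m - n) = 2 * k + 2 := by omega
          have e5 : 2 * (m - 1 - n) + 1 = 2 * k + 1 := by omega
          rw [e4, e5] at hrec
          rw [hn', hn, hrec]
          have hι : ι (-(((2 * k + 2 : ℕ) : ℤ_[p]) * (κ₀ - ((2 * k + 1 : ℕ) : ℤ_[p]))) * c n) =
              -(((((2 * k + 1 : ℕ) : K)) + 1) * (ι κ₀ - ((2 * k + 1 : ℕ) : K)) * ι (c n)) := by
            simp only [map_mul, map_neg, map_sub, map_natCast]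
            push_cast
            ring
          rw [hι]
          exact aux12 ((((2 * k + 1 : ℕ) : K) + 1) * (ι κ₀ - ((2 * k + 1 : ℕ) : K)))
            (ι (c n)) π n
        · -- k = m
          subst hkm
          have e1 : 2 * k + 1 - 1 = 2 * (k - 0) := by omega
          rw [e1, hB 0 (by omega), hB0 (2 * k + 1 + 1) (fun l hl => by omega), if_pos rfl]
          simp [hc0]
        · -- k > m
          rw [hB0 (2 * k + 1 - 1) (fun l hl => by omega),
            hB0 (2 * k + 1 + 1) (fun l hl => by omega), if_neg (by omega)]
          simp
  · -- part (ii)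
    intro m hm
    obtain ⟨c, hc0, hcrec⟩ : ∃ c : ℕ → ℤ_[p], c 0 = 1 ∧ ∀ n : ℕ,
        c (n + 1) = -(((2 * (m - 1 - n) + 1 : ℕ) : ℤ_[p]) *
          (κ₀ - ((2 * (m - 1 - n) : ℕ) : ℤ_[p]))) * c n :=
      ⟨fun l => Nat.rec 1 (fun l cl => -(((2 * (m - 1 - l) + 1 : ℕ) : ℤ_[p]) *
        (κ₀ - ((2 * (m - 1 - l) : ℕ) : ℤ_[p]))) * cl) l, rfl, fun n => rfl⟩
    refine ⟨-(κ₀ * c (m - 1)), c, hc0, ?_⟩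
    intro B hB hB0
    have heven : ∀ j : ℕ, Even j → B j = 0 := by
      intro j hj
      obtain ⟨t, ht⟩ := hj
      exact hB0 j (fun l hl h => by omega)
    constructor
    · have hB1 := hB (m - 1) le_rfl
      rw [show 2 * (m - (m - 1)) - 1 = 1 from by omega] at hB1
      rw [hB1]
      have hι : ι (-(κ₀ * c (m - 1))) = -(ι κ₀ * ι (c (m - 1))) := by
        simp only [map_mul, map_neg]
      rw [hι]
      have := aux12 (ι κ₀) (ι (c (m - 1))) π (m - 1)
      have e2 : m - 1 + 1 = m := by omega
      rw [e2] at this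
      rw [← this]
    · intro j hj
      rcases Nat.even_or_odd j with he | ho
      · obtain ⟨k, hk⟩ := he
        subst hk  -- j = k + k
        rcases lt_trichotomy k m with hkm | hkm | hkm
        · rcases Nat.eq_zero_or_pos k with rfl | hk1
          · omega
          -- 1 ≤ k < m
          have e1 : k + k - 1 = 2 * (m - (m - k)) - 1 := by omega
          have e2 : k + k + 1 = 2 * (m - (m - k - 1)) - 1 := by omega
          rw [e1, e2, hB (m - k) (by omega), hB (m - k - 1) (by omega), if_neg (by omega)]
          obtain ⟨n, hn⟩ : ∃ n, m - k = n + 1 := ⟨m - k - 1, by omega⟩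
          have hn' : m - k - 1 = n := by omega
          have hrec := hcrec n
          have e4 : 2 * (m - 1 - n) + 1 = 2 * k + 1 := by omega
          have e5 : 2 * (m - 1 - n) = 2 * k := by omega
          rw [e4, e5] at hrec
          rw [hn', hn, hrec]
          have hι : ι (-(((2 * k + 1 : ℕ) : ℤ_[p]) * (κ₀ - ((2 * k : ℕ) : ℤ_[p]))) * c n) =
              -((((k + k : ℕ) : K) + 1) * (ι κ₀ - ((k + k : ℕ) : K)) * ι (c n)) := by
            simp only [map_mul, map_neg, map_sub, map_natCast]
            push_cast
            ring
          rw [hι]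
          exact aux12 ((((k + k : ℕ) : K) + 1) * (ι κ₀ - ((k + k : ℕ) : K))) (ι (c n)) π n
        · subst hkm
          have e1 : k + k - 1 = 2 * (k - 0) - 1 := by omega
          rw [e1, hB 0 (by omega), hB0 (k + k + 1) (fun l hl => by omega), if_pos (by omega)]
          simp [hc0]
        · rw [hB0 (k + k - 1) (fun l hl => by omega),
            hB0 (k + k + 1) (fun l hl => by omega), if_neg (by omega)]
          simp
      · obtain ⟨k, hk⟩ := ho
        rw [heven (j - 1) ⟨k, by omega⟩, heven (j + 1) ⟨k + 1, by omega⟩, if_neg (by omega)]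
        simp
end

section
/- (p-adic integrality of the symmetric-power Frobenius coefficients.) Let p be a prime and κ ∈ ℤ_p with κ not a nonnegative integer (so κ - n ≠ 0 in ℤ_p for all n ∈ ℕ). Then for all m, n, l ∈ ℕ with n ≤ m, the element binom(m,n) · (Π_{i=0}^{l-1} (κ - m - i)) · κ^{⌊m⌋} / κ^{⌊l+n⌋} of ℚ_p lies in ℤ_p; equivalently, binom(m,n) · binom(κ-m, l) · κ^{⌊m⌋}/κ^{⌊l+n⌋} ∈ (1/l!)·ℤ_p, where binom(κ-m, l) := (Π_{i=0}^{l-1} (κ - m - i))/l!. -/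
/-- (p-adic integrality of the symmetric-power Frobenius coefficients;
key estimate in Lemma 3.5 of the paper.) Let `p` be a prime and `κ ∈ ℤ_p` not a
nonnegative integer. Then for all `m, n, l ∈ ℕ` with `n ≤ m`, the element
`binom(m,n) · (Π_{i<l} (κ - m - i)) · κ^{⌊m⌋} / κ^{⌊l+n⌋}` of `ℚ_p` lies in `ℤ_p`,
where `κ^{⌊m⌋} = Π_{i<m} (κ - i)` is the falling factorial. -/
theorem statement13
    (p : ℕ) (hp : p.Prime) [Fact p.Prime]
    (κ : ℤ_[p]) (hκ : ∀ n : ℕ, κ ≠ (n : ℤ_[p]))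
    (m n l : ℕ) (hnm : n ≤ m) :
    ∃ z : ℤ_[p],
      ((m.choose n : ℚ_[p])
          * (∏ i ∈ Finset.range l, ((κ : ℚ_[p]) - (m : ℚ_[p]) - (i : ℚ_[p])))
          * ((∏ i ∈ Finset.range m, (κ - (i : ℤ_[p])) : ℤ_[p]) : ℚ_[p]))
        / ((∏ i ∈ Finset.range (l + n), (κ - (i : ℤ_[p])) : ℤ_[p]) : ℚ_[p])
      = (z : ℚ_[p]) := by
  refine ⟨(m.choose n : ℤ_[p]) * ∏ i ∈ Finset.Ico (l + n) (m + l), (κ - (i : ℤ_[p])), ?_⟩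
  have hden0 : (∏ i ∈ Finset.range (l + n), (κ - (i : ℤ_[p])) : ℤ_[p]) ≠ 0 :=
    Finset.prod_ne_zero_iff.mpr fun i _ => sub_ne_zero.mpr (hκ i)
  have hden : ((∏ i ∈ Finset.range (l + n), (κ - (i : ℤ_[p])) : ℤ_[p]) : ℚ_[p]) ≠ 0 :=
    PadicInt.coe_ne_zero.mpr hden0
  rw [div_eq_iff hden]
  have key : (m.choose n : ℤ_[p])
      * (∏ i ∈ Finset.range l, (κ - (m : ℤ_[p]) - (i : ℤ_[p])))
      * (∏ i ∈ Finset.range m, (κ - (i : ℤ_[p])))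
      = ((m.choose n : ℤ_[p]) * ∏ i ∈ Finset.Ico (l + n) (m + l), (κ - (i : ℤ_[p])))
        * ∏ i ∈ Finset.range (l + n), (κ - (i : ℤ_[p])) := by
    have h1 : (∏ i ∈ Finset.range m, (κ - (i : ℤ_[p])))
        * (∏ i ∈ Finset.range l, (κ - (m : ℤ_[p]) - (i : ℤ_[p])))
        = ∏ i ∈ Finset.range (m + l), (κ - (i : ℤ_[p])) := by
      rw [Finset.prod_range_add]
      congr 1
      refine Finset.prod_congr rfl fun i _ => ?_
      push_cast
      ring
    have h2 : (∏ i ∈ Finset.range (l + n), (κ - (i : ℤ_[p])))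
        * (∏ i ∈ Finset.Ico (l + n) (m + l), (κ - (i : ℤ_[p])))
        = ∏ i ∈ Finset.range (m + l), (κ - (i : ℤ_[p])) :=
      Finset.prod_range_mul_prod_Ico _ (by omega)
    calc (m.choose n : ℤ_[p])
        * (∏ i ∈ Finset.range l, (κ - (m : ℤ_[p]) - (i : ℤ_[p])))
        * (∏ i ∈ Finset.range m, (κ - (i : ℤ_[p])))
        = (m.choose n : ℤ_[p]) * ((∏ i ∈ Finset.range m, (κ - (i : ℤ_[p])))
            * (∏ i ∈ Finset.range l, (κ - (m : ℤ_[p]) - (i : ℤ_[p])))) := by ring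
      _ = (m.choose n : ℤ_[p]) * ∏ i ∈ Finset.range (m + l), (κ - (i : ℤ_[p])) := by rw [h1]
      _ = _ := by rw [← h2]; ring
  have hcoe2 : ((∏ i ∈ Finset.range l, (κ - (m : ℤ_[p]) - (i : ℤ_[p])) : ℤ_[p]) : ℚ_[p])
      = ∏ i ∈ Finset.range l, ((κ : ℚ_[p]) - (m : ℚ_[p]) - (i : ℚ_[p])) := by
    rw [show ((∏ i ∈ Finset.range l, (κ - (m : ℤ_[p]) - (i : ℤ_[p])) : ℤ_[p]) : ℚ_[p])
        = PadicInt.Coe.ringHom (∏ i ∈ Finset.range l, (κ - (m : ℤ_[p]) - (i : ℤ_[p]))) from rfl,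
      map_prod]
    refine Finset.prod_congr rfl fun i _ => ?_
    simp only [map_sub, map_natCast]
    rfl
  rw [← hcoe2, ← PadicInt.coe_natCast, ← PadicInt.coe_mul, ← PadicInt.coe_mul,
    ← PadicInt.coe_mul]
  exact congrArg _ key
end
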